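/- arXiv:2602.16465 — 5 statements merged into one kernel-verified Lean document; each statement's English description precedes it below -/
import Mathlib

section
/- The optimal value of the two-stage robust multi-representative selection problem with continuous budgeted uncertainty, min_{x∈X'} ( Σ_{i=1}^n C_i x_i + max_{c∈U^C} min_{y∈Y(x)} Σ_{i=1}^n c_i y_i ), equals the optimal value of the mixed-integer program: minimize Σ_{i=1}^n C_i x_i + Σ_{i=1}^n c̲_i y_i + Γπ + Σ_{i=1}^n ρ_i subject to Σ_{i∈T_j}(x_i + y_i) = p_j for all j ∈ [m], x_i + y_i ≤ 1 for all i ∈ [n], π + ρ_i ≥ d_i y_i for all i ∈ [n], x ∈ {0,1}^n, y ∈ [0,1]^n, π ∈ R_{≥0}, ρ ∈ R_{≥0}^n. -/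
open Classical
noncomputable section

/-- `x` is a 0-1 vector. -/
def IsBinary {n : ℕ} (x : Fin n → ℝ) : Prop := ∀ i, x i = 0 ∨ x i = 1

/-- The bucket `T_j` of the partition given by `t`. -/
def bucket {n m : ℕ} (t : Fin n → Fin m) (j : Fin m) : Finset (Fin n) :=
  Finset.univ.filter (fun i => t i = j)

/-- The set `X'` of feasible first-stage decisions. -/
def FeasX {n m : ℕ} (t : Fin n → Fin m) (p : Fin m → ℕ) (x : Fin n → ℝ) : Prop :=
  IsBinary x ∧ ∀ j, ∑ i ∈ bucket t j, x i ≤ (p j : ℝ)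

/-- The set `Y(x)` of feasible (binary) second-stage decisions. -/
def FeasY {n m : ℕ} (t : Fin n → Fin m) (p : Fin m → ℕ) (x y : Fin n → ℝ) : Prop :=
  IsBinary y ∧ (∀ j, ∑ i ∈ bucket t j, (x i + y i) = (p j : ℝ)) ∧ ∀ i, x i + y i ≤ 1

/-- The continuous budgeted uncertainty set `U^C`. -/
def UC {n : ℕ} (cl d : Fin n → ℝ) (Γ : ℝ) : Set (Fin n → ℝ) :=
  {c | ∃ δ : Fin n → ℝ, (∀ i, 0 ≤ δ i ∧ δ i ≤ 1) ∧
    (∀ i, c i = cl i + d i * δ i) ∧ ∑ i, δ i ≤ Γ}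

/-- The set of objective values of the two-stage robust problem, one for each feasible
first-stage decision `x ∈ X'`. -/
def TwoStageValues {n m : ℕ} (t : Fin n → Fin m) (p : Fin m → ℕ)
    (C : Fin n → ℝ) (U : Set (Fin n → ℝ)) : Set ℝ :=
  {val | ∃ x, FeasX t p x ∧
    val = (∑ i, C i * x i) +
      sSup {w | ∃ c ∈ U, w = sInf {z | ∃ y, FeasY t p x y ∧ z = ∑ i, c i * y i}}}

/-- The set of objective values of feasible solutions of the MIP reformulation (2MRS-C). -/
def MIPValuesC {n m : ℕ} (t : Fin n → Fin m) (p : Fin m → ℕ)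
    (C cl d : Fin n → ℝ) (Γ : ℝ) : Set ℝ :=
  {val | ∃ x y ρ : Fin n → ℝ, ∃ π : ℝ,
    IsBinary x ∧ (∀ i, 0 ≤ y i ∧ y i ≤ 1) ∧ 0 ≤ π ∧ (∀ i, 0 ≤ ρ i) ∧
    (∀ j, ∑ i ∈ bucket t j, (x i + y i) = (p j : ℝ)) ∧
    (∀ i, x i + y i ≤ 1) ∧
    (∀ i, d i * y i ≤ π + ρ i) ∧
    val = (∑ i, C i * x i) + (∑ i, cl i * y i) + Γ * π + ∑ i, ρ i}

namespace Stmt1Aux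

variable {n m : ℕ}

/-- the relaxed second-stage polytope -/
def PolyP (t : Fin n → Fin m) (p : Fin m → ℕ) (x y : Fin n → ℝ) : Prop :=
  (∀ i, 0 ≤ y i) ∧ (∀ i, x i + y i ≤ 1) ∧
    (∀ j, ∑ i ∈ bucket t j, (x i + y i) = (p j : ℝ))

lemma binary_bounds {x : Fin n → ℝ} (hx : IsBinary x) (i : Fin n) :
    0 ≤ x i ∧ x i ≤ 1 := by rcases hx i with h | h <;> simp [h]

lemma polyP_of_feasY {t : Fin n → Fin m} {p : Fin m → ℕ} {x y : Fin n → ℝ}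
    (h : FeasY t p x y) : PolyP t p x y :=
  ⟨fun i => (binary_bounds h.1 i).1, h.2.2, h.2.1⟩

lemma binary_sum_filter {x : Fin n → ℝ} (hx : IsBinary x) (s : Finset (Fin n)) :
    ∑ i ∈ s, x i = ((s.filter (fun i => x i = 1)).card : ℝ) := by
  rw [Finset.card_filter]
  push_cast
  rw [Finset.sum_congr rfl (fun i _ => ?_)]
  · rcases hx i with h | h <;> simp [h]

/-- mass reduction lemma -/
lemma massReduce (S : Finset (Fin n)) :
    ∀ (y : Fin n → ℝ) (r : ℝ), (∀ i ∈ S, 0 ≤ y i) → 0 ≤ r → r ≤ ∑ i ∈ S, y i →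
    ∃ y' : Fin n → ℝ, (∀ i ∈ S, 0 ≤ y' i ∧ y' i ≤ y i) ∧ ∑ i ∈ S, y' i = r := by
  induction S using Finset.induction with
  | empty =>
    intro y r _ hr hr2
    simp only [Finset.sum_empty] at hr2
    exact ⟨fun _ => 0, by simp, by simp; linarith⟩
  | @insert a S ha ih =>
    intro y r hy hr hr2
    by_cases hcase : r ≤ y a
    · refine ⟨fun i => if i = a then r else 0, ?_, ?_⟩
      · intro i hi
        by_cases hia : i = a
        · subst hia; simp [hcase, hr]
        · simp [hia, hy i hi]
      · rw [Finset.sum_insert ha]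
        simp only [if_pos rfl]
        rw [Finset.sum_congr rfl (fun i hi => if_neg (by rintro rfl; exact ha hi))]
        simp
    · push_neg at hcase
      rw [Finset.sum_insert ha] at hr2
      obtain ⟨y'', hy'', hsum⟩ := ih y (r - y a)
        (fun i hi => hy i (Finset.mem_insert_of_mem hi)) (by linarith) (by linarith)
      refine ⟨Function.update y'' a (y a), ?_, ?_⟩
      · intro i hi
        rcases Finset.mem_insert.1 hi with rfl | hi'
        · rw [Function.update_self]
          exact ⟨hy i (Finset.mem_insert_self i S), le_refl _⟩
        · rw [Function.update_of_ne (by rintro rfl; exact ha hi')]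
          exact hy'' i hi'
      · have hcg : ∑ x ∈ S, Function.update y'' a (y a) x = ∑ x ∈ S, y'' x :=
          Finset.sum_congr rfl (fun i hi => Function.update_of_ne (by rintro rfl; exact ha hi) _ _)
        rw [Finset.sum_insert ha, Function.update_self, hcg, hsum]
        ring

/-- selection lemma: can round down a fractional selection to an integral one -/
lemma selection : ∀ (k : ℕ) (S : Finset (Fin n)) (c y : Fin n → ℝ),
    (∀ i ∈ S, 0 ≤ c i) → (∀ i ∈ S, 0 ≤ y i ∧ y i ≤ 1) → ∑ i ∈ S, y i = (k : ℝ) →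
    ∃ B ⊆ S, B.card = k ∧ ∑ i ∈ B, c i ≤ ∑ i ∈ S, c i * y i := by
  intro k
  induction k with
  | zero =>
    intro S c y hc hy hsum
    exact ⟨∅, Finset.empty_subset _, Finset.card_empty,
      Finset.sum_nonneg fun i hi => by
        simpa using mul_nonneg (hc i hi) (hy i hi).1⟩
  | succ k ih =>
    intro S c y hc hy hsum
    have hS : S.Nonempty := by
      rcases S.eq_empty_or_nonempty with h | h
      · exfalso; rw [h] at hsum; simp at hsum
        have : (0:ℝ) < (k:ℝ) + 1 := by positivity
        rw [← hsum] at this; push_cast at this; linarith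
      · exact h
    obtain ⟨i0, hi0S, hi0min⟩ := S.exists_min_image c hS
    have herase : ∑ i ∈ S.erase i0, y i = (k : ℝ) + 1 - y i0 := by
      have := Finset.add_sum_erase S y hi0S
      push_cast at hsum ⊢
      linarith [hsum, this]
    obtain ⟨y', hy', hsum'⟩ := massReduce (S.erase i0) y k
      (fun i hi => (hy i (Finset.mem_of_mem_erase hi)).1) (Nat.cast_nonneg k)
      (by rw [herase]; linarith [(hy i0 hi0S).2])
    obtain ⟨B', hB'sub, hB'card, hB'⟩ := ih (S.erase i0) c y'
      (fun i hi => hc i (Finset.mem_of_mem_erase hi))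
      (fun i hi => ⟨(hy' i hi).1,
        (hy' i hi).2.trans (hy i (Finset.mem_of_mem_erase hi)).2⟩) hsum'
    have hi0B' : i0 ∉ B' := fun h => Finset.notMem_erase i0 S (hB'sub h)
    refine ⟨insert i0 B', ?_, ?_, ?_⟩
    · exact Finset.insert_subset hi0S (hB'sub.trans (Finset.erase_subset _ _))
    · rw [Finset.card_insert_of_notMem hi0B', hB'card]
    · rw [Finset.sum_insert hi0B']
      have key : c i0 * (1 - y i0) ≤ ∑ i ∈ S.erase i0, (c i * y i - c i * y' i) := by
        have h1 : ∀ i ∈ S.erase i0, c i0 * (y i - y' i) ≤ c i * y i - c i * y' i := by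
          intro i hi
          have h2 : c i0 ≤ c i := hi0min i (Finset.mem_of_mem_erase hi)
          have h3 : 0 ≤ y i - y' i := by linarith [(hy' i hi).2]
          nlinarith
        calc c i0 * (1 - y i0) = c i0 * (∑ i ∈ S.erase i0, (y i - y' i)) := by
              rw [Finset.sum_sub_distrib, herase, hsum']; ring
          _ = ∑ i ∈ S.erase i0, c i0 * (y i - y' i) := by rw [Finset.mul_sum]
          _ ≤ _ := Finset.sum_le_sum h1
      have hS1 : ∑ i ∈ S, c i * y i = c i0 * y i0 + ∑ i ∈ S.erase i0, c i * y i :=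
        (Finset.add_sum_erase S (fun i => c i * y i) hi0S).symm
      have hsub : ∑ i ∈ S.erase i0, (c i * y i - c i * y' i)
          = ∑ i ∈ S.erase i0, c i * y i - ∑ i ∈ S.erase i0, c i * y' i :=
        Finset.sum_sub_distrib _ _
      linarith [hB']


lemma mem_bucket {t : Fin n → Fin m} {j : Fin m} {i : Fin n} :
    i ∈ bucket t j ↔ t i = j := by simp [bucket]

/-- the common construction: given subsets of the free slots of the right cardinality,
the indicator vector is feasible. -/
lemma feasY_of_choice (t : Fin n → Fin m) (p : Fin m → ℕ) (x : Fin n → ℝ)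
    (hx : IsBinary x) (B : Fin m → Finset (Fin n))
    (hBsub : ∀ j, B j ⊆ (bucket t j).filter (fun i => ¬ x i = 1))
    (hBcard : ∀ j, (B j).card + ((bucket t j).filter (fun i => x i = 1)).card = p j) :
    FeasY t p x (fun i => if i ∈ B (t i) then 1 else 0) := by
  set y' : Fin n → ℝ := fun i => if i ∈ B (t i) then 1 else 0 with hy'
  have hxB : ∀ i, i ∈ B (t i) → x i = 0 := by
    intro i hi
    have := hBsub (t i) hi
    rw [Finset.mem_filter] at this
    rcases hx i with h | h
    · exact h
    · exact absurd h this.2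
  refine ⟨fun i => by by_cases h : i ∈ B (t i) <;> simp [hy', h], ?_, ?_⟩
  · intro j
    rw [Finset.sum_add_distrib]
    have h1 : ∑ i ∈ bucket t j, y' i = ((B j).card : ℝ) := by
      have hsub : B j ⊆ bucket t j := (hBsub j).trans (Finset.filter_subset _ _)
      rw [← Finset.sum_subset hsub (fun i hi hni => ?_)]
      · rw [Finset.sum_congr rfl (fun i hi => ?_), Finset.sum_const, nsmul_eq_mul, mul_one]
        have hij : t i = j := mem_bucket.1 (hsub hi)
        simp [hy', hij, hi]
      · have hij : t i = j := mem_bucket.1 hi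
        simp [hy', hij, hni]
    have h2 : ∑ i ∈ bucket t j, x i
        = (((bucket t j).filter (fun i => x i = 1)).card : ℝ) := binary_sum_filter hx _
    rw [h1, h2, ← hBcard j]
    push_cast
    ring
  · intro i
    by_cases h : i ∈ B (t i)
    · simp [hy', h, hxB i h]
    · have := (binary_bounds hx i).2
      simp [hy', h, this]

lemma cnt_le_card {t : Fin n → Fin m} {x : Fin n → ℝ} (j : Fin m) :
    ((bucket t j).filter (fun i => x i = 1)).card ≤ (bucket t j).card :=
  Finset.card_filter_le _ _

/-- nonemptiness of the second-stage feasible set -/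
lemma feasY_nonempty (t : Fin n → Fin m) (p : Fin m → ℕ)
    (hp : ∀ j, 1 ≤ p j ∧ p j ≤ (bucket t j).card) (x : Fin n → ℝ)
    (hx : IsBinary x) (hx2 : ∀ j, ∑ i ∈ bucket t j, x i ≤ (p j : ℝ)) :
    ∃ y, FeasY t p x y := by
  set cnt : Fin m → ℕ := fun j => ((bucket t j).filter (fun i => x i = 1)).card with hcnt
  have hcntle : ∀ j, cnt j ≤ p j := by
    intro j
    have := hx2 j
    rw [binary_sum_filter hx] at this
    exact_mod_cast this
  have hchoice : ∀ j, ∃ B ⊆ (bucket t j).filter (fun i => ¬ x i = 1), B.card = p j - cnt j := by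
    intro j
    apply Finset.exists_subset_card_eq
    have hfe : (bucket t j).filter (fun i => ¬ x i = 1)
        = bucket t j \ (bucket t j).filter (fun i => x i = 1) := (Finset.filter_not _ _)
    rw [hfe, Finset.card_sdiff_of_subset (Finset.filter_subset _ _)]
    exact Nat.sub_le_sub_right (hp j).2 _
  choose B hBsub hBcard using hchoice
  exact ⟨_, feasY_of_choice t p x hx B hBsub (fun j => by
    rw [hBcard j]
    show p j - cnt j + cnt j = p j
    have := hcntle j; omega)⟩

/-- integrality: round a fractional second-stage solution down to a binary one -/
lemma rounddown (t : Fin n → Fin m) (p : Fin m → ℕ) (x y c : Fin n → ℝ)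
    (hx : IsBinary x) (hP : PolyP t p x y) (hc : ∀ i, 0 ≤ c i) :
    ∃ y', FeasY t p x y' ∧ ∑ i, c i * y' i ≤ ∑ i, c i * y i := by
  obtain ⟨hy0, hxy, hbuck⟩ := hP
  set S : Fin m → Finset (Fin n) := fun j => (bucket t j).filter (fun i => ¬ x i = 1) with hS
  set cnt : Fin m → ℕ := fun j => ((bucket t j).filter (fun i => x i = 1)).card with hcnt
  have hyzero : ∀ i, x i = 1 → y i = 0 := by
    intro i hxi
    have h1 := hxy i
    have h2 := hy0 i
    rw [hxi] at h1
    linarith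
  have hxS : ∀ j, ∀ i ∈ S j, x i = 0 := by
    intro j i hi
    rw [hS, Finset.mem_filter] at hi
    rcases hx i with h | h
    · exact h
    · exact absurd h hi.2
  have hSsum : ∀ j, ∑ i ∈ S j, y i = (p j : ℝ) - (cnt j : ℝ) := by
    intro j
    have h1 := hbuck j
    rw [Finset.sum_add_distrib, binary_sum_filter hx] at h1
    have h2 : ∑ i ∈ bucket t j, y i = ∑ i ∈ S j, y i := by
      symm
      apply Finset.sum_subset (Finset.filter_subset _ _)
      intro i hi hni
      rw [Finset.mem_filter, not_and, not_not] at hni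
      exact hyzero i (hni hi)
    rw [h2] at h1
    linarith
  have hcntp : ∀ j, cnt j ≤ p j := by
    intro j
    have h1 := hSsum j
    have h2 : 0 ≤ ∑ i ∈ S j, y i := Finset.sum_nonneg (fun i _ => hy0 i)
    rw [h1] at h2
    exact_mod_cast (by linarith : (cnt j : ℝ) ≤ (p j : ℝ))
  have hsel : ∀ j, ∃ B ⊆ S j, B.card = p j - cnt j ∧ ∑ i ∈ B, c i ≤ ∑ i ∈ S j, c i * y i := by
    intro j
    apply selection (p j - cnt j) (S j) c y (fun i _ => hc i)
      (fun i hi => ⟨hy0 i, by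
        have h1 := hxy i
        have h2 := (binary_bounds hx i).1
        linarith⟩)
    rw [hSsum j]
    rw [Nat.cast_sub (hcntp j)]
  choose B hBsub hBcard hBval using hsel
  have hfeas := feasY_of_choice t p x hx B hBsub (fun j => by
    rw [hBcard j]
    show p j - cnt j + cnt j = p j
    have := hcntp j; omega)
  refine ⟨_, hfeas, ?_⟩
  set y' : Fin n → ℝ := fun i => if i ∈ B (t i) then 1 else 0 with hy'
  have hsplit : ∀ (f : Fin n → ℝ), ∑ i, f i = ∑ j, ∑ i ∈ bucket t j, f i := by
    intro f
    rw [← Finset.sum_fiberwise Finset.univ t f]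
    rfl
  rw [hsplit (fun i => c i * y' i), hsplit (fun i => c i * y i)]
  apply Finset.sum_le_sum
  intro j _
  have hsub : B j ⊆ bucket t j := (hBsub j).trans (Finset.filter_subset _ _)
  have h1 : ∑ i ∈ bucket t j, c i * y' i = ∑ i ∈ B j, c i := by
    rw [← Finset.sum_subset hsub (fun i hi hni => ?_)]
    · apply Finset.sum_congr rfl
      intro i hi
      have hij : t i = j := mem_bucket.1 (hsub hi)
      simp [hy', hij, hi]
    · have hij : t i = j := mem_bucket.1 hi
      simp [hy', hij, hni]
  rw [h1]
  refine (hBval j).trans ?_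
  apply Finset.sum_le_sum_of_subset_of_nonneg (Finset.filter_subset _ _)
  intro i _ _
  exact mul_nonneg (hc i) (hy0 i)


/-- strong duality for the fractional knapsack adversary problem, by explicit greedy
construction. -/
lemma knapsack_dual : ∀ (S : Finset (Fin n)) (Γ : ℝ), 0 ≤ Γ → ∀ a : Fin n → ℝ,
    (∀ i ∈ S, 0 ≤ a i) →
    ∃ (π : ℝ) (ρ δ : Fin n → ℝ), 0 ≤ π ∧ (∀ i ∈ S, 0 ≤ ρ i) ∧ (∀ i ∈ S, a i ≤ π + ρ i) ∧
      (∀ i ∈ S, 0 ≤ δ i ∧ δ i ≤ 1) ∧ (∑ i ∈ S, δ i ≤ Γ) ∧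
      Γ * π + ∑ i ∈ S, ρ i ≤ ∑ i ∈ S, a i * δ i ∧ (π = 0 ∨ ∃ i ∈ S, π ≤ a i) := by
  intro S
  induction S using Finset.strongInduction with
  | _ S ih =>
    intro Γ hΓ a ha
    by_cases hbig : (S.card : ℝ) ≤ Γ
    · refine ⟨0, a, fun _ => 1, le_rfl, ha, fun i hi => by simp, fun i hi => by norm_num, ?_, ?_,
        Or.inl rfl⟩
      · rw [Finset.sum_const, nsmul_eq_mul, mul_one]; exact hbig
      · simp
    · push_neg at hbig
      have hSne : S.Nonempty := by
        rcases S.eq_empty_or_nonempty with h | h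
        · exfalso; rw [h] at hbig; simp at hbig; linarith
        · exact h
      obtain ⟨i0, hi0, hmax⟩ := S.exists_max_image a hSne
      by_cases hΓ1 : Γ ≤ 1
      · refine ⟨a i0, fun _ => 0, fun i => if i = i0 then Γ else 0, ha i0 hi0,
          fun i _ => le_rfl, fun i hi => by simpa using hmax i hi, ?_, ?_, ?_,
          Or.inr ⟨i0, hi0, le_rfl⟩⟩
        · intro i hi
          by_cases h : i = i0 <;> simp [h, hΓ, hΓ1]
        · rw [Finset.sum_ite_eq' S i0 (fun _ => Γ), if_pos hi0]
        · have : ∑ i ∈ S, a i * (if i = i0 then Γ else 0) = a i0 * Γ := by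
            rw [Finset.sum_congr rfl (fun i _ => by rw [mul_ite, mul_zero]),
              Finset.sum_ite_eq' S i0 (fun i => a i * Γ), if_pos hi0]
          simp only [this, Finset.sum_const_zero, add_zero]
          exact le_of_eq (mul_comm _ _)
      · push_neg at hΓ1
        obtain ⟨π', ρ', δ', hπ', hρ', haρ, hδ', hδsum, hval, hπalt⟩ :=
          ih _ (Finset.erase_ssubset hi0) (Γ - 1) (by linarith) a
            (fun i hi => ha i (Finset.mem_of_mem_erase hi))
        have hπa : π' ≤ a i0 := by
          rcases hπalt with h | ⟨i1, hi1, h⟩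
          · rw [h]; exact ha i0 hi0
          · exact h.trans (hmax i1 (Finset.mem_of_mem_erase hi1))
        refine ⟨π', fun i => if i = i0 then max (a i0 - π') 0 else ρ' i,
            fun i => if i = i0 then 1 else δ' i, hπ', ?_, ?_, ?_, ?_, ?_, ?_⟩
        · intro i hi
          by_cases h : i = i0
          · simp [h, le_max_right]
          · simpa [h] using hρ' i (Finset.mem_erase.2 ⟨h, hi⟩)
        · intro i hi
          by_cases h : i = i0
          · subst h; simp [le_max_left, le_max_right]
            rcases le_total (a i - π') 0 with h2 | h2
            · rw [max_eq_right h2]; linarith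
            · rw [max_eq_left h2]; linarith
          · simpa [h] using haρ i (Finset.mem_erase.2 ⟨h, hi⟩)
        · intro i hi
          by_cases h : i = i0
          · norm_num [h]
          · simpa [h] using hδ' i (Finset.mem_erase.2 ⟨h, hi⟩)
        · rw [← Finset.add_sum_erase S _ hi0, if_pos rfl]
          have : ∑ i ∈ S.erase i0, (if i = i0 then (1:ℝ) else δ' i) = ∑ i ∈ S.erase i0, δ' i :=
            Finset.sum_congr rfl (fun i hi => if_neg (Finset.ne_of_mem_erase hi))
          rw [this]; linarith
        · rw [← Finset.add_sum_erase S (fun i => if i = i0 then max (a i0 - π') 0 else ρ' i) hi0,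
            ← Finset.add_sum_erase S (fun i => a i * (if i = i0 then 1 else δ' i)) hi0]
          simp only [ite_true, eq_self_iff_true, if_true]
          have h1 : ∑ i ∈ S.erase i0, (if i = i0 then max (a i0 - π') 0 else ρ' i)
              = ∑ i ∈ S.erase i0, ρ' i :=
            Finset.sum_congr rfl (fun i hi => if_neg (Finset.ne_of_mem_erase hi))
          have h2 : ∑ i ∈ S.erase i0, a i * (if i = i0 then 1 else δ' i)
              = ∑ i ∈ S.erase i0, a i * δ' i :=
            Finset.sum_congr rfl (fun i hi => by rw [if_neg (Finset.ne_of_mem_erase hi)])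
          rw [h1, h2]
          have h3 : π' + max (a i0 - π') 0 ≤ a i0 := by
            rcases le_total (a i0 - π') 0 with h2 | h2
            · rw [max_eq_right h2]; linarith
            · rw [max_eq_left h2]; linarith
          have h4 : Γ * π' = (Γ - 1) * π' + π' := by ring
          linarith
        · rcases hπalt with h | ⟨i1, hi1, h⟩
          · exact Or.inl h
          · exact Or.inr ⟨i1, Finset.mem_of_mem_erase hi1, h⟩


/-- the linear map `y ↦ (d∘y, cl·y)`. -/
def Lmap (cl d : Fin n → ℝ) : (Fin n → ℝ) →ₗ[ℝ] ((Fin n → ℝ) × ℝ) where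
  toFun y := (fun i => d i * y i, ∑ i, cl i * y i)
  map_add' y z := by
    rw [Prod.mk_add_mk, Prod.mk.injEq]
    constructor
    · funext i; simp only [Pi.add_apply]; ring
    · rw [← Finset.sum_add_distrib]
      exact Finset.sum_congr rfl (fun i _ => by simp only [Pi.add_apply]; ring)
  map_smul' r y := by
    rw [RingHom.id_apply, Prod.smul_mk, Prod.mk.injEq]
    constructor
    · funext i; simp only [Pi.smul_apply, smul_eq_mul]; ring
    · rw [smul_eq_mul, Finset.mul_sum]
      exact Finset.sum_congr rfl (fun i _ => by simp only [Pi.smul_apply, smul_eq_mul]; ring)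

lemma Lmap_fst (cl d : Fin n → ℝ) (y : Fin n → ℝ) (i : Fin n) :
    (Lmap cl d y).1 i = d i * y i := rfl

lemma Lmap_snd (cl d : Fin n → ℝ) (y : Fin n → ℝ) :
    (Lmap cl d y).2 = ∑ i, cl i * y i := rfl

/-- The minimax step, proved via Hahn-Banach separation: if `v` is a lower bound on all
feasible dual (MIP inner) objective values, then there is a feasible adversary scenario `δ`
whose induced cost vector pushes every point of the relaxed second-stage polytope above `v`. -/
lemma minimax (t : Fin n → Fin m) (p : Fin m → ℕ) (cl d : Fin n → ℝ) (Γ : ℝ)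
    (hΓ : 0 ≤ Γ) (hd : ∀ i, 0 ≤ d i)
    (x : Fin n → ℝ) (y₁ : Fin n → ℝ) (hy₁ : PolyP t p x y₁)
    (v : ℝ)
    (hv : ∀ (y ρ : Fin n → ℝ) (π : ℝ), (∀ i, 0 ≤ y i) → (∀ i, x i + y i ≤ 1) →
      (∀ j, ∑ i ∈ bucket t j, (x i + y i) = (p j : ℝ)) → 0 ≤ π → (∀ i, 0 ≤ ρ i) →
      (∀ i, d i * y i ≤ π + ρ i) → v ≤ (∑ i, cl i * y i) + Γ * π + ∑ i, ρ i) :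
    ∃ δ : Fin n → ℝ, (∀ i, 0 ≤ δ i ∧ δ i ≤ 1) ∧ (∑ i, δ i ≤ Γ) ∧
      ∀ y, PolyP t p x y → v ≤ ∑ i, (cl i + d i * δ i) * y i := by
  classical
  set B : Set ((Fin n → ℝ) × ℝ) :=
    {z | ∃ u, u < v ∧ ∀ δ : Fin n → ℝ, (∀ i, 0 ≤ δ i ∧ δ i ≤ 1) → (∑ i, δ i ≤ Γ) →
      z.2 + ∑ i, δ i * z.1 i ≤ u} with hBdef
  -- B is convex
  have hBconv : Convex ℝ B := by
    rintro z1 ⟨u1, hu1, h1⟩ z2 ⟨u2, hu2, h2⟩ α β hα hβ hαβ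
    refine ⟨α * u1 + β * u2, ?_, ?_⟩
    · have hm1 : u1 ≤ max u1 u2 := le_max_left _ _
      have hm2 : u2 ≤ max u1 u2 := le_max_right _ _
      have hm3 : max u1 u2 < v := max_lt hu1 hu2
      have hm4 : α * max u1 u2 + β * max u1 u2 = max u1 u2 := by
        rw [← add_mul, hαβ, one_mul]
      have hm5 := mul_le_mul_of_nonneg_left hm1 hα
      have hm6 := mul_le_mul_of_nonneg_left hm2 hβ
      linarith
    · intro δ hδ1 hδ2
      have e1 := h1 δ hδ1 hδ2
      have e2 := h2 δ hδ1 hδ2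
      have hz : (α • z1 + β • z2).2 + ∑ i, δ i * (α • z1 + β • z2).1 i
          = α * (z1.2 + ∑ i, δ i * z1.1 i) + β * (z2.2 + ∑ i, δ i * z2.1 i) := by
        simp only [Prod.snd_add, Prod.smul_snd, Prod.fst_add, Prod.smul_fst, Pi.add_apply,
          Pi.smul_apply, smul_eq_mul]
        rw [Finset.sum_congr rfl (fun i (_ : i ∈ Finset.univ) =>
          (by ring : δ i * (α * z1.1 i + β * z2.1 i)
            = α * (δ i * z1.1 i) + β * (δ i * z2.1 i))),
          Finset.sum_add_distrib, ← Finset.mul_sum, ← Finset.mul_sum]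
        ring
      rw [hz]
      have e3 := mul_le_mul_of_nonneg_left e1 hα
      have e4 := mul_le_mul_of_nonneg_left e2 hβ
      linarith
  -- B is open
  have hBopen : IsOpen B := by
    rw [Metric.isOpen_iff]
    rintro z ⟨u, huv, hu⟩
    have hn1 : (0:ℝ) < (n:ℝ) + 1 := by positivity
    set ε : ℝ := (v - u) / (2 * ((n:ℝ) + 1)) with hεdef
    have hε : 0 < ε := by
      apply div_pos (by linarith) (by positivity)
    refine ⟨ε, hε, ?_⟩
    rintro z' hz'
    rw [Metric.mem_ball, Prod.dist_eq] at hz'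
    have hd1 : ∀ i, dist (z'.1 i) (z.1 i) < ε :=
      (dist_pi_lt_iff hε).1 (lt_of_le_of_lt (le_max_left _ _) hz')
    have hd2 : dist z'.2 z.2 < ε := lt_of_le_of_lt (le_max_right _ _) hz'
    refine ⟨u + ((n:ℝ) + 1) * ε, ?_, ?_⟩
    · have : ((n:ℝ) + 1) * ε = (v - u) / 2 := by
        rw [hεdef]; field_simp
      rw [this]; linarith
    · intro δ hδ1 hδ2
      have hbase := hu δ hδ1 hδ2
      have hterm : ∀ i, δ i * z'.1 i ≤ δ i * z.1 i + ε := by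
        intro i
        have h1 : |z'.1 i - z.1 i| < ε := by
          rw [← Real.dist_eq]; exact hd1 i
        obtain ⟨hδa, hδb⟩ := hδ1 i
        have h2 := abs_le.1 h1.le
        nlinarith [mul_nonneg hδa (sub_nonneg.2 h2.2),
          mul_nonneg (sub_nonneg.2 hδb) hε.le]
      have hsum : ∑ i, δ i * z'.1 i ≤ (∑ i, δ i * z.1 i) + (n:ℝ) * ε := by
        calc ∑ i, δ i * z'.1 i ≤ ∑ i, (δ i * z.1 i + ε) :=
              Finset.sum_le_sum (fun i _ => hterm i)
          _ = (∑ i, δ i * z.1 i) + (n:ℝ) * ε := by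
              rw [Finset.sum_add_distrib, Finset.sum_const, Finset.card_univ,
                Fintype.card_fin, nsmul_eq_mul]
      have h3 : z'.2 ≤ z.2 + ε := by
        have := abs_le.1 (le_of_lt (by rw [← Real.dist_eq]; exact hd2))
        linarith [this.2]
      linarith
  -- the polytope is convex
  have hPconv : Convex ℝ {y : Fin n → ℝ | PolyP t p x y} := by
    rintro y1 ⟨h1a, h1b, h1c⟩ y2 ⟨h2a, h2b, h2c⟩ α β hα hβ hαβ
    have hxeq : ∀ i : Fin n, α * x i + β * x i = x i := by
      intro i; rw [← add_mul, hαβ, one_mul]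
    refine ⟨fun i => ?_, fun i => ?_, fun j => ?_⟩
    · simp only [Pi.add_apply, Pi.smul_apply, smul_eq_mul]
      have := mul_nonneg hα (h1a i)
      have := mul_nonneg hβ (h2a i)
      linarith
    · simp only [Pi.add_apply, Pi.smul_apply, smul_eq_mul]
      have := mul_le_mul_of_nonneg_left (h1b i) hα
      have := mul_le_mul_of_nonneg_left (h2b i) hβ
      have := hxeq i
      linarith
    · have hpt : ∀ i ∈ bucket t j, x i + (α • y1 + β • y2) i
          = α * (x i + y1 i) + β * (x i + y2 i) := by
        intro i _
        simp only [Pi.add_apply, Pi.smul_apply, smul_eq_mul]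
        have := hxeq i
        linarith
      rw [Finset.sum_congr rfl hpt, Finset.sum_add_distrib, ← Finset.mul_sum, ← Finset.mul_sum,
        h1c j, h2c j, ← add_mul, hαβ, one_mul]
  -- disjointness via knapsack duality and the definition of v
  have hdisj : Disjoint B ((Lmap cl d) '' {y | PolyP t p x y}) := by
    rw [Set.disjoint_left]
    rintro z ⟨u, huv, hu⟩ ⟨y, hyP, rfl⟩
    obtain ⟨hy0, hxy, hbuck⟩ := hyP
    obtain ⟨π, ρ, δ, hπ, hρ, haρ, hδf, hδsum, hval, -⟩ :=
      knapsack_dual Finset.univ Γ hΓ (fun i => d i * y i)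
        (fun i _ => mul_nonneg (hd i) (hy0 i))
    have h1 := hv y ρ π hy0 hxy hbuck hπ (fun i => hρ i (Finset.mem_univ i))
      (fun i => haρ i (Finset.mem_univ i))
    have h2 := hu δ (fun i => hδf i (Finset.mem_univ i)) hδsum
    rw [Lmap_snd] at h2
    have h4 : ∑ i, δ i * (Lmap cl d y).1 i = ∑ i, (d i * y i) * δ i :=
      Finset.sum_congr rfl (fun i _ => mul_comm _ _)
    rw [h4] at h2
    linarith
  -- separation
  obtain ⟨f, u₀, hf1, hf2⟩ :=
    geometric_hahn_banach_open hBconv hBopen (hPconv.linear_image (Lmap cl d)) hdisj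
  set wv : Fin n → ℝ := fun i => f ((Pi.single i 1 : Fin n → ℝ), (0:ℝ)) with hwv
  set tv : ℝ := f ((0 : Fin n → ℝ), (1:ℝ)) with htv
  -- decomposition of f
  have hsingle : ∀ a : Fin n → ℝ, ∑ i, (Pi.single i (a i) : Fin n → ℝ) = a := by
    intro a; funext j
    rw [Finset.sum_apply]
    simp [Pi.single_apply, Finset.sum_ite_eq]
  have hfinl : ∀ a : Fin n → ℝ, f (a, (0:ℝ)) = ∑ i, a i * wv i := by
    intro a
    have ha : (∑ i, a i • (Pi.single i 1 : Fin n → ℝ)) = a := by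
      rw [Finset.sum_congr rfl (fun i (_ : i ∈ Finset.univ) => ?_), hsingle a]
      rw [← Pi.single_smul, smul_eq_mul, mul_one]
    set g : (Fin n → ℝ) →ₗ[ℝ] ℝ :=
      (f : ((Fin n → ℝ) × ℝ) →ₗ[ℝ] ℝ).comp (LinearMap.inl ℝ (Fin n → ℝ) ℝ) with hg
    have h2 : g (∑ i, a i • (Pi.single i 1 : Fin n → ℝ)) = ∑ i, a i * wv i := by
      rw [map_sum]
      apply Finset.sum_congr rfl
      intro i _
      rw [map_smul, smul_eq_mul]
      rfl
    have h3 : f (a, (0:ℝ)) = g a := rfl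
    rw [h3, ← h2, ha]
  have hf0s : ∀ s : ℝ, f ((0 : Fin n → ℝ), s) = s * tv := by
    intro s
    have h1 : ((0:Fin n → ℝ), s) = s • ((0:Fin n → ℝ), (1:ℝ)) := by
      rw [Prod.smul_mk, smul_zero, smul_eq_mul, mul_one]
    rw [h1, map_smul, smul_eq_mul]
  have hdec : ∀ z : (Fin n → ℝ) × ℝ, f z = (∑ i, z.1 i * wv i) + z.2 * tv := by
    intro z
    have h1 : (z.1, (0:ℝ)) + ((0:Fin n → ℝ), z.2) = z := by
      rw [Prod.mk_add_mk, add_zero, zero_add]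
    calc f z = f ((z.1, (0:ℝ)) + ((0:Fin n → ℝ), z.2)) := by rw [h1]
      _ = (∑ i, z.1 i * wv i) + z.2 * tv := by rw [map_add, hfinl, hf0s]
  -- membership of the basepoint
  have hb₀ : ((0:Fin n → ℝ), v - 1) ∈ B := by
    refine ⟨v - 1, by linarith, fun δ _ _ => ?_⟩
    simp
  -- recession directions
  have hrec : ∀ z : (Fin n → ℝ) × ℝ,
      (∀ δ : Fin n → ℝ, (∀ i, 0 ≤ δ i ∧ δ i ≤ 1) → (∑ i, δ i ≤ Γ) →
        z.2 + ∑ i, δ i * z.1 i ≤ 0) → f z ≤ 0 := by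
    intro z hz
    by_contra hcon
    push_neg at hcon
    have hfb : f ((0:Fin n → ℝ), v - 1) < u₀ := hf1 _ hb₀
    set r : ℝ := (u₀ - f ((0:Fin n → ℝ), v - 1) + 1) / f z with hr
    have hrpos : 0 < r := div_pos (by linarith) hcon
    have hmem : ((0:Fin n → ℝ), v - 1) + r • z ∈ B := by
      refine ⟨v - 1, by linarith, fun δ hδ1 hδ2 => ?_⟩
      have h1 := hz δ hδ1 hδ2
      have h2 : (((0:Fin n → ℝ), v - 1) + r • z).2
          + ∑ i, δ i * (((0:Fin n → ℝ), v - 1) + r • z).1 i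
          = (v - 1) + r * (z.2 + ∑ i, δ i * z.1 i) := by
        simp only [Prod.snd_add, Prod.smul_snd, Prod.fst_add, Prod.smul_fst, Pi.add_apply,
          Pi.smul_apply, smul_eq_mul, Pi.zero_apply, zero_add]
        rw [Finset.sum_congr rfl (fun i (_ : i ∈ Finset.univ) =>
          (by ring : δ i * (r * z.1 i) = r * (δ i * z.1 i))), ← Finset.mul_sum]
        ring
      rw [h2]
      nlinarith
    have h3 := hf1 _ hmem
    rw [map_add, map_smul, smul_eq_mul] at h3
    have h4 : r * f z = u₀ - f ((0:Fin n → ℝ), v - 1) + 1 := by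
      rw [hr, div_mul_cancel₀]
      exact ne_of_gt hcon
    linarith
  -- basic sums with single
  have hsingle_sum : ∀ (g : Fin n → ℝ) (i : Fin n),
      ∑ j, (Pi.single i (1:ℝ) : Fin n → ℝ) j * g j = g i := by
    intro g i
    rw [Finset.sum_eq_single i]
    · simp
    · intro b _ hb
      have : (Pi.single i (1:ℝ) : Fin n → ℝ) b = 0 := Pi.single_eq_of_ne hb 1
      rw [this, zero_mul]
    · intro h; exact absurd (Finset.mem_univ i) h
  -- numeric facts about wv and tv
  have ht0 : 0 ≤ tv := by
    have h := hrec ((0:Fin n → ℝ), -1) (fun δ _ _ => by simp)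
    rw [hdec] at h
    simp at h
    linarith
  have hdot : ∀ (g : Fin n → ℝ) (i : Fin n),
      ∑ j, g j * (Pi.single i (1:ℝ) : Fin n → ℝ) j = g i := by
    intro g i
    rw [Finset.sum_congr rfl (fun j (_ : j ∈ Finset.univ) => mul_comm (g j) _), hsingle_sum g i]
  have hdotneg : ∀ (g : Fin n → ℝ) (i : Fin n),
      ∑ j, g j * (-(Pi.single i (1:ℝ) : Fin n → ℝ)) j = -g i := by
    intro g i
    have h1 : ∑ j, g j * (-(Pi.single i (1:ℝ) : Fin n → ℝ)) j
        = ∑ j, -(g j * (Pi.single i (1:ℝ) : Fin n → ℝ) j) :=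
      Finset.sum_congr rfl (fun j _ => by rw [Pi.neg_apply]; ring)
    rw [h1, Finset.sum_neg_distrib, hdot g i]
  have hnegdot : ∀ (g : Fin n → ℝ) (i : Fin n),
      ∑ j, (-(Pi.single i (1:ℝ) : Fin n → ℝ)) j * g j = -g i := by
    intro g i
    have h1 : ∑ j, (-(Pi.single i (1:ℝ) : Fin n → ℝ)) j * g j
        = ∑ j, -((Pi.single i (1:ℝ) : Fin n → ℝ) j * g j) :=
      Finset.sum_congr rfl (fun j _ => by rw [Pi.neg_apply]; ring)
    rw [h1, Finset.sum_neg_distrib, hsingle_sum g i]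
  have hw0 : ∀ i, 0 ≤ wv i := by
    intro i
    have h := hrec (-(Pi.single i (1:ℝ) : Fin n → ℝ), 0) (fun δ hδ1 _ => by
      show (0:ℝ) + ∑ j, δ j * (-(Pi.single i (1:ℝ) : Fin n → ℝ)) j ≤ 0
      rw [hdotneg δ i]
      linarith [(hδ1 i).1])
    rw [hdec] at h
    show (0:ℝ) ≤ wv i
    have h2 : ∑ j, (-(Pi.single i (1:ℝ) : Fin n → ℝ), (0:ℝ)).1 j * wv j = -wv i := hnegdot wv i
    rw [h2] at h
    simp at h
    linarith
  have hwtv : ∀ i, wv i ≤ tv := by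
    intro i
    have h := hrec ((Pi.single i (1:ℝ) : Fin n → ℝ), -1) (fun δ hδ1 _ => by
      show (-1:ℝ) + ∑ j, δ j * (Pi.single i (1:ℝ) : Fin n → ℝ) j ≤ 0
      rw [hdot δ i]
      linarith [(hδ1 i).2])
    rw [hdec] at h
    have h2 : ∑ j, ((Pi.single i (1:ℝ) : Fin n → ℝ), (-1:ℝ)).1 j * wv j = wv i :=
      hsingle_sum wv i
    rw [h2] at h
    norm_num at h
    linarith
  have hswv : ∑ i, wv i ≤ Γ * tv := by
    have h := hrec ((fun _ => (1:ℝ)), -Γ) (fun δ hδ1 hδ2 => by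
      show -Γ + ∑ j, δ j * (1:ℝ) ≤ 0
      have h1 : ∑ j, δ j * (1:ℝ) = ∑ j, δ j := Finset.sum_congr rfl (fun j _ => mul_one _)
      rw [h1]
      linarith)
    rw [hdec] at h
    have h2 : ∑ j, ((fun _ => (1:ℝ)), -Γ).1 j * wv j = ∑ j, wv j :=
      Finset.sum_congr rfl (fun j _ => one_mul _)
    rw [h2] at h
    norm_num at h
    linarith
  -- tv is positive
  have htvpos : 0 < tv := by
    rcases lt_or_eq_of_le ht0 with h | h
    · exact h
    · exfalso
      have hwv0 : ∀ i, wv i = 0 := fun i => le_antisymm (by linarith [hwtv i]) (hw0 i)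
      have hW1 : u₀ ≤ f (Lmap cl d y₁) := hf2 _ ⟨y₁, hy₁, rfl⟩
      have hW2 : f (Lmap cl d y₁) = 0 := by
        rw [hdec]
        have h1 : ∑ i, (Lmap cl d y₁).1 i * wv i = 0 := by
          rw [Finset.sum_congr rfl (fun i (_ : i ∈ Finset.univ) => by
            rw [hwv0 i, mul_zero]), Finset.sum_const_zero]
        rw [h1, ← h, mul_zero, add_zero]
      have hB1 : f ((0:Fin n → ℝ), v - 1) < u₀ := hf1 _ hb₀
      have hB2 : f ((0:Fin n → ℝ), v - 1) = 0 := by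
        rw [hdec, ← h, mul_zero]
        simp
      linarith
  -- tv * v ≤ u₀
  have htv2 : tv * v ≤ u₀ := by
    by_contra hcon
    push_neg at hcon
    have hs3 : u₀ / tv < v := (div_lt_iff₀ htvpos).2 (by linarith [mul_comm tv v])
    set s : ℝ := (u₀ / tv + v) / 2 with hs
    have hs4 : u₀ / tv < s := by rw [hs]; linarith
    have hs5 : s < v := by rw [hs]; linarith
    have hmem : ((0:Fin n → ℝ), s) ∈ B := ⟨s, hs5, fun δ _ _ => by simp⟩
    have h5 := hf1 _ hmem
    have h6 : f ((0:Fin n → ℝ), s) = s * tv := hf0s s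
    have h7 : u₀ < s * tv := (div_lt_iff₀ htvpos).1 hs4
    linarith
  -- the certificate
  refine ⟨fun i => wv i / tv, fun i => ⟨div_nonneg (hw0 i) ht0, (div_le_one htvpos).2 (hwtv i)⟩,
    ?_, ?_⟩
  · rw [← Finset.sum_div]
    rw [div_le_iff₀ htvpos]
    linarith [hswv]
  · intro y hy
    have h1 : u₀ ≤ f (Lmap cl d y) := hf2 _ ⟨y, hy, rfl⟩
    have h2 : f (Lmap cl d y) = (∑ i, (d i * y i) * wv i) + (∑ i, cl i * y i) * tv := by
      rw [hdec, Lmap_snd]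
      rfl
    have hterm : ∀ i : Fin n, tv * ((cl i + d i * (wv i / tv)) * y i)
        = (d i * y i) * wv i + (cl i * y i) * tv := by
      intro i
      field_simp
      ring
    have h3 : tv * (∑ i, (cl i + d i * (wv i / tv)) * y i)
        = (∑ i, (d i * y i) * wv i) + (∑ i, cl i * y i) * tv := by
      rw [Finset.mul_sum, Finset.sum_congr rfl (fun i _ => hterm i),
        Finset.sum_add_distrib, ← Finset.sum_mul]
    have h4 : tv * v ≤ tv * (∑ i, (cl i + d i * (wv i / tv)) * y i) := by
      rw [h3]
      linarith
    exact le_of_mul_le_mul_left h4 htvpos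


lemma finite_binary : {y : Fin n → ℝ | IsBinary y}.Finite := by
  have h : {y : Fin n → ℝ | IsBinary y} ⊆ {y : Fin n → ℝ | ∀ i, y i ∈ ({0, 1} : Set ℝ)} := by
    intro y hy i
    rcases hy i with h | h <;> simp [h]
  exact (Set.Finite.pi' (fun _ => (Set.finite_singleton (1:ℝ)).insert 0)).subset h

lemma innerSet_finite (t : Fin n → Fin m) (p : Fin m → ℕ) (x c : Fin n → ℝ) :
    {z | ∃ y, FeasY t p x y ∧ z = ∑ i, c i * y i}.Finite := by
  have h : {z | ∃ y, FeasY t p x y ∧ z = ∑ i, c i * y i}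
      ⊆ (fun y : Fin n → ℝ => ∑ i, c i * y i) '' {y | IsBinary y} := by
    rintro z ⟨y, hy, rfl⟩
    exact ⟨y, hy.1, rfl⟩
  exact (finite_binary.image _).subset h

lemma innerSet_bddBelow (t : Fin n → Fin m) (p : Fin m → ℕ) (x c : Fin n → ℝ)
    (hc : ∀ i, 0 ≤ c i) :
    BddBelow {z | ∃ y, FeasY t p x y ∧ z = ∑ i, c i * y i} := by
  refine ⟨0, ?_⟩
  rintro z ⟨y, hy, rfl⟩
  exact Finset.sum_nonneg fun i _ => mul_nonneg (hc i) (binary_bounds hy.1 i).1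

lemma mem_UC_bounds {cl d : Fin n → ℝ} {Γ : ℝ} (hcl : ∀ i, 0 ≤ cl i) (hd : ∀ i, 0 ≤ d i)
    {c : Fin n → ℝ} (hc : c ∈ UC cl d Γ) : ∀ i, 0 ≤ c i ∧ c i ≤ cl i + d i := by
  obtain ⟨δ, hδ1, hceq, _⟩ := hc
  intro i
  rw [hceq i]
  obtain ⟨h1, h2⟩ := hδ1 i
  constructor
  · nlinarith [hd i, hcl i]
  · nlinarith [hd i]

lemma cl_mem_UC {cl d : Fin n → ℝ} {Γ : ℝ} (hΓ : 0 ≤ Γ) : cl ∈ UC cl d Γ :=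
  ⟨fun _ => 0, fun _ => ⟨le_rfl, zero_le_one⟩, fun i => by ring, by simpa using hΓ⟩

lemma wSet_bddAbove (t : Fin n → Fin m) (p : Fin m → ℕ) (cl d : Fin n → ℝ) (Γ : ℝ)
    (hcl : ∀ i, 0 ≤ cl i) (hd : ∀ i, 0 ≤ d i) (x y₀ : Fin n → ℝ) (hy₀ : FeasY t p x y₀) :
    BddAbove {w | ∃ c ∈ UC cl d Γ,
      w = sInf {z | ∃ y, FeasY t p x y ∧ z = ∑ i, c i * y i}} := by
  refine ⟨∑ i, (cl i + d i), ?_⟩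
  rintro w ⟨c, hcU, rfl⟩
  have hcb := mem_UC_bounds hcl hd hcU
  have h1 : sInf {z | ∃ y, FeasY t p x y ∧ z = ∑ i, c i * y i} ≤ ∑ i, c i * y₀ i :=
    csInf_le (innerSet_bddBelow t p x c (fun i => (hcb i).1)) ⟨y₀, hy₀, rfl⟩
  have h2 : ∑ i, c i * y₀ i ≤ ∑ i, (cl i + d i) := by
    apply Finset.sum_le_sum
    intro i _
    rcases hy₀.1 i with h | h
    · rw [h, mul_zero]; linarith [hcl i, hd i]
    · rw [h, mul_one]; exact (hcb i).2
  linarith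

lemma weak_dual (d δ y ρ : Fin n → ℝ) (π Γ : ℝ)
    (hδ1 : ∀ i, 0 ≤ δ i ∧ δ i ≤ 1) (hδ2 : ∑ i, δ i ≤ Γ) (hπ : 0 ≤ π)
    (hρ : ∀ i, 0 ≤ ρ i) (hdy : ∀ i, d i * y i ≤ π + ρ i) :
    ∑ i, d i * δ i * y i ≤ Γ * π + ∑ i, ρ i := by
  have h1 : ∀ i, d i * δ i * y i ≤ δ i * π + δ i * ρ i := by
    intro i
    have h2 : δ i * (d i * y i) ≤ δ i * (π + ρ i) :=
      mul_le_mul_of_nonneg_left (hdy i) (hδ1 i).1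
    have h3 : d i * δ i * y i = δ i * (d i * y i) := by ring
    rw [h3]
    linarith
  calc ∑ i, d i * δ i * y i ≤ ∑ i, (δ i * π + δ i * ρ i) :=
        Finset.sum_le_sum (fun i _ => h1 i)
    _ = (∑ i, δ i) * π + ∑ i, δ i * ρ i := by
        rw [Finset.sum_add_distrib, ← Finset.sum_mul]
    _ ≤ Γ * π + ∑ i, ρ i := by
        have h4 := mul_le_mul_of_nonneg_right hδ2 hπ
        have h5 : ∑ i, δ i * ρ i ≤ ∑ i, ρ i :=
          Finset.sum_le_sum (fun i _ => mul_le_of_le_one_left (hρ i) (hδ1 i).2)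
        linarith

/-- every MIP value dominates some two-stage value -/
lemma dir2 (t : Fin n → Fin m) (p : Fin m → ℕ) (C cl d : Fin n → ℝ) (Γ : ℝ)
    (hp : ∀ j, 1 ≤ p j ∧ p j ≤ (bucket t j).card)
    (hcl : ∀ i, 0 ≤ cl i) (hd : ∀ i, 0 ≤ d i) (hΓ : 0 ≤ Γ)
    {b : ℝ} (hb : b ∈ MIPValuesC t p C cl d Γ) :
    ∃ w ∈ TwoStageValues t p C (UC cl d Γ), w ≤ b := by
  obtain ⟨x, y, ρ, π, hxb, hy01, hπ, hρ, hbuck, hxy1, hdy, rfl⟩ := hb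
  have hxX : FeasX t p x := by
    refine ⟨hxb, fun j => ?_⟩
    have h1 := hbuck j
    have h2 : ∑ i ∈ bucket t j, x i ≤ ∑ i ∈ bucket t j, (x i + y i) :=
      Finset.sum_le_sum (fun i _ => by linarith [(hy01 i).1])
    linarith
  refine ⟨_, ⟨x, hxX, rfl⟩, ?_⟩
  have hkey : sSup {w | ∃ c ∈ UC cl d Γ,
      w = sInf {z | ∃ y', FeasY t p x y' ∧ z = ∑ i, c i * y' i}}
      ≤ (∑ i, cl i * y i) + Γ * π + ∑ i, ρ i := by
    have hne : {w | ∃ c ∈ UC cl d Γ,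
        w = sInf {z | ∃ y', FeasY t p x y' ∧ z = ∑ i, c i * y' i}}.Nonempty :=
      ⟨_, cl, cl_mem_UC hΓ, rfl⟩
    apply csSup_le hne
    rintro w ⟨c, hcU, rfl⟩
    have hcnn : ∀ i, 0 ≤ c i := fun i => (mem_UC_bounds hcl hd hcU i).1
    obtain ⟨δ, hδ1, hceq, hδ2⟩ := hcU
    obtain ⟨y'', hy''F, hy''le⟩ := rounddown t p x y c hxb
      ⟨fun i => (hy01 i).1, hxy1, hbuck⟩ hcnn
    have h1 : sInf {z | ∃ y', FeasY t p x y' ∧ z = ∑ i, c i * y' i} ≤ ∑ i, c i * y'' i :=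
      csInf_le (innerSet_bddBelow t p x c hcnn) ⟨y'', hy''F, rfl⟩
    have h2 : ∑ i, c i * y i = (∑ i, cl i * y i) + ∑ i, d i * δ i * y i := by
      rw [← Finset.sum_add_distrib]
      exact Finset.sum_congr rfl fun i _ => by rw [hceq i]; ring
    have h3 := weak_dual d δ y ρ π Γ hδ1 hδ2 hπ hρ hdy
    linarith
  linarith

/-- every two-stage value is approached within ε by MIP values -/
lemma dir1 (t : Fin n → Fin m) (p : Fin m → ℕ) (C cl d : Fin n → ℝ) (Γ : ℝ)
    (hp : ∀ j, 1 ≤ p j ∧ p j ≤ (bucket t j).card)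
    (hcl : ∀ i, 0 ≤ cl i) (hd : ∀ i, 0 ≤ d i) (hΓ : 0 ≤ Γ)
    {w : ℝ} (hw : w ∈ TwoStageValues t p C (UC cl d Γ)) (ε : ℝ) (hε : 0 < ε) :
    ∃ vv ∈ MIPValuesC t p C cl d Γ, vv ≤ w + ε := by
  obtain ⟨x, hxX, rfl⟩ := hw
  obtain ⟨y₀, hy₀⟩ := feasY_nonempty t p hp x hxX.1 hxX.2
  set S : Set ℝ := {z | ∃ y ρ : Fin n → ℝ, ∃ π : ℝ, (∀ i, 0 ≤ y i ∧ y i ≤ 1) ∧ 0 ≤ π ∧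
    (∀ i, 0 ≤ ρ i) ∧ (∀ j, ∑ i ∈ bucket t j, (x i + y i) = (p j : ℝ)) ∧
    (∀ i, x i + y i ≤ 1) ∧ (∀ i, d i * y i ≤ π + ρ i) ∧
    z = (∑ i, cl i * y i) + Γ * π + ∑ i, ρ i} with hSdef
  have hS0 : ∀ z ∈ S, (0:ℝ) ≤ z := by
    rintro z ⟨y, ρ, π, hy01, hπ, hρ, _, _, _, rfl⟩
    have h1 : (0:ℝ) ≤ ∑ i, cl i * y i :=
      Finset.sum_nonneg fun i _ => mul_nonneg (hcl i) (hy01 i).1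
    have h2 : (0:ℝ) ≤ ∑ i, ρ i := Finset.sum_nonneg fun i _ => hρ i
    nlinarith [mul_nonneg hΓ hπ]
  have hSbdd : BddBelow S := ⟨0, hS0⟩
  have hSne : S.Nonempty := by
    refine ⟨_, y₀, (fun i => d i * y₀ i), 0, fun i => binary_bounds hy₀.1 i, le_rfl,
      (fun i => mul_nonneg (hd i) (binary_bounds hy₀.1 i).1), hy₀.2.1, hy₀.2.2,
      (fun i => by simp), rfl⟩
  set v := sInf S with hvdef
  have hv : ∀ (y ρ : Fin n → ℝ) (π : ℝ), (∀ i, 0 ≤ y i) → (∀ i, x i + y i ≤ 1) →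
      (∀ j, ∑ i ∈ bucket t j, (x i + y i) = (p j : ℝ)) → 0 ≤ π → (∀ i, 0 ≤ ρ i) →
      (∀ i, d i * y i ≤ π + ρ i) → v ≤ (∑ i, cl i * y i) + Γ * π + ∑ i, ρ i := by
    intro y ρ π hy0 hxy hbuck hπ hρ hdy
    apply csInf_le hSbdd
    exact ⟨y, ρ, π, (fun i => ⟨hy0 i, by linarith [hxy i, (binary_bounds hxX.1 i).1]⟩),
      hπ, hρ, hbuck, hxy, hdy, rfl⟩
  obtain ⟨δs, hδ1, hδ2, hkey⟩ :=
    minimax t p cl d Γ hΓ hd x y₀ (polyP_of_feasY hy₀) v hv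
  set cs : Fin n → ℝ := fun i => cl i + d i * δs i with hcs
  have hcsU : cs ∈ UC cl d Γ := ⟨δs, hδ1, fun i => rfl, hδ2⟩
  have hφmem : sInf {z | ∃ y, FeasY t p x y ∧ z = ∑ i, cs i * y i}
      ∈ {z | ∃ y, FeasY t p x y ∧ z = ∑ i, cs i * y i} :=
    Set.Nonempty.csInf_mem ⟨_, y₀, hy₀, rfl⟩ (innerSet_finite t p x cs)
  obtain ⟨yo, hyoF, hyoeq⟩ := hφmem
  have hvφ : v ≤ sInf {z | ∃ y, FeasY t p x y ∧ z = ∑ i, cs i * y i} := by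
    rw [hyoeq]
    exact hkey yo (polyP_of_feasY hyoF)
  have hvV : v ≤ sSup {w | ∃ c ∈ UC cl d Γ,
      w = sInf {z | ∃ y, FeasY t p x y ∧ z = ∑ i, c i * y i}} :=
    hvφ.trans (le_csSup (wSet_bddAbove t p cl d Γ hcl hd x y₀ hy₀) ⟨cs, hcsU, rfl⟩)
  obtain ⟨z, hzS, hzlt⟩ := exists_lt_of_csInf_lt hSne (lt_add_of_pos_right v hε)
  obtain ⟨y, ρ, π, hy01, hπ, hρ, hbuck, hxy, hdy, rfl⟩ := hzS
  refine ⟨_, ⟨x, y, ρ, π, hxX.1, hy01, hπ, hρ, hbuck, hxy, hdy, rfl⟩, ?_⟩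
  have h6 : (∑ i, cl i * y i) + Γ * π + ∑ i, ρ i < v + ε := hzlt
  linarith

end Stmt1Aux

open Stmt1Aux

/-- The optimal value of the two-stage robust multi-representative selection problem with
continuous budgeted uncertainty equals the optimal value of the MIP (2MRS-C). -/
theorem stmt1 (n m : ℕ) (hn : 1 ≤ n) (hm : 1 ≤ m)
    (t : Fin n → Fin m) (p : Fin m → ℕ)
    (hp : ∀ j, 1 ≤ p j ∧ p j ≤ (bucket t j).card)
    (C cl d : Fin n → ℝ) (Γ : ℝ)
    (hC : ∀ i, 0 ≤ C i) (hcl : ∀ i, 0 ≤ cl i) (hd : ∀ i, 0 ≤ d i) (hΓ : 0 ≤ Γ) :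
    sInf (TwoStageValues t p C (UC cl d Γ)) = sInf (MIPValuesC t p C cl d Γ) := by
  classical
  have hx0 : FeasX t p (fun _ => (0:ℝ)) := by
    refine ⟨fun i => Or.inl rfl, fun j => ?_⟩
    simp
  have hTSne : (TwoStageValues t p C (UC cl d Γ)).Nonempty := ⟨_, (fun _ => 0), hx0, rfl⟩
  have hMSne : (MIPValuesC t p C cl d Γ).Nonempty := by
    obtain ⟨y₀, hy₀⟩ := feasY_nonempty t p hp _ hx0.1 hx0.2
    exact ⟨_, (fun _ => 0), y₀, (fun i => d i * y₀ i), 0, hx0.1,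
      (fun i => binary_bounds hy₀.1 i), le_rfl,
      (fun i => mul_nonneg (hd i) (binary_bounds hy₀.1 i).1), hy₀.2.1, hy₀.2.2,
      (fun i => by simp), rfl⟩
  have hMSbdd : BddBelow (MIPValuesC t p C cl d Γ) := by
    refine ⟨0, ?_⟩
    rintro b ⟨x, y, ρ, π, hxb, hy01, hπ, hρ, hbuck, hxy, hdy, rfl⟩
    have h0 : (0:ℝ) ≤ ∑ i, C i * x i :=
      Finset.sum_nonneg fun i _ => mul_nonneg (hC i) (binary_bounds hxb i).1
    have h1 : (0:ℝ) ≤ ∑ i, cl i * y i :=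
      Finset.sum_nonneg fun i _ => mul_nonneg (hcl i) (hy01 i).1
    have h2 : (0:ℝ) ≤ ∑ i, ρ i := Finset.sum_nonneg fun i _ => hρ i
    nlinarith [mul_nonneg hΓ hπ]
  have hTSbdd : BddBelow (TwoStageValues t p C (UC cl d Γ)) := by
    refine ⟨0, ?_⟩
    rintro b ⟨x, hxX, rfl⟩
    obtain ⟨y₀, hy₀⟩ := feasY_nonempty t p hp x hxX.1 hxX.2
    have h1 : (0:ℝ) ≤ ∑ i, C i * x i :=
      Finset.sum_nonneg fun i _ => mul_nonneg (hC i) (binary_bounds hxX.1 i).1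
    have h2 : (0:ℝ) ≤ sInf {z | ∃ y, FeasY t p x y ∧ z = ∑ i, cl i * y i} := by
      have hne2 : {z | ∃ y, FeasY t p x y ∧ z = ∑ i, cl i * y i}.Nonempty :=
        ⟨_, y₀, hy₀, rfl⟩
      apply le_csInf hne2
      rintro z ⟨y, hy, rfl⟩
      exact Finset.sum_nonneg fun i _ => mul_nonneg (hcl i) (binary_bounds hy.1 i).1
    have h3 : sInf {z | ∃ y, FeasY t p x y ∧ z = ∑ i, cl i * y i}
        ≤ sSup {w | ∃ c ∈ UC cl d Γ,
          w = sInf {z | ∃ y, FeasY t p x y ∧ z = ∑ i, c i * y i}} :=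
      le_csSup (wSet_bddAbove t p cl d Γ hcl hd x y₀ hy₀) ⟨cl, cl_mem_UC hΓ, rfl⟩
    linarith
  apply le_antisymm
  · apply le_csInf hMSne
    intro b hb
    obtain ⟨w, hwTS, hwb⟩ := dir2 t p C cl d Γ hp hcl hd hΓ hb
    exact (csInf_le hTSbdd hwTS).trans hwb
  · apply le_csInf hTSne
    intro w hw
    by_contra hcon
    push_neg at hcon
    obtain ⟨vv, hvvMS, hvv⟩ := dir1 t p C cl d Γ hp hcl hd hΓ hw
      ((sInf (MIPValuesC t p C cl d Γ) - w)/2) (by linarith)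
    have h5 := csInf_le hMSbdd hvvMS
    linarith
end
end

section
/- The optimal value of the two-stage robust multi-representative selection problem with alternative continuous budgeted uncertainty, min_{x∈X'} ( Σ_{i=1}^n C_i x_i + max_{c∈U^{AC}} min_{y∈Y(x)} Σ_{i=1}^n c_i y_i ), equals the optimal value of the mixed-integer program: minimize Σ_{i=1}^n C_i x_i + Σ_{i=1}^n c̲_i y_i + Γπ + Σ_{i=1}^n d_i ρ_i subject to Σ_{i∈T_j}(x_i + y_i) = p_j for all j ∈ [m], x_i + y_i ≤ 1 for all i ∈ [n], π + ρ_i ≥ y_i for all i ∈ [n], x ∈ {0,1}^n, y ∈ [0,1]^n, π ∈ R_{≥0}, ρ ∈ R_{≥0}^n. -/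
open Classical
noncomputable section

/-- The alternative continuous budgeted uncertainty set `U^{AC}`. -/
def UAC {n : ℕ} (cl d : Fin n → ℝ) (Γ : ℝ) : Set (Fin n → ℝ) :=
  {c | ∃ δ : Fin n → ℝ, (∀ i, 0 ≤ δ i ∧ δ i ≤ d i) ∧
    (∀ i, c i = cl i + δ i) ∧ ∑ i, δ i ≤ Γ}

/-- The set of objective values of feasible solutions of the MIP reformulation (2MRS-AC). -/
def MIPValuesAC {n m : ℕ} (t : Fin n → Fin m) (p : Fin m → ℕ)
    (C cl d : Fin n → ℝ) (Γ : ℝ) : Set ℝ :=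
  {val | ∃ x y ρ : Fin n → ℝ, ∃ π : ℝ,
    IsBinary x ∧ (∀ i, 0 ≤ y i ∧ y i ≤ 1) ∧ 0 ≤ π ∧ (∀ i, 0 ≤ ρ i) ∧
    (∀ j, ∑ i ∈ bucket t j, (x i + y i) = (p j : ℝ)) ∧
    (∀ i, x i + y i ≤ 1) ∧
    (∀ i, y i ≤ π + ρ i) ∧
    val = (∑ i, C i * x i) + (∑ i, cl i * y i) + Γ * π + ∑ i, d i * ρ i}

section Aux

open Finset

variable {n m : ℕ}

/-- Feasible support sets for the second stage, relative to first stage `x`. -/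
def GoodSet (t : Fin n → Fin m) (p : Fin m → ℕ) (x : Fin n → ℝ) (S : Finset (Fin n)) : Prop :=
  (∀ i ∈ S, x i = 0) ∧
    ∀ j, (∑ i ∈ bucket t j, x i) + ((S ∩ bucket t j).card : ℝ) = (p j : ℝ)

/-- Indicator vector of a finite set. -/
def indic {n : ℕ} (S : Finset (Fin n)) : Fin n → ℝ := fun i => if i ∈ S then 1 else 0

lemma indic_binary (S : Finset (Fin n)) : IsBinary (indic S) := by
  intro i; unfold indic; by_cases h : i ∈ S <;> simp [h]

lemma sum_indic (A S : Finset (Fin n)) : ∑ i ∈ A, indic S i = ((S ∩ A).card : ℝ) := by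
  unfold indic
  rw [Finset.sum_ite_mem]
  simp [Finset.inter_comm]

lemma sum_mul_indic (A S : Finset (Fin n)) (c : Fin n → ℝ) (hS : S ⊆ A) :
    ∑ i ∈ A, c i * indic S i = ∑ i ∈ S, c i := by
  unfold indic
  rw [Finset.sum_congr rfl (fun i _ => by rw [mul_ite, mul_one, mul_zero]),
    Finset.sum_ite_mem]
  congr 1
  exact Finset.inter_eq_right.2 hS

lemma feasY_indic (t : Fin n → Fin m) (p : Fin m → ℕ) (x : Fin n → ℝ)
    (hx : IsBinary x) {S : Finset (Fin n)} (hS : GoodSet t p x S) :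
    FeasY t p x (indic S) := by
  refine ⟨indic_binary S, ?_, ?_⟩
  · intro j
    rw [Finset.sum_add_distrib, sum_indic]
    exact (hS.2 j)
  · intro i
    by_cases h : i ∈ S
    · rw [hS.1 i h]; simp [indic, h]
    · rcases hx i with h1 | h1 <;> simp [indic, h, h1]

lemma feasY_support (t : Fin n → Fin m) (p : Fin m → ℕ) (x y : Fin n → ℝ)
    (hx : IsBinary x) (hy : FeasY t p x y) :
    GoodSet t p x (Finset.univ.filter (fun i => y i = 1)) ∧
      ∀ c : Fin n → ℝ, ∑ i, c i * y i = ∑ i ∈ Finset.univ.filter (fun i => y i = 1), c i := by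
  obtain ⟨hyb, hsum, hle⟩ := hy
  set S := Finset.univ.filter (fun i => y i = 1) with hSdef
  have hyS : ∀ i, y i = indic S i := by
    intro i
    rcases hyb i with h | h <;> simp [indic, hSdef, h]
  constructor
  · constructor
    · intro i hi
      have h1 : y i = 1 := (Finset.mem_filter.1 hi).2
      rcases hx i with h | h
      · exact h
      · exfalso; have := hle i; rw [h, h1] at this; linarith
    · intro j
      have := hsum j
      rw [Finset.sum_add_distrib] at this
      rw [← this]
      congr 1
      rw [← sum_indic]
      exact Finset.sum_congr rfl (fun i _ => (hyS i).symm)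
  · intro c
    rw [Finset.sum_congr rfl (fun i _ => by rw [hyS i]), sum_mul_indic _ _ _ (Finset.subset_univ S)]

end Aux
section Aux2

open Finset

variable {n m : ℕ}

/-- Number of ones of `x` in bucket `j`. -/
def sx (t : Fin n → Fin m) (x : Fin n → ℝ) (j : Fin m) : ℕ :=
  ((bucket t j).filter (fun i => x i = 1)).card

/-- Free positions of bucket `j`. -/
def freeB (t : Fin n → Fin m) (x : Fin n → ℝ) (j : Fin m) : Finset (Fin n) :=
  (bucket t j).filter (fun i => x i = 0)

lemma sum_bucket_binary (t : Fin n → Fin m) (x : Fin n → ℝ) (hx : IsBinary x) (j : Fin m) :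
    ∑ i ∈ bucket t j, x i = (sx t x j : ℝ) := by
  classical
  rw [← Finset.sum_filter_add_sum_filter_not (bucket t j) (fun i => x i = 1)]
  have h1 : ∑ i ∈ (bucket t j).filter (fun i => x i = 1), x i = (sx t x j : ℝ) := by
    rw [Finset.sum_congr rfl (fun i hi => (Finset.mem_filter.1 hi).2)]
    simp [sx]
  have h2 : ∑ i ∈ (bucket t j).filter (fun i => ¬ x i = 1), x i = 0 := by
    apply Finset.sum_eq_zero
    intro i hi
    rcases hx i with h | h
    · exact h
    · exact absurd h (Finset.mem_filter.1 hi).2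
  rw [h1, h2, add_zero]

lemma sum_free_of_vanish (t : Fin n → Fin m) (x : Fin n → ℝ) (hx : IsBinary x) (j : Fin m)
    (f : Fin n → ℝ) (h0 : ∀ i ∈ bucket t j, x i = 1 → f i = 0) :
    ∑ i ∈ bucket t j, f i = ∑ i ∈ freeB t x j, f i := by
  classical
  rw [← Finset.sum_filter_add_sum_filter_not (bucket t j) (fun i => x i = 0)]
  have h2 : ∑ i ∈ (bucket t j).filter (fun i => ¬ x i = 0), f i = 0 := by
    apply Finset.sum_eq_zero
    intro i hi
    obtain ⟨hib, hix⟩ := Finset.mem_filter.1 hi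
    rcases hx i with h | h
    · exact absurd h hix
    · exact h0 i hib h
  rw [h2, add_zero]; rfl

lemma card_free (t : Fin n → Fin m) (x : Fin n → ℝ) (hx : IsBinary x) (j : Fin m) :
    sx t x j + (freeB t x j).card = (bucket t j).card := by
  classical
  have : freeB t x j = (bucket t j).filter (fun i => ¬ x i = 1) := by
    apply Finset.filter_congr
    intro i _
    constructor
    · intro h; rw [h]; norm_num
    · intro h; rcases hx i with h' | h'
      · exact h'
      · exact absurd h' h
  rw [this]
  exact Finset.card_filter_add_card_filter_not _

lemma exists_sorted_subset (F : Finset (Fin n)) (c : Fin n → ℝ) :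
    ∀ q, q ≤ F.card → ∃ T, T ⊆ F ∧ T.card = q ∧ ∀ i ∈ T, ∀ i' ∈ F \ T, c i ≤ c i' := by
  intro q
  induction q with
  | zero => intro _; exact ⟨∅, Finset.empty_subset F, rfl, by simp⟩
  | succ k ih =>
    intro hk
    obtain ⟨T, hTF, hTc, hTs⟩ := ih (Nat.le_of_succ_le hk)
    have hne : (F \ T).Nonempty := by
      rw [← Finset.card_pos, Finset.card_sdiff_of_subset hTF, hTc]
      omega
    obtain ⟨i0, hi0, hmin⟩ := Finset.exists_min_image (F \ T) c hne
    have hi0F : i0 ∈ F := (Finset.mem_sdiff.1 hi0).1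
    have hi0T : i0 ∉ T := (Finset.mem_sdiff.1 hi0).2
    refine ⟨insert i0 T, ?_, ?_, ?_⟩
    · exact Finset.insert_subset hi0F hTF
    · rw [Finset.card_insert_of_notMem hi0T, hTc]
    · intro i hi i' hi'
      have hi'T : i' ∈ F \ T := by
        rw [Finset.mem_sdiff] at hi' ⊢
        exact ⟨hi'.1, fun h => hi'.2 (Finset.mem_insert_of_mem h)⟩
      rcases Finset.mem_insert.1 hi with h | h
      · rw [h]; exact hmin i' hi'T
      · exact hTs i h i' hi'T

lemma bucket_greedy (F T : Finset (Fin n)) (c y : Fin n → ℝ) (hTF : T ⊆ F)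
    (hsort : ∀ i ∈ T, ∀ i' ∈ F \ T, c i ≤ c i')
    (hy0 : ∀ i ∈ F, 0 ≤ y i) (hy1 : ∀ i ∈ F, y i ≤ 1)
    (hsum : ∑ i ∈ F, y i = (T.card : ℝ)) :
    ∑ i ∈ T, c i ≤ ∑ i ∈ F, c i * y i := by
  classical
  rcases T.eq_empty_or_nonempty with hT | hT
  · subst hT
    simp only [Finset.sum_empty]
    rw [Finset.card_empty, Nat.cast_zero] at hsum
    have : ∀ i ∈ F, y i = 0 := (Finset.sum_eq_zero_iff_of_nonneg hy0).1 hsum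
    rw [Finset.sum_congr rfl (fun i hi => by rw [this i hi, mul_zero])]
    simp
  · obtain ⟨istar, histar, hmax⟩ := Finset.exists_max_image T c hT
    set τ := c istar with hτ
    have hτT : ∀ i ∈ T, c i ≤ τ := hmax
    have hτF : ∀ i ∈ F \ T, τ ≤ c i := fun i hi => hsort istar histar i hi
    have hsplit : ∑ i ∈ F, c i * y i = ∑ i ∈ F \ T, c i * y i + ∑ i ∈ T, c i * y i :=
      (Finset.sum_sdiff hTF).symm
    have hysplit : ∑ i ∈ F, y i = ∑ i ∈ F \ T, y i + ∑ i ∈ T, y i :=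
      (Finset.sum_sdiff hTF).symm
    have h1 : ∑ i ∈ T, c i ≤ ∑ i ∈ T, c i * y i + τ * ((T.card : ℝ) - ∑ i ∈ T, y i) := by
      have : ∀ i ∈ T, c i ≤ c i * y i + τ * (1 - y i) := by
        intro i hi
        have hyi0 : 0 ≤ y i := hy0 i (hTF hi)
        have hyi1 : y i ≤ 1 := hy1 i (hTF hi)
        nlinarith [hτT i hi]
      calc ∑ i ∈ T, c i ≤ ∑ i ∈ T, (c i * y i + τ * (1 - y i)) := Finset.sum_le_sum this
        _ = ∑ i ∈ T, c i * y i + τ * ((T.card : ℝ) - ∑ i ∈ T, y i) := by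
            rw [Finset.sum_add_distrib, ← Finset.mul_sum]
            congr 2
            rw [Finset.sum_sub_distrib]
            simp
    have h2 : τ * ∑ i ∈ F \ T, y i ≤ ∑ i ∈ F \ T, c i * y i := by
      rw [Finset.mul_sum]
      apply Finset.sum_le_sum
      intro i hi
      have : 0 ≤ y i := hy0 i (Finset.mem_sdiff.1 hi).1
      exact mul_le_mul_of_nonneg_right (hτF i hi) this
    have hFT : ∑ i ∈ F \ T, y i = (T.card : ℝ) - ∑ i ∈ T, y i := by
      rw [← hsum, hysplit]; ring
    rw [hsplit]
    rw [hFT] at h2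
    linarith

lemma exists_good_greedy (t : Fin n → Fin m) (p : Fin m → ℕ) (x : Fin n → ℝ)
    (hx : FeasX t p x) (hp : ∀ j, p j ≤ (bucket t j).card) (c : Fin n → ℝ) :
    ∃ S, GoodSet t p x S ∧ ∀ y : Fin n → ℝ, (∀ i, 0 ≤ y i) → (∀ i, x i + y i ≤ 1) →
      (∀ j, ∑ i ∈ bucket t j, (x i + y i) = (p j : ℝ)) →
      ∑ i ∈ S, c i ≤ ∑ i, c i * y i := by
  classical
  obtain ⟨hxb, hxs⟩ := hx
  have hsxp : ∀ j, sx t x j ≤ p j := by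
    intro j
    have := hxs j
    rw [sum_bucket_binary t x hxb j] at this
    exact_mod_cast this
  have hq : ∀ j, p j - sx t x j ≤ (freeB t x j).card := by
    intro j
    have h1 := card_free t x hxb j
    have h2 := hp j
    omega
  have hch : ∀ j : Fin m, ∃ T, T ⊆ freeB t x j ∧ T.card = p j - sx t x j ∧
      ∀ i ∈ T, ∀ i' ∈ freeB t x j \ T, c i ≤ c i' :=
    fun j => exists_sorted_subset (freeB t x j) c (p j - sx t x j) (hq j)
  choose T hTsub hTcard hTsort using hch
  have hTbucket : ∀ j, T j ⊆ bucket t j := fun j => (hTsub j).trans (Finset.filter_subset _ _)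
  set S : Finset (Fin n) := Finset.univ.biUnion T with hSdef
  have hSb : ∀ j, S ∩ bucket t j = T j := by
    intro j
    ext i
    simp only [hSdef, Finset.mem_inter, Finset.mem_biUnion, Finset.mem_univ, true_and]
    constructor
    · rintro ⟨⟨k, hk⟩, hib⟩
      have h1 : t i = k := (Finset.mem_filter.1 (hTbucket k hk)).2
      have h2 : t i = j := (Finset.mem_filter.1 hib).2
      rwa [h1.symm.trans h2] at hk
    · intro hi
      exact ⟨⟨j, hi⟩, hTbucket j hi⟩
  have hx0 : ∀ i ∈ S, x i = 0 := by
    intro i hi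
    obtain ⟨k, _, hk⟩ := Finset.mem_biUnion.1 hi
    exact (Finset.mem_filter.1 (hTsub k hk)).2
  have hgood : GoodSet t p x S := by
    refine ⟨hx0, fun j => ?_⟩
    rw [sum_bucket_binary t x hxb j, hSb j, hTcard j]
    rw [← Nat.cast_add, Nat.add_sub_cancel' (hsxp j)]
  refine ⟨S, hgood, ?_⟩
  intro y hy0 hxy hsum
  have hy1 : ∀ i, y i ≤ 1 := by
    intro i
    have := hxy i
    rcases hxb i with h | h <;> linarith
  have hyzero : ∀ i, x i = 1 → y i = 0 := by
    intro i h
    have := hxy i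
    have := hy0 i
    rcases hxb i with h' | h' <;> linarith
  have hSsum : ∑ i ∈ S, c i = ∑ j, ∑ i ∈ T j, c i := by
    rw [hSdef]
    apply Finset.sum_biUnion
    intro a _ b _ hab
    apply Finset.disjoint_left.2
    intro i hia hib
    have h1 : t i = a := (Finset.mem_filter.1 (hTbucket a hia)).2
    have h2 : t i = b := (Finset.mem_filter.1 (hTbucket b hib)).2
    exact hab (h1.symm.trans h2)
  have hglobal : ∑ i, c i * y i = ∑ j, ∑ i ∈ bucket t j, c i * y i := by
    simp only [bucket]
    exact (Finset.sum_fiberwise Finset.univ t (fun i => c i * y i)).symm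
  rw [hSsum, hglobal]
  apply Finset.sum_le_sum
  intro j _
  have hb1 : ∑ i ∈ bucket t j, c i * y i = ∑ i ∈ freeB t x j, c i * y i :=
    sum_free_of_vanish t x hxb j _ (fun i _ h => by rw [hyzero i h, mul_zero])
  have hb2 : ∑ i ∈ bucket t j, y i = ∑ i ∈ freeB t x j, y i :=
    sum_free_of_vanish t x hxb j _ (fun i _ h => hyzero i h)
  have hbsum : ∑ i ∈ freeB t x j, y i = ((T j).card : ℝ) := by
    rw [← hb2]
    have h1 := hsum j
    rw [Finset.sum_add_distrib, sum_bucket_binary t x hxb j] at h1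
    rw [hTcard j, Nat.cast_sub (hsxp j)]
    linarith
  rw [hb1]
  exact bucket_greedy (freeB t x j) (T j) c y (hTsub j) (hTsort j)
    (fun i _ => hy0 i) (fun i _ => hy1 i) hbsum

end Aux2
section Knapsack

open Finset

/-- Explicit dual construction for the fractional knapsack problem. -/
lemma knapsack_dual {n : ℕ} (d y : Fin n → ℝ) (Γ B : ℝ)
    (hd : ∀ i, 0 ≤ d i) (hΓ : 0 ≤ Γ) (hy0 : ∀ i, 0 ≤ y i)
    (hB : ∀ δ : Fin n → ℝ, (∀ i, 0 ≤ δ i ∧ δ i ≤ d i) → ∑ i, δ i ≤ Γ →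
      ∑ i, δ i * y i ≤ B) :
    ∃ (π : ℝ) (ρ : Fin n → ℝ), 0 ≤ π ∧ (∀ i, 0 ≤ ρ i) ∧ (∀ i, y i ≤ π + ρ i) ∧
      Γ * π + ∑ i, d i * ρ i ≤ B := by
  classical
  set h : ℝ → ℝ := fun θ => ∑ i ∈ Finset.univ.filter (fun i => θ < y i), d i with hh
  by_cases hcase : h 0 ≤ Γ
  · -- π = 0, ρ = y
    refine ⟨0, y, le_refl 0, hy0, fun i => le_of_eq (zero_add (y i)).symm, ?_⟩
    have key : ∑ i, d i * y i ≤ B := by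
      have hb := hB (fun i => if 0 < y i then d i else 0)
        (fun i => by by_cases hi : 0 < y i <;> simp [hi, hd i])
        (by rw [Finset.sum_ite, Finset.sum_const_zero, add_zero]; exact hcase)
      have heq : ∑ i, (if 0 < y i then d i else 0) * y i = ∑ i, d i * y i := by
        apply Finset.sum_congr rfl
        intro i _
        by_cases hi : 0 < y i
        · simp [hi]
        · have h0 : y i = 0 := le_antisymm (not_lt.1 hi) (hy0 i)
          simp [hi, h0]
      rw [heq] at hb
      exact hb
    linarith
  · push_neg at hcase
    rcases isEmpty_or_nonempty (Fin n) with hE | hE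
    · exfalso
      have he : Finset.univ.filter (fun i => (0:ℝ) < y i) = ∅ :=
        Finset.eq_empty_of_isEmpty _
      rw [hh] at hcase
      simp only at hcase
      rw [he, Finset.sum_empty] at hcase
      linarith
    have huniv : (Finset.univ : Finset (Fin n)).Nonempty := Finset.univ_nonempty
    set vals : Finset ℝ := Finset.univ.image y with hvals
    have hvne : vals.Nonempty := huniv.image y
    set θmax := vals.max' hvne with hθmax
    have hmax0 : h θmax ≤ Γ := by
      have he : Finset.univ.filter (fun i => θmax < y i) = ∅ := by
        apply Finset.filter_eq_empty_iff.2
        intro i _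
        exact not_lt.2 (vals.le_max' (y i) (Finset.mem_image_of_mem y (Finset.mem_univ i)))
      rw [hh]
      simp only [he, Finset.sum_empty]
      exact hΓ
    set cand := vals.filter (fun θ => h θ ≤ Γ) with hcand
    have hcne : cand.Nonempty := ⟨θmax, Finset.mem_filter.2 ⟨vals.max'_mem hvne, hmax0⟩⟩
    set π := cand.min' hcne with hπ
    have hπmem : π ∈ cand := cand.min'_mem hcne
    have hπvals : π ∈ vals := (Finset.mem_filter.1 hπmem).1
    have hπΓ : h π ≤ Γ := (Finset.mem_filter.1 hπmem).2
    have hπ0 : 0 ≤ π := by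
      obtain ⟨i, _, hi⟩ := Finset.mem_image.1 hπvals
      rw [← hi]; exact hy0 i
    have hπpos : 0 < π := by
      rcases lt_or_eq_of_le hπ0 with h' | h'
      · exact h'
      · exfalso; rw [← h'] at hπΓ; linarith
    have Hclaim : Γ < ∑ i ∈ Finset.univ.filter (fun i => π ≤ y i), d i := by
      set L := vals.filter (fun v => v < π) with hL
      have key : ∀ θ', (Γ < h θ') → (Finset.univ.filter (fun i => θ' < y i) ⊆
          Finset.univ.filter (fun i => π ≤ y i)) →
          Γ < ∑ i ∈ Finset.univ.filter (fun i => π ≤ y i), d i := by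
        intro θ' h1 h2
        calc Γ < h θ' := h1
          _ ≤ _ := Finset.sum_le_sum_of_subset_of_nonneg h2 (fun i _ _ => hd i)
      rcases L.eq_empty_or_nonempty with hLe | hLne
      · refine key 0 hcase ?_
        intro i hi
        simp only [Finset.mem_filter, Finset.mem_univ, true_and] at hi ⊢
        by_contra hc
        push_neg at hc
        have : y i ∈ L := Finset.mem_filter.2
          ⟨Finset.mem_image_of_mem y (Finset.mem_univ i), hc⟩
        rw [hLe] at this
        exact Finset.notMem_empty _ this
      · set θ' := L.max' hLne with hθ'
        have hθ'L : θ' ∈ L := L.max'_mem hLne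
        have hθ'v : θ' ∈ vals := (Finset.mem_filter.1 hθ'L).1
        have hθ'π : θ' < π := (Finset.mem_filter.1 hθ'L).2
        have hθ'Γ : Γ < h θ' := by
          by_contra hc
          push_neg at hc
          have hmem : θ' ∈ cand := Finset.mem_filter.2 ⟨hθ'v, hc⟩
          have := cand.min'_le θ' hmem
          rw [← hπ] at this
          linarith
        refine key θ' hθ'Γ ?_
        intro i hi
        simp only [Finset.mem_filter, Finset.mem_univ, true_and] at hi ⊢
        by_contra hc
        push_neg at hc
        have hyiL : y i ∈ L := Finset.mem_filter.2
          ⟨Finset.mem_image_of_mem y (Finset.mem_univ i), hc⟩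
        have := L.le_max' (y i) hyiL
        rw [← hθ'] at this
        linarith
    set G := Finset.univ.filter (fun i => π < y i) with hG
    set A := Finset.univ.filter (fun i => y i = π) with hA
    have hsplit : ∑ i ∈ Finset.univ.filter (fun i => π ≤ y i), d i =
        ∑ i ∈ A, d i + ∑ i ∈ G, d i := by
      rw [← Finset.sum_filter_add_sum_filter_not (Finset.univ.filter (fun i => π ≤ y i))
        (fun i => y i = π)]
      congr 1
      · congr 1
        rw [Finset.filter_filter, hA]
        apply Finset.filter_congr
        intro i _
        constructor
        · rintro ⟨_, h2⟩; exact h2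
        · intro h2; exact ⟨le_of_eq h2.symm, h2⟩
      · congr 1
        rw [Finset.filter_filter, hG]
        apply Finset.filter_congr
        intro i _
        constructor
        · rintro ⟨h1, h2⟩; exact lt_of_le_of_ne h1 (Ne.symm h2)
        · intro h2; exact ⟨le_of_lt h2, ne_of_gt h2⟩
    set dA := ∑ i ∈ A, d i with hdA
    set dG := ∑ i ∈ G, d i with hdG
    have hπΓ' : dG ≤ Γ := hπΓ
    set r := Γ - dG with hr
    have hr0 : 0 ≤ r := by rw [hr]; linarith
    have hdAr : r < dA := by
      rw [hsplit] at Hclaim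
      rw [hr]; linarith
    have hdApos : 0 < dA := lt_of_le_of_lt hr0 hdAr
    set k := r / dA with hk
    have hk0 : 0 ≤ k := div_nonneg hr0 (le_of_lt hdApos)
    have hk1 : k ≤ 1 := by
      rw [hk, div_le_one hdApos]; linarith
    set δ : Fin n → ℝ := fun i => if π < y i then d i else if y i = π then d i * k else 0
      with hδ
    have hδbounds : ∀ i, 0 ≤ δ i ∧ δ i ≤ d i := by
      intro i
      simp only [hδ]
      by_cases h1 : π < y i
      · rw [if_pos h1]; exact ⟨hd i, le_refl _⟩
      · by_cases h2 : y i = π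
        · rw [if_neg h1, if_pos h2]
          refine ⟨mul_nonneg (hd i) hk0, ?_⟩
          calc d i * k ≤ d i * 1 := mul_le_mul_of_nonneg_left hk1 (hd i)
            _ = d i := mul_one _
        · rw [if_neg h1, if_neg h2]; exact ⟨le_refl 0, hd i⟩
    have hsum_split : ∀ f : Fin n → ℝ, ∑ i, δ i * f i =
        ∑ i ∈ G, d i * f i + ∑ i ∈ A, (d i * k) * f i := by
      intro f
      rw [← Finset.sum_filter_add_sum_filter_not Finset.univ (fun i => π < y i)]
      congr 1
      · rw [hG]
        apply Finset.sum_congr rfl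
        intro i hi
        have h1 := (Finset.mem_filter.1 hi).2
        simp only [hδ]
        rw [if_pos h1]
      · rw [← Finset.sum_filter_add_sum_filter_not
          (Finset.univ.filter (fun i => ¬ π < y i)) (fun i => y i = π)]
        have e1 : (Finset.univ.filter (fun i => ¬ π < y i)).filter (fun i => y i = π) = A := by
          rw [Finset.filter_filter, hA]
          apply Finset.filter_congr
          intro i _
          constructor
          · rintro ⟨_, h2⟩; exact h2
          · intro h2; exact ⟨by rw [h2]; exact lt_irrefl π, h2⟩
        have e2 : ∑ i ∈ (Finset.univ.filter (fun i => ¬ π < y i)).filter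
            (fun i => ¬ y i = π), δ i * f i = 0 := by
          apply Finset.sum_eq_zero
          intro i hi
          obtain ⟨hi1, hi2⟩ := Finset.mem_filter.1 hi
          have hi1' := (Finset.mem_filter.1 hi1).2
          simp only [hδ]
          rw [if_neg hi1', if_neg hi2, zero_mul]
        rw [e2, add_zero, e1]
        apply Finset.sum_congr rfl
        intro i hi
        have h2 : y i = π := (Finset.mem_filter.1 hi).2
        have h1 : ¬ π < y i := by rw [h2]; exact lt_irrefl π
        simp only [hδ]
        rw [if_neg h1, if_pos h2]
    have hAk : ∑ i ∈ A, d i * k = r := by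
      rw [← Finset.sum_mul, ← hdA, mul_comm, div_mul_cancel₀ r (ne_of_gt hdApos)]
    have hδsum : ∑ i, δ i ≤ Γ := by
      have h1 : ∑ i, δ i = ∑ i ∈ G, d i + ∑ i ∈ A, d i * k := by
        have := hsum_split (fun _ => 1)
        simpa using this
      rw [h1, hAk, ← hdG, hr]
      linarith
    have hδval : ∑ i, δ i * y i = ∑ i ∈ G, d i * y i + r * π := by
      rw [hsum_split y]
      congr 1
      have : ∑ i ∈ A, (d i * k) * y i = ∑ i ∈ A, (d i * k) * π := by
        apply Finset.sum_congr rfl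
        intro i hi
        rw [(Finset.mem_filter.1 hi).2]
      rw [this, ← Finset.sum_mul, hAk]
    refine ⟨π, fun i => max (y i - π) 0, le_of_lt hπpos, fun i => le_max_right _ _,
      fun i => ?_, ?_⟩
    · have := le_max_left (y i - π) 0
      simp only []
      linarith
    · have hρsum : ∑ i, d i * max (y i - π) 0 = ∑ i ∈ G, d i * y i - π * dG := by
        rw [← Finset.sum_filter_add_sum_filter_not Finset.univ (fun i => π < y i)]
        have e2 : ∑ i ∈ Finset.univ.filter (fun i => ¬ π < y i),
            d i * max (y i - π) 0 = 0 := by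
          apply Finset.sum_eq_zero
          intro i hi
          have h1 : ¬ π < y i := (Finset.mem_filter.1 hi).2
          have : max (y i - π) 0 = 0 := max_eq_right (by push_neg at h1; linarith)
          rw [this, mul_zero]
        rw [e2, add_zero]
        have e1 : ∑ i ∈ Finset.univ.filter (fun i => π < y i), d i * max (y i - π) 0 =
            ∑ i ∈ G, (d i * y i - d i * π) := by
          apply Finset.sum_congr rfl
          intro i hi
          have h1 : π < y i := (Finset.mem_filter.1 hi).2
          rw [max_eq_left (by linarith)]
          ring
        rw [e1, Finset.sum_sub_distrib, ← Finset.sum_mul, ← hdG]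
        ring
      have hfin := hB δ hδbounds hδsum
      rw [hδval] at hfin
      rw [hρsum]
      have hrπ : r * π = Γ * π - dG * π := by rw [hr]; ring
      have hcomm : π * dG = dG * π := mul_comm _ _
      linarith

end Knapsack
section Minimax

open Finset

variable {n m : ℕ}

/-- Separation-based minimax step: there is a fractional second-stage decision `ȳ`
whose worst-case cost is at most the sup `M` of the adversarial values. -/
lemma exists_ybar (t : Fin n → Fin m) (p : Fin m → ℕ) (x cl d : Fin n → ℝ) (Γ M : ℝ)
    (hcl : ∀ i, 0 ≤ cl i) (hd : ∀ i, 0 ≤ d i) (hΓ : 0 ≤ Γ)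
    (hM : ∀ δ : Fin n → ℝ, (∀ i, 0 ≤ δ i ∧ δ i ≤ d i) → ∑ i, δ i ≤ Γ →
      ∃ S, GoodSet t p x S ∧ ∑ i ∈ S, (cl i + δ i) ≤ M) :
    ∃ ybar : Fin n → ℝ, (∀ i, 0 ≤ ybar i ∧ ybar i ≤ 1) ∧
      (∀ i, x i = 1 → ybar i = 0) ∧
      (∀ j, (∑ i ∈ bucket t j, x i) + ∑ i ∈ bucket t j, ybar i = (p j : ℝ)) ∧
      (∀ δ : Fin n → ℝ, (∀ i, 0 ≤ δ i ∧ δ i ≤ d i) → ∑ i, δ i ≤ Γ →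
        ∑ i, (cl i + δ i) * ybar i ≤ M) := by
  classical
  set Good : Finset (Fin n) → Prop := GoodSet t p x with hGood
  set K : Set (Finset (Fin n) → ℝ) := {u | ∃ δ : Fin n → ℝ, (∀ i, 0 ≤ δ i ∧ δ i ≤ d i) ∧ ∑ i, δ i ≤ Γ ∧
    ∀ S, Good S → u S ≤ ∑ i ∈ S, (cl i + δ i)} with hK
  set O : Set (Finset (Fin n) → ℝ) := {u | ∀ S, Good S → M < u S} with hO
  have hKconv : Convex ℝ K := by
    rintro u1 ⟨δ1, hδ1b, hδ1s, hδ1v⟩ u2 ⟨δ2, hδ2b, hδ2s, hδ2v⟩ a b ha hb hab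
    refine ⟨fun i => a * δ1 i + b * δ2 i, ?_, ?_, ?_⟩
    · intro i
      constructor
      · have := (hδ1b i).1; have := (hδ2b i).1
        positivity
      · have h1 := (hδ1b i).2; have h2 := (hδ2b i).2
        calc a * δ1 i + b * δ2 i ≤ a * d i + b * d i := by
              apply add_le_add
              · exact mul_le_mul_of_nonneg_left h1 ha
              · exact mul_le_mul_of_nonneg_left h2 hb
          _ = d i := by rw [← add_mul, hab, one_mul]
    · rw [Finset.sum_add_distrib, ← Finset.mul_sum, ← Finset.mul_sum]
      calc a * ∑ i, δ1 i + b * ∑ i, δ2 i ≤ a * Γ + b * Γ := by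
            apply add_le_add
            · exact mul_le_mul_of_nonneg_left hδ1s ha
            · exact mul_le_mul_of_nonneg_left hδ2s hb
        _ = Γ := by rw [← add_mul, hab, one_mul]
    · intro S hS
      have h1 := hδ1v S hS
      have h2 := hδ2v S hS
      have e : ∑ i ∈ S, (cl i + (a * δ1 i + b * δ2 i)) =
          a * ∑ i ∈ S, (cl i + δ1 i) + b * ∑ i ∈ S, (cl i + δ2 i) := by
        rw [Finset.mul_sum, Finset.mul_sum, ← Finset.sum_add_distrib]
        apply Finset.sum_congr rfl
        intro i _
        linear_combination (-(cl i)) * hab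
      simp only [Pi.add_apply, Pi.smul_apply, smul_eq_mul]
      rw [e]
      apply add_le_add
      · exact mul_le_mul_of_nonneg_left h1 ha
      · exact mul_le_mul_of_nonneg_left h2 hb
  have hOconv : Convex ℝ O := by
    have : O = ⋂ S : Finset (Fin n), {u : (Finset (Fin n) → ℝ) | Good S → M < u S} := by
      ext u; simp [hO, Set.mem_iInter]
    rw [this]
    apply convex_iInter
    intro S
    by_cases hS : Good S
    · have : {u : (Finset (Fin n) → ℝ) | Good S → M < u S} = {u : (Finset (Fin n) → ℝ) | M < u S} := by
        ext u; simp [hS]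
      rw [this]
      exact convex_halfSpace_gt ⟨fun u1 u2 => rfl, fun c u => rfl⟩ M
    · have : {u : (Finset (Fin n) → ℝ) | Good S → M < u S} = Set.univ := by
        ext u; simp [hS]
      rw [this]
      exact convex_univ
  have hOopen : IsOpen O := by
    have : O = ⋂ S : Finset (Fin n), {u : (Finset (Fin n) → ℝ) | Good S → M < u S} := by
      ext u; simp [hO, Set.mem_iInter]
    rw [this]
    apply isOpen_iInter_of_finite
    intro S
    by_cases hS : Good S
    · have : {u : (Finset (Fin n) → ℝ) | Good S → M < u S} = {u : (Finset (Fin n) → ℝ) | M < u S} := by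
        ext u; simp [hS]
      rw [this]
      exact isOpen_lt continuous_const (continuous_apply S)
    · have : {u : (Finset (Fin n) → ℝ) | Good S → M < u S} = Set.univ := by
        ext u; simp [hS]
      rw [this]
      exact isOpen_univ
  have hdisj : Disjoint O K := by
    rw [Set.disjoint_left]
    rintro u hu ⟨δ, hδb, hδs, hδv⟩
    obtain ⟨S, hSg, hSv⟩ := hM δ hδb hδs
    have h1 : M < u S := hu S hSg
    have h2 : u S ≤ ∑ i ∈ S, (cl i + δ i) := hδv S hSg
    linarith
  obtain ⟨f, u0, hfO, hfK⟩ := geometric_hahn_banach_open hOconv hOopen hKconv hdisj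
  -- basis vectors and expansion
  set e : Finset (Fin n) → (Finset (Fin n) → ℝ) := fun S => (fun T => if S = T then (1:ℝ) else 0) with he
  set φ : Finset (Fin n) → ℝ := fun S => f (e S) with hφ
  have hexpand : ∀ w : (Finset (Fin n) → ℝ), f w = ∑ S : Finset (Fin n), w S * φ S := by
    intro w
    conv_lhs => rw [pi_eq_sum_univ w]
    rw [map_sum]
    apply Finset.sum_congr rfl
    intro S _
    rw [map_smul, smul_eq_mul]
  -- basic members
  have hb0 : (fun _ => (0:ℝ)) ∈ K := by
    refine ⟨fun _ => 0, fun i => ⟨le_refl 0, hd i⟩, by simp [hΓ], ?_⟩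
    intro S hS
    simp only [add_zero]
    exact Finset.sum_nonneg (fun i _ => hcl i)
  have hw1 : (fun _ => M + 1) ∈ O := by
    intro S _
    show M < M + 1
    linarith
  have hu0b0 : u0 ≤ f (fun _ => 0) := hfK _ hb0
  -- signs of φ
  have hφbad : ∀ S, ¬ Good S → φ S = 0 := by
    intro S hS
    by_contra hne
    have hmem : ∀ c : ℝ, (fun T => (0:ℝ) + c * e S T) ∈ K := by
      intro c
      refine ⟨fun _ => 0, fun i => ⟨le_refl 0, hd i⟩, by simp [hΓ], ?_⟩
      intro S' hS'
      have hne' : S ≠ S' := fun h => hS (h ▸ hS')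
      show (0:ℝ) + c * e S S' ≤ _
      have hv : e S S' = 0 := by simp [he, hne']
      rw [hv, mul_zero, add_zero]
      exact Finset.sum_nonneg (fun i _ => by simpa using hcl i)
    have hval : ∀ c : ℝ, u0 ≤ f (fun _ => 0) + c * φ S := by
      intro c
      have := hfK _ (hmem c)
      have heq : f (fun T => (0:ℝ) + c * e S T) = f (fun _ => 0) + c * φ S := by
        have : (fun T => (0:ℝ) + c * e S T) = (fun _ => (0:ℝ)) + c • (e S) := by
          funext T; simp [smul_eq_mul]
        rw [this, map_add, map_smul, smul_eq_mul]
      rwa [heq] at this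
    rcases lt_or_gt_of_ne hne with hlt | hgt
    · have := hval ((u0 - 1 - f (fun _ => 0)) / φ S)
      rw [div_mul_cancel₀ _ (ne_of_lt hlt)] at this
      linarith
    · have := hval ((u0 - 1 - f (fun _ => 0)) / φ S)
      rw [div_mul_cancel₀ _ (ne_of_gt hgt)] at this
      linarith
  have hφgood : ∀ S, Good S → φ S ≤ 0 := by
    intro S hS
    by_contra hpos
    push_neg at hpos
    have hmem : ∀ c : ℝ, 0 ≤ c → (fun T => (0:ℝ) - c * e S T) ∈ K := by
      intro c hc
      refine ⟨fun _ => 0, fun i => ⟨le_refl 0, hd i⟩, by simp [hΓ], ?_⟩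
      intro S' hS'
      show (0:ℝ) - c * e S S' ≤ _
      by_cases hSS : S = S'
      · subst hSS
        have hv : e S S = 1 := by simp [he]
        rw [hv, mul_one]
        have h0 : (0:ℝ) ≤ ∑ i ∈ S, (cl i + 0) :=
          Finset.sum_nonneg (fun i _ => by simpa using hcl i)
        linarith
      · have hv : e S S' = 0 := by simp [he, hSS]
        rw [hv, mul_zero, sub_zero]
        exact Finset.sum_nonneg (fun i _ => by simpa using hcl i)
    have hval : ∀ c : ℝ, 0 ≤ c → u0 ≤ f (fun _ => 0) - c * φ S := by
      intro c hc
      have := hfK _ (hmem c hc)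
      have heq : f (fun T => (0:ℝ) - c * e S T) = f (fun _ => 0) - c * φ S := by
        have : (fun T => (0:ℝ) - c * e S T) = (fun _ => (0:ℝ)) - c • (e S) := by
          funext T; simp [smul_eq_mul]
        rw [this, map_sub, map_smul, smul_eq_mul]
      rwa [heq] at this
    have := hval ((f (fun _ => 0) - u0 + 1) / φ S)
      (div_nonneg (by linarith [hu0b0]) (le_of_lt hpos))
    rw [div_mul_cancel₀ _ (ne_of_gt hpos)] at this
    linarith
  set ψ : Finset (Fin n) → ℝ := fun S => -φ S with hψ
  have hψ0 : ∀ S, 0 ≤ ψ S := by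
    intro S
    by_cases hS : Good S
    · simp only [hψ, neg_nonneg]; exact hφgood S hS
    · simp only [hψ, hφbad S hS, neg_zero, le_refl]
  set sψ : ℝ := ∑ S, ψ S with hsψ
  have hfexp : ∀ w : (Finset (Fin n) → ℝ), f w = -∑ S, w S * ψ S := by
    intro w
    rw [hexpand w]
    rw [← Finset.sum_neg_distrib]
    apply Finset.sum_congr rfl
    intro S _
    simp [hψ]
  have hspos : 0 < sψ := by
    rcases lt_or_eq_of_le (Finset.sum_nonneg (fun S _ => hψ0 S)) with h | h
    · exact h
    · exfalso
      have hall : ∀ S, ψ S = 0 := by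
        intro S
        have := (Finset.sum_eq_zero_iff_of_nonneg (fun S _ => hψ0 S)).1 h.symm
        exact this S (Finset.mem_univ S)
      have hf0 : ∀ w : (Finset (Fin n) → ℝ), f w = 0 := by
        intro w
        rw [hfexp w]
        simp [hall]
      have h1 := hfO _ hw1
      rw [hf0] at h1
      rw [hf0] at hu0b0
      linarith
  -- key inequality
  have hkey : ∀ δ : Fin n → ℝ, (∀ i, 0 ≤ δ i ∧ δ i ≤ d i) → ∑ i, δ i ≤ Γ →
      ∑ S, ψ S * ∑ i ∈ S, (cl i + δ i) ≤ M * sψ := by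
    intro δ hδb hδs
    set b : (Finset (Fin n) → ℝ) := fun S => if Good S then ∑ i ∈ S, (cl i + δ i) else 0 with hb
    have hbK : b ∈ K := by
      refine ⟨δ, hδb, hδs, ?_⟩
      intro S hS
      rw [hb]
      simp [hS]
    have h1 : u0 ≤ -∑ S, ψ S * ∑ i ∈ S, (cl i + δ i) := by
      have := hfK _ hbK
      rw [hfexp b] at this
      have e1 : ∑ S, b S * ψ S = ∑ S, ψ S * ∑ i ∈ S, (cl i + δ i) := by
        apply Finset.sum_congr rfl
        intro S _
        by_cases hS : Good S
        · rw [hb]; simp only [if_pos hS]; ring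
        · rw [hb]
          simp only [if_neg hS, zero_mul]
          rw [hψ]
          simp [hφbad S hS]
      rwa [e1] at this
    have h2 : ∀ ε : ℝ, 0 < ε → -((M + ε) * sψ) < u0 := by
      intro ε hε
      have hw : (fun _ => M + ε) ∈ O := by
        intro S _
        show M < M + ε
        linarith
      have := hfO _ hw
      rw [hfexp (fun _ => M + ε)] at this
      have e1 : ∑ S, (M + ε) * ψ S = (M + ε) * sψ := by
        rw [← Finset.mul_sum, hsψ]
      rwa [e1] at this
    have h3 : ∀ ε : ℝ, 0 < ε → ∑ S, ψ S * ∑ i ∈ S, (cl i + δ i) < (M + ε) * sψ := by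
      intro ε hε
      have := h2 ε hε
      linarith [h1]
    by_contra hc
    push_neg at hc
    set gap := ∑ S, ψ S * ∑ i ∈ S, (cl i + δ i) - M * sψ with hgap
    have hgap0 : 0 < gap := by rw [hgap]; linarith
    have := h3 (gap / (2 * sψ)) (by positivity)
    rw [add_mul, div_mul_eq_mul_div, mul_comm (2:ℝ) sψ, ← div_div,
      mul_div_assoc] at this
    rw [div_self (ne_of_gt hspos)] at this
    simp only [mul_one] at this
    rw [hgap] at this
    linarith
  -- define ybar
  set ybar : Fin n → ℝ := fun i => ∑ S, (ψ S / sψ) * (if i ∈ S then 1 else 0) with hybar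
  have hl0 : ∀ S, 0 ≤ ψ S / sψ := fun S => div_nonneg (hψ0 S) (le_of_lt hspos)
  have hlsum : ∑ S, ψ S / sψ = 1 := by
    rw [← Finset.sum_div, ← hsψ, div_self (ne_of_gt hspos)]
  have hlbad : ∀ S, ¬ Good S → ψ S / sψ = 0 := by
    intro S hS
    rw [hψ]
    simp [hφbad S hS]
  refine ⟨ybar, ?_, ?_, ?_, ?_⟩
  · intro i
    constructor
    · apply Finset.sum_nonneg
      intro S _
      by_cases hi : i ∈ S <;> simp [hi, hl0 S]
    · rw [hybar]
      calc ∑ S, (ψ S / sψ) * (if i ∈ S then (1:ℝ) else 0) ≤ ∑ S, ψ S / sψ := by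
            apply Finset.sum_le_sum
            intro S _
            by_cases hi : i ∈ S <;> simp [hi, hl0 S]
        _ = 1 := hlsum
  · intro i hxi
    rw [hybar]
    apply Finset.sum_eq_zero
    intro S _
    by_cases hS : Good S
    · have : i ∉ S := by
        intro hiS
        have := hS.1 i hiS
        rw [hxi] at this
        norm_num at this
      simp [this]
    · simp [hlbad S hS]
  · intro j
    have hswap : ∑ i ∈ bucket t j, ybar i =
        ∑ S, (ψ S / sψ) * ((S ∩ bucket t j).card : ℝ) := by
      rw [hybar]
      rw [Finset.sum_comm]
      apply Finset.sum_congr rfl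
      intro S _
      rw [← Finset.mul_sum]
      congr 1
      exact sum_indic (bucket t j) S
    rw [hswap]
    have e1 : ∀ S, (ψ S / sψ) * ((S ∩ bucket t j).card : ℝ) =
        (ψ S / sψ) * ((p j : ℝ) - ∑ i ∈ bucket t j, x i) := by
      intro S
      by_cases hS : Good S
      · congr 1
        have := hS.2 j
        linarith
      · rw [hlbad S hS, zero_mul, zero_mul]
    rw [Finset.sum_congr rfl (fun S _ => e1 S), ← Finset.sum_mul, hlsum, one_mul]
    ring
  · intro δ hδb hδs
    have hswap : ∑ i, (cl i + δ i) * ybar i =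
        ∑ S, (ψ S / sψ) * ∑ i ∈ S, (cl i + δ i) := by
      rw [hybar]
      simp only [Finset.mul_sum]
      rw [Finset.sum_comm]
      apply Finset.sum_congr rfl
      intro S _
      have e0 : ∀ i, (cl i + δ i) * ((ψ S / sψ) * (if i ∈ S then 1 else 0)) =
          (ψ S / sψ) * ((cl i + δ i) * indic S i) := by
        intro i; unfold indic; ring
      rw [Finset.sum_congr rfl (fun i _ => e0 i), ← Finset.mul_sum,
        sum_mul_indic Finset.univ S _ (Finset.subset_univ S), Finset.mul_sum]
    rw [hswap]
    have := hkey δ hδb hδs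
    have e2 : ∑ S, (ψ S / sψ) * ∑ i ∈ S, (cl i + δ i) =
        (∑ S, ψ S * ∑ i ∈ S, (cl i + δ i)) / sψ := by
      rw [Finset.sum_div]
      apply Finset.sum_congr rfl
      intro S _
      ring
    rw [e2]
    rw [div_le_iff₀ hspos]
    linarith [mul_comm M sψ]

end Minimax
section Glue

open Finset

variable {n m : ℕ}

lemma Zc_finite (t : Fin n → Fin m) (p : Fin m → ℕ) (x c : Fin n → ℝ)
    (hx : IsBinary x) :
    {z | ∃ y, FeasY t p x y ∧ z = ∑ i, c i * y i}.Finite := by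
  apply Set.Finite.subset (Set.finite_range (fun S : Finset (Fin n) => ∑ i ∈ S, c i))
  rintro z ⟨y, hy, rfl⟩
  obtain ⟨hgood, hsum⟩ := feasY_support t p x y hx hy
  exact ⟨Finset.univ.filter (fun i => y i = 1), (hsum c).symm⟩

lemma Zc_nonempty (t : Fin n → Fin m) (p : Fin m → ℕ) (x c : Fin n → ℝ)
    (hx : FeasX t p x) (hp : ∀ j, p j ≤ (bucket t j).card) :
    {z | ∃ y, FeasY t p x y ∧ z = ∑ i, c i * y i}.Nonempty := by
  obtain ⟨S, hS, -⟩ := exists_good_greedy t p x hx hp c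
  exact ⟨∑ i, c i * indic S i, indic S, feasY_indic t p x hx.1 hS, rfl⟩

lemma W_bddAbove (t : Fin n → Fin m) (p : Fin m → ℕ) (x cl d : Fin n → ℝ) (Γ : ℝ)
    (hx : FeasX t p x) (hp : ∀ j, p j ≤ (bucket t j).card) :
    BddAbove {w | ∃ c ∈ UAC cl d Γ,
      w = sInf {z | ∃ y, FeasY t p x y ∧ z = ∑ i, c i * y i}} := by
  obtain ⟨S0, hS0, -⟩ := exists_good_greedy t p x hx hp (fun _ => 0)
  refine ⟨∑ i, (|cl i| + |d i|), ?_⟩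
  rintro w ⟨c, ⟨δ, hδb, hδc, hδs⟩, rfl⟩
  have hz0 : (∑ i, c i * indic S0 i) ∈
      {z | ∃ y, FeasY t p x y ∧ z = ∑ i, c i * y i} :=
    ⟨indic S0, feasY_indic t p x hx.1 hS0, rfl⟩
  have h1 : sInf {z | ∃ y, FeasY t p x y ∧ z = ∑ i, c i * y i} ≤ ∑ i, c i * indic S0 i :=
    csInf_le (Set.Finite.bddBelow (Zc_finite t p x c hx.1)) hz0
  have h2 : ∑ i, c i * indic S0 i ≤ ∑ i, (|cl i| + |d i|) := by
    rw [sum_mul_indic Finset.univ S0 c (Finset.subset_univ S0)]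
    calc ∑ i ∈ S0, c i ≤ ∑ i ∈ S0, (|cl i| + |d i|) := by
          apply Finset.sum_le_sum
          intro i _
          rw [hδc i]
          have := (hδb i).1
          have := (hδb i).2
          have := le_abs_self (cl i)
          have := le_abs_self (d i)
          linarith
      _ ≤ ∑ i, (|cl i| + |d i|) := by
          apply Finset.sum_le_sum_of_subset_of_nonneg (Finset.subset_univ S0)
          intro i _ _
          positivity
  linarith

/-- Core lemma, part A: for feasible `x`, there is an MIP-feasible `(y, π, ρ)` whose
second-stage cost is at most the adversarial sup. -/
lemma partA (t : Fin n → Fin m) (p : Fin m → ℕ) (x cl d : Fin n → ℝ) (Γ : ℝ)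
    (hcl : ∀ i, 0 ≤ cl i) (hd : ∀ i, 0 ≤ d i) (hΓ : 0 ≤ Γ)
    (hx : FeasX t p x) (hp : ∀ j, p j ≤ (bucket t j).card) :
    ∃ (y ρ : Fin n → ℝ) (π : ℝ),
      (∀ i, 0 ≤ y i ∧ y i ≤ 1) ∧ 0 ≤ π ∧ (∀ i, 0 ≤ ρ i) ∧
      (∀ j, ∑ i ∈ bucket t j, (x i + y i) = (p j : ℝ)) ∧
      (∀ i, x i + y i ≤ 1) ∧ (∀ i, y i ≤ π + ρ i) ∧
      (∑ i, cl i * y i) + Γ * π + ∑ i, d i * ρ i ≤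
        sSup {w | ∃ c ∈ UAC cl d Γ,
          w = sInf {z | ∃ y, FeasY t p x y ∧ z = ∑ i, c i * y i}} := by
  classical
  set M := sSup {w | ∃ c ∈ UAC cl d Γ,
    w = sInf {z | ∃ y, FeasY t p x y ∧ z = ∑ i, c i * y i}} with hM
  have hMprop : ∀ δ : Fin n → ℝ, (∀ i, 0 ≤ δ i ∧ δ i ≤ d i) → ∑ i, δ i ≤ Γ →
      ∃ S, GoodSet t p x S ∧ ∑ i ∈ S, (cl i + δ i) ≤ M := by
    intro δ hδb hδs
    set c : Fin n → ℝ := fun i => cl i + δ i with hc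
    have hcU : c ∈ UAC cl d Γ := ⟨δ, hδb, fun i => rfl, hδs⟩
    set Z := {z | ∃ y, FeasY t p x y ∧ z = ∑ i, c i * y i} with hZ
    have hwW : sInf Z ∈ {w | ∃ c ∈ UAC cl d Γ,
        w = sInf {z | ∃ y, FeasY t p x y ∧ z = ∑ i, c i * y i}} := ⟨c, hcU, rfl⟩
    have hwM : sInf Z ≤ M := le_csSup (W_bddAbove t p x cl d Γ hx hp) hwW
    have hmem : sInf Z ∈ Z :=
      Set.Nonempty.csInf_mem (Zc_nonempty t p x c hx hp) (Zc_finite t p x c hx.1)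
    obtain ⟨y, hy, hyv⟩ := hmem
    obtain ⟨hgood, hsum⟩ := feasY_support t p x y hx.1 hy
    refine ⟨Finset.univ.filter (fun i => y i = 1), hgood, ?_⟩
    have := hsum c
    rw [← this, ← hyv]
    exact hwM
  obtain ⟨ybar, hyb01, hyb1, hybsum, hybδ⟩ :=
    exists_ybar t p x cl d Γ M hcl hd hΓ hMprop
  have hclyb : ∑ i, cl i * ybar i ≤ M := by
    have := hybδ (fun _ => 0) (fun i => ⟨le_refl 0, hd i⟩) (by simp [hΓ])
    simpa using this
  have hBδ : ∀ δ : Fin n → ℝ, (∀ i, 0 ≤ δ i ∧ δ i ≤ d i) → ∑ i, δ i ≤ Γ →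
      ∑ i, δ i * ybar i ≤ M - ∑ i, cl i * ybar i := by
    intro δ hδb hδs
    have h0 := hybδ δ hδb hδs
    have e : ∑ i, (cl i + δ i) * ybar i = ∑ i, cl i * ybar i + ∑ i, δ i * ybar i := by
      rw [← Finset.sum_add_distrib]
      apply Finset.sum_congr rfl
      intro i _
      ring
    rw [e] at h0
    linarith
  obtain ⟨π, ρ, hπ0, hρ0, hyπρ, hval⟩ := knapsack_dual d ybar Γ
    (M - ∑ i, cl i * ybar i) hd hΓ (fun i => (hyb01 i).1) hBδ
  refine ⟨ybar, ρ, π, hyb01, hπ0, hρ0, ?_, ?_, hyπρ, by linarith⟩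
  · intro j
    rw [Finset.sum_add_distrib]
    exact hybsum j
  · intro i
    rcases hx.1 i with h | h
    · rw [h, zero_add]; exact (hyb01 i).2
    · rw [h, hyb1 i h]; norm_num

/-- Core lemma, part B: weak duality. -/
lemma partB (t : Fin n → Fin m) (p : Fin m → ℕ) (x y ρ cl d : Fin n → ℝ) (Γ π : ℝ)
    (hcl : ∀ i, 0 ≤ cl i) (hd : ∀ i, 0 ≤ d i) (hΓ : 0 ≤ Γ)
    (hx : FeasX t p x) (hp : ∀ j, p j ≤ (bucket t j).card)
    (hy01 : ∀ i, 0 ≤ y i ∧ y i ≤ 1) (hπ0 : 0 ≤ π) (hρ0 : ∀ i, 0 ≤ ρ i)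
    (hbsum : ∀ j, ∑ i ∈ bucket t j, (x i + y i) = (p j : ℝ))
    (hxy1 : ∀ i, x i + y i ≤ 1) (hyπρ : ∀ i, y i ≤ π + ρ i) :
    sSup {w | ∃ c ∈ UAC cl d Γ,
      w = sInf {z | ∃ y, FeasY t p x y ∧ z = ∑ i, c i * y i}} ≤
      (∑ i, cl i * y i) + Γ * π + ∑ i, d i * ρ i := by
  classical
  apply Real.sSup_le
  · rintro w ⟨c, ⟨δ, hδb, hδc, hδs⟩, rfl⟩
    obtain ⟨S, hSgood, hSgreedy⟩ := exists_good_greedy t p x hx hp c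
    have hz0 : (∑ i, c i * indic S i) ∈
        {z | ∃ y, FeasY t p x y ∧ z = ∑ i, c i * y i} :=
      ⟨indic S, feasY_indic t p x hx.1 hSgood, rfl⟩
    have h1 : sInf {z | ∃ y, FeasY t p x y ∧ z = ∑ i, c i * y i} ≤
        ∑ i, c i * indic S i :=
      csInf_le (Set.Finite.bddBelow (Zc_finite t p x c hx.1)) hz0
    have h2 : ∑ i, c i * indic S i = ∑ i ∈ S, c i :=
      sum_mul_indic Finset.univ S c (Finset.subset_univ S)
    have h3 : ∑ i ∈ S, c i ≤ ∑ i, c i * y i :=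
      hSgreedy y (fun i => (hy01 i).1) hxy1 hbsum
    have h4 : ∑ i, c i * y i ≤ (∑ i, cl i * y i) + Γ * π + ∑ i, d i * ρ i := by
      have e1 : ∑ i, c i * y i = ∑ i, cl i * y i + ∑ i, δ i * y i := by
        rw [← Finset.sum_add_distrib]
        apply Finset.sum_congr rfl
        intro i _
        rw [hδc i]
        ring
      have e2 : ∑ i, δ i * y i ≤ (∑ i, δ i) * π + ∑ i, δ i * ρ i := by
        rw [Finset.sum_mul, ← Finset.sum_add_distrib]
        apply Finset.sum_le_sum
        intro i _
        have h5 := (hδb i).1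
        have h6 := hyπρ i
        nlinarith
      have e3 : (∑ i, δ i) * π ≤ Γ * π := mul_le_mul_of_nonneg_right hδs hπ0
      have e4 : ∑ i, δ i * ρ i ≤ ∑ i, d i * ρ i := by
        apply Finset.sum_le_sum
        intro i _
        exact mul_le_mul_of_nonneg_right (hδb i).2 (hρ0 i)
      linarith
    linarith
  · have h1 : 0 ≤ ∑ i, cl i * y i :=
      Finset.sum_nonneg (fun i _ => mul_nonneg (hcl i) (hy01 i).1)
    have h2 : 0 ≤ ∑ i, d i * ρ i :=
      Finset.sum_nonneg (fun i _ => mul_nonneg (hd i) (hρ0 i))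
    have h3 : 0 ≤ Γ * π := mul_nonneg hΓ hπ0
    linarith

end Glue
/-- The optimal value of the two-stage robust multi-representative selection problem with
alternative continuous budgeted uncertainty equals the optimal value of the MIP (2MRS-AC). -/
theorem stmt2 (n m : ℕ) (hn : 1 ≤ n) (hm : 1 ≤ m)
    (t : Fin n → Fin m) (p : Fin m → ℕ)
    (hp : ∀ j, 1 ≤ p j ∧ p j ≤ (bucket t j).card)
    (C cl d : Fin n → ℝ) (Γ : ℝ)
    (hC : ∀ i, 0 ≤ C i) (hcl : ∀ i, 0 ≤ cl i) (hd : ∀ i, 0 ≤ d i) (hΓ : 0 ≤ Γ) :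
    sInf (TwoStageValues t p C (UAC cl d Γ)) = sInf (MIPValuesAC t p C cl d Γ) := by
  classical
  have hpc : ∀ j, p j ≤ (bucket t j).card := fun j => (hp j).2
  have hCx : ∀ x : Fin n → ℝ, IsBinary x → 0 ≤ ∑ i, C i * x i := by
    intro x hx
    apply Finset.sum_nonneg
    intro i _
    rcases hx i with h | h <;> simp [h, hC i]
  -- nonnegativity of the sSup term
  have hW0 : ∀ x : Fin n → ℝ, FeasX t p x →
      0 ≤ sSup {w | ∃ c ∈ UAC cl d Γ,
        w = sInf {z | ∃ y, FeasY t p x y ∧ z = ∑ i, c i * y i}} := by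
    intro x hx
    have hclU : cl ∈ UAC cl d Γ :=
      ⟨fun _ => 0, fun i => ⟨le_refl 0, hd i⟩, fun i => (add_zero (cl i)).symm,
        by simp [hΓ]⟩
    have hw0 : sInf {z | ∃ y, FeasY t p x y ∧ z = ∑ i, cl i * y i} ∈
        {w | ∃ c ∈ UAC cl d Γ,
          w = sInf {z | ∃ y, FeasY t p x y ∧ z = ∑ i, c i * y i}} := ⟨cl, hclU, rfl⟩
    have h1 : 0 ≤ sInf {z | ∃ y, FeasY t p x y ∧ z = ∑ i, cl i * y i} := by
      apply Real.sInf_nonneg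
      rintro z ⟨y, hy, rfl⟩
      apply Finset.sum_nonneg
      intro i _
      rcases hy.1 i with h | h <;> simp [h, hcl i]
    calc (0:ℝ) ≤ _ := h1
      _ ≤ _ := le_csSup (W_bddAbove t p x cl d Γ hx hpc) hw0
  -- lower bounds
  have hAlb : ∀ a ∈ TwoStageValues t p C (UAC cl d Γ), (0:ℝ) ≤ a := by
    rintro a ⟨x, hx, rfl⟩
    have h1 := hCx x hx.1
    have h2 := hW0 x hx
    linarith
  have hBlb : ∀ b ∈ MIPValuesAC t p C cl d Γ, (0:ℝ) ≤ b := by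
    rintro b ⟨x, y, ρ, π, hxb, hy01, hπ0, hρ0, hbsum, hxy1, hyπρ, rfl⟩
    have h1 := hCx x hxb
    have h2 : 0 ≤ ∑ i, cl i * y i :=
      Finset.sum_nonneg (fun i _ => mul_nonneg (hcl i) (hy01 i).1)
    have h3 : 0 ≤ ∑ i, d i * ρ i :=
      Finset.sum_nonneg (fun i _ => mul_nonneg (hd i) (hρ0 i))
    have h4 : 0 ≤ Γ * π := mul_nonneg hΓ hπ0
    linarith
  -- the zero first-stage decision
  have hx0 : FeasX t p (fun _ => (0:ℝ)) := by
    refine ⟨fun i => Or.inl rfl, fun j => ?_⟩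
    simp
  have hAne : (TwoStageValues t p C (UAC cl d Γ)).Nonempty :=
    ⟨_, (fun _ => (0:ℝ)), hx0, rfl⟩
  have hBne : (MIPValuesAC t p C cl d Γ).Nonempty := by
    obtain ⟨y, ρ, π, hy01, hπ0, hρ0, hbsum, hxy1, hyπρ, -⟩ :=
      partA t p (fun _ => (0:ℝ)) cl d Γ hcl hd hΓ hx0 hpc
    exact ⟨_, (fun _ => (0:ℝ)), y, ρ, π, hx0.1, hy01, hπ0, hρ0, hbsum, hxy1, hyπρ, rfl⟩
  apply le_antisymm
  · -- sInf A ≤ sInf B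
    apply le_csInf hBne
    rintro b ⟨x, y, ρ, π, hxb, hy01, hπ0, hρ0, hbsum, hxy1, hyπρ, rfl⟩
    have hfx : FeasX t p x := by
      refine ⟨hxb, fun j => ?_⟩
      have h1 := hbsum j
      rw [Finset.sum_add_distrib] at h1
      have h2 : 0 ≤ ∑ i ∈ bucket t j, y i :=
        Finset.sum_nonneg (fun i _ => (hy01 i).1)
      linarith
    have hmem : (∑ i, C i * x i) + sSup {w | ∃ c ∈ UAC cl d Γ,
        w = sInf {z | ∃ y, FeasY t p x y ∧ z = ∑ i, c i * y i}} ∈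
        TwoStageValues t p C (UAC cl d Γ) := ⟨x, hfx, rfl⟩
    have h1 : sInf (TwoStageValues t p C (UAC cl d Γ)) ≤
        (∑ i, C i * x i) + sSup {w | ∃ c ∈ UAC cl d Γ,
          w = sInf {z | ∃ y, FeasY t p x y ∧ z = ∑ i, c i * y i}} :=
      csInf_le ⟨0, fun a ha => hAlb a ha⟩ hmem
    have h2 := partB t p x y ρ cl d Γ π hcl hd hΓ hfx hpc hy01 hπ0 hρ0 hbsum hxy1 hyπρ
    linarith
  · -- sInf B ≤ sInf A
    apply le_csInf hAne
    rintro a ⟨x, hx, rfl⟩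
    obtain ⟨y, ρ, π, hy01, hπ0, hρ0, hbsum, hxy1, hyπρ, hbound⟩ :=
      partA t p x cl d Γ hcl hd hΓ hx hpc
    have hmem : (∑ i, C i * x i) + (∑ i, cl i * y i) + Γ * π + ∑ i, d i * ρ i ∈
        MIPValuesAC t p C cl d Γ :=
      ⟨x, y, ρ, π, hx.1, hy01, hπ0, hρ0, hbsum, hxy1, hyπρ, rfl⟩
    have h1 : sInf (MIPValuesAC t p C cl d Γ) ≤
        (∑ i, C i * x i) + (∑ i, cl i * y i) + Γ * π + ∑ i, d i * ρ i :=
      csInf_le ⟨0, fun b hb => hBlb b hb⟩ hmem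
    linarith
end
end

section
/- For every π ∈ R_{≥0}, the optimal value of the linear program (*): minimize Σ_{i∈T} c̲_i y_i + Σ_{i∈T} ρ_i subject to Σ_{i∈T} y_i = 1, π + ρ_i ≥ d_i y_i for all i ∈ T, y ∈ [0,1]^T, ρ ∈ R_{≥0}^T, equals the optimal value of the linear program (*'): minimize Σ_{i∈T} c̲_i y̲_i + Σ_{i∈T} c̄_i ȳ_i subject to Σ_{i∈T}(y̲_i + ȳ_i) = 1, y̲_i ∈ [0, π_i] and ȳ_i ∈ [0, 1 − π_i] for all i ∈ T. -/
open Classical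
noncomputable section

/-! Split each `y_i` of (*) as `y̲_i + ȳ_i` with `y̲_i = min y_i π_i`. Since
`d_i π_i = min d_i π`, the overflow `d_i ȳ_i` is at most `ρ_i`, so this turns a feasible point
of (*) into one of (*') of no larger value; conversely `ρ_i = d_i ȳ_i` turns a feasible point
of (*') into one of (*) of the same value. -/

open Finset

theorem Real.sInf_eq_sInf_of_subset_of_forall_exists_le {A B : Set ℝ} (hBA : B ⊆ A)
    (hAB : ∀ a ∈ A, ∃ b ∈ B, b ≤ a) (hA : BddBelow A) : sInf A = sInf B := by
  rcases A.eq_empty_or_nonempty with rfl | hA_ne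
  · rw [Set.subset_empty_iff.mp hBA]
  have hB_ne : B.Nonempty := by
    obtain ⟨a, ha⟩ := hA_ne
    obtain ⟨b, hb, -⟩ := hAB a ha
    exact ⟨b, hb⟩
  refine le_antisymm (csInf_le_csInf hA hB_ne hBA) (le_csInf hA_ne fun a ha => ?_)
  obtain ⟨b, hb, hba⟩ := hAB a ha
  exact (csInf_le (hA.mono hBA) hb).trans hba

theorem mul_sub_min_min_one_div_le {d y ρ π : ℝ} (hd : 0 < d) (hy : y ≤ 1)
    (hρ : 0 ≤ ρ) (h : d * y ≤ π + ρ) : d * (y - min y (min 1 (π / d))) ≤ ρ := by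
  have hdm : d * min 1 (π / d) = min d π := by
    rw [mul_min_of_nonneg _ _ hd.le, mul_one, mul_div_cancel₀ _ hd.ne']
  have hdy : d * y ≤ d := mul_le_of_le_one_right hd.le hy
  rcases min_cases y (min 1 (π / d)) with ⟨hmin, -⟩ | ⟨hmin, -⟩
  · simpa [hmin] using hρ
  · rw [hmin, mul_sub, hdm]
    rcases min_cases d π with ⟨h', -⟩ | ⟨h', -⟩ <;> linarith

section

variable {ι : Type*} [Fintype ι] (cl d : ι → ℝ) (π : ℝ)

-- The sets of objective values of the feasible points of (*) and of (*').
def penaltyLPValues : Set ℝ :=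
  {v | ∃ y ρ : ι → ℝ,
    (∀ i, 0 ≤ y i ∧ y i ≤ 1) ∧ (∀ i, 0 ≤ ρ i) ∧
    (∀ i, d i * y i ≤ π + ρ i) ∧ (∑ i, y i = 1) ∧
    v = (∑ i, cl i * y i) + ∑ i, ρ i}

def splitLPValues : Set ℝ :=
  {v | ∃ yl yu : ι → ℝ,
    (∀ i, 0 ≤ yl i ∧ yl i ≤ min 1 (π / d i)) ∧
    (∀ i, 0 ≤ yu i ∧ yu i ≤ 1 - min 1 (π / d i)) ∧
    (∑ i, (yl i + yu i) = 1) ∧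
    v = (∑ i, cl i * yl i) + ∑ i, (cl i + d i) * yu i}

variable {cl d π}

theorem splitLPValues_subset_penaltyLPValues (hd : ∀ i, 0 < d i) :
    splitLPValues cl d π ⊆ penaltyLPValues cl d π := by
  rintro v ⟨yl, yu, hyl, hyu, hsum, rfl⟩
  refine ⟨yl + yu, d * yu, fun i => ⟨?_, ?_⟩, fun i => mul_nonneg (hd i).le (hyu i).1,
    fun i => ?_, hsum, ?_⟩
  · exact add_nonneg (hyl i).1 (hyu i).1
  · simp only [Pi.add_apply]
    linarith [(hyl i).2, (hyu i).2]
  · have : d i * yl i ≤ π := (le_div_iff₀' (hd i)).mp ((hyl i).2.trans (min_le_right _ _))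
    simp only [Pi.add_apply, Pi.mul_apply]
    linarith
  · simp only [Pi.add_apply, Pi.mul_apply, mul_add, add_mul, sum_add_distrib]
    ring

theorem exists_splitLPValues_le (hd : ∀ i, 0 < d i) (hπ : 0 ≤ π) :
    ∀ v ∈ penaltyLPValues cl d π, ∃ w ∈ splitLPValues cl d π, w ≤ v := by
  rintro v ⟨y, ρ, hy, hρ, hyρ, hsum, rfl⟩
  set m : ι → ℝ := fun i => min 1 (π / d i)
  have hm : ∀ i, 0 ≤ m i := fun i => le_min zero_le_one (div_nonneg hπ (hd i).le)
  set yl : ι → ℝ := fun i => min (y i) (m i)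
  have hoverflow : ∑ i, d i * (y i - yl i) ≤ ∑ i, ρ i := sum_le_sum fun i _ =>
    mul_sub_min_min_one_div_le (hd i) (hy i).2 (hρ i) (hyρ i)
  refine ⟨_, ⟨yl, y - yl, fun i => ⟨le_min (hy i).1 (hm i), min_le_right _ _⟩,
    fun i => ⟨?_, ?_⟩, ?_, rfl⟩, ?_⟩
  · simp only [Pi.sub_apply, sub_nonneg]
    exact min_le_left _ _
  · simp only [Pi.sub_apply, yl]
    rcases min_cases (y i) (m i) with ⟨h, -⟩ | ⟨h, -⟩ <;>
      linarith [(hy i).2, min_le_left 1 (π / d i)]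
  · simpa using hsum
  · calc ∑ i, cl i * yl i + ∑ i, (cl i + d i) * (y - yl) i
        = ∑ i, cl i * y i + ∑ i, d i * (y i - yl i) := by
          simp only [Pi.sub_apply, mul_sub, add_mul, sum_add_distrib, sum_sub_distrib]
          ring
      _ ≤ ∑ i, cl i * y i + ∑ i, ρ i := by linarith

theorem bddBelow_penaltyLPValues : BddBelow (penaltyLPValues cl d π) := by
  refine ⟨-∑ i, |cl i|, ?_⟩
  rintro v ⟨y, ρ, hy, hρ, -, -, rfl⟩
  have hcly : ∀ i, -|cl i| ≤ cl i * y i := fun i => by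
    have : |cl i * y i| ≤ |cl i| := by
      rw [abs_mul]
      exact mul_le_of_le_one_right (abs_nonneg _) (abs_le.mpr ⟨by linarith [hy i], (hy i).2⟩)
    linarith [neg_abs_le (cl i * y i)]
  have h₁ : -∑ i, |cl i| ≤ ∑ i, cl i * y i := by
    rw [← sum_neg_distrib]
    exact sum_le_sum fun i _ => hcly i
  linarith [sum_nonneg fun i (_ : i ∈ univ) => hρ i]

end

theorem stmt3_general (q : ℕ) (cl d : Fin q → ℝ)
    (hd : ∀ i, 0 < d i) (π : ℝ) (hπ : 0 ≤ π) :
    sInf {v | ∃ y ρ : Fin q → ℝ,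
        (∀ i, 0 ≤ y i ∧ y i ≤ 1) ∧ (∀ i, 0 ≤ ρ i) ∧
        (∀ i, d i * y i ≤ π + ρ i) ∧ (∑ i, y i = 1) ∧
        v = (∑ i, cl i * y i) + ∑ i, ρ i}
    = sInf {v | ∃ yl yu : Fin q → ℝ,
        (∀ i, 0 ≤ yl i ∧ yl i ≤ min 1 (π / d i)) ∧
        (∀ i, 0 ≤ yu i ∧ yu i ≤ 1 - min 1 (π / d i)) ∧
        (∑ i, (yl i + yu i) = 1) ∧
        v = (∑ i, cl i * yl i) + ∑ i, (cl i + d i) * yu i} :=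
  Real.sInf_eq_sInf_of_subset_of_forall_exists_le (splitLPValues_subset_penaltyLPValues hd)
    (exists_splitLPValues_le hd hπ) bddBelow_penaltyLPValues

/-- For every `π ≥ 0`, the optimal value of the LP (*) equals the optimal value of the
LP (*'), where `π_i = min {1, π / d_i}` and `c̄_i = c̲_i + d_i`. -/
theorem stmt3 (q : ℕ) (hq : 1 ≤ q) (cl d : Fin q → ℝ)
    (hcl : ∀ i, 0 ≤ cl i) (hd : ∀ i, 0 < d i) (π : ℝ) (hπ : 0 ≤ π) :
    sInf {v | ∃ y ρ : Fin q → ℝ,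
        (∀ i, 0 ≤ y i ∧ y i ≤ 1) ∧ (∀ i, 0 ≤ ρ i) ∧
        (∀ i, d i * y i ≤ π + ρ i) ∧ (∑ i, y i = 1) ∧
        v = (∑ i, cl i * y i) + ∑ i, ρ i}
    = sInf {v | ∃ yl yu : Fin q → ℝ,
        (∀ i, 0 ≤ yl i ∧ yl i ≤ min 1 (π / d i)) ∧
        (∀ i, 0 ≤ yu i ∧ yu i ≤ 1 - min 1 (π / d i)) ∧
        (∑ i, (yl i + yu i) = 1) ∧
        v = (∑ i, cl i * yl i) + ∑ i, (cl i + d i) * yu i} :=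
  stmt3_general q cl d hd π hπ
end
end

section
/- Assume the items are indexed so that c̲_1 ≤ c̲_2 ≤ ⋯ ≤ c̲_q, that s ∈ [q] satisfies c̄_s = min_{i∈[q]} c̄_i, and that r ∈ [q] satisfies s ≤ r, c̲_r ≤ c̄_s, and (if r < q) c̄_s ≤ c̲_{r+1}. Define b_l = (Σ_{l'=1}^l 1/d_{l'})^{-1} for l ∈ [r] and b_{r+1} = 0. Then the function f : R_{≥0} → R_{≥0} is continuous and convex; f(π) = c̲_1 for all π ≥ b_1; f is affine on each interval [b_{l+1}, b_l] for l ∈ [r]; f(b_l) = b_l · Σ_{l'=1}^l c̲_{l'}/d_{l'} for all l ∈ [r]; and f(0) = c̄_s. -/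
open Classical
noncomputable section

/-- `f(π)`: the optimal value of the LP
`min ∑_{i=1}^q c̲_i y_i + ∑_{i=1}^q ρ_i` s.t. `∑ y_i = 1`, `π + ρ_i ≥ d_i y_i`,
`y ∈ [0,1]^q`, `ρ ≥ 0` (items indexed by `1, …, q`). -/
def fval (q : ℕ) (cl d : ℕ → ℝ) (π : ℝ) : ℝ :=
  sInf {v | ∃ y ρ : ℕ → ℝ,
    (∀ i ∈ Finset.Icc 1 q, 0 ≤ y i ∧ y i ≤ 1 ∧ 0 ≤ ρ i ∧ d i * y i ≤ π + ρ i) ∧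
    (∑ i ∈ Finset.Icc 1 q, y i = 1) ∧
    v = ∑ i ∈ Finset.Icc 1 q, (cl i * y i + ρ i)}

lemma fval_bdd (q : ℕ) (cl d : ℕ → ℝ) (hcl : ∀ i ∈ Finset.Icc 1 q, 0 ≤ cl i) (π : ℝ) :
    ∀ v ∈ {v | ∃ y ρ : ℕ → ℝ,
    (∀ i ∈ Finset.Icc 1 q, 0 ≤ y i ∧ y i ≤ 1 ∧ 0 ≤ ρ i ∧ d i * y i ≤ π + ρ i) ∧
    (∑ i ∈ Finset.Icc 1 q, y i = 1) ∧
    v = ∑ i ∈ Finset.Icc 1 q, (cl i * y i + ρ i)}, (0:ℝ) ≤ v := by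
  rintro v ⟨y, ρ, h1, _, rfl⟩
  exact Finset.sum_nonneg fun i hi =>
    add_nonneg (mul_nonneg (hcl i hi) (h1 i hi).1) (h1 i hi).2.2.1

lemma fval_nonempty (q : ℕ) (hq : 1 ≤ q) (cl d : ℕ → ℝ)
    (hd : ∀ i ∈ Finset.Icc 1 q, 0 < d i) (π : ℝ) (hπ : 0 ≤ π) :
    Set.Nonempty {v | ∃ y ρ : ℕ → ℝ,
    (∀ i ∈ Finset.Icc 1 q, 0 ≤ y i ∧ y i ≤ 1 ∧ 0 ≤ ρ i ∧ d i * y i ≤ π + ρ i) ∧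
    (∑ i ∈ Finset.Icc 1 q, y i = 1) ∧
    v = ∑ i ∈ Finset.Icc 1 q, (cl i * y i + ρ i)} := by
  have h1 : (1:ℕ) ∈ Finset.Icc 1 q := by simp [hq]
  refine ⟨_, (fun i => if i = 1 then 1 else 0), (fun i => if i = 1 then d 1 else 0),
    ?_, ?_, rfl⟩
  · intro i hi
    by_cases h : i = 1
    · subst h
      simp only [if_pos rfl]
      refine ⟨zero_le_one, le_refl 1, (hd 1 h1).le, by simp; linarith [hd 1 h1]⟩
    · simp only [if_neg h]
      exact ⟨le_refl 0, zero_le_one, le_refl 0, by simpa using hπ⟩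
  · rw [Finset.sum_ite_eq' (Finset.Icc 1 q) 1 (fun _ => (1:ℝ))]
    simp [h1]

lemma fval_le (q : ℕ) (cl d : ℕ → ℝ) (hcl : ∀ i ∈ Finset.Icc 1 q, 0 ≤ cl i)
    (π : ℝ) (y ρ : ℕ → ℝ)
    (hfeas : ∀ i ∈ Finset.Icc 1 q, 0 ≤ y i ∧ y i ≤ 1 ∧ 0 ≤ ρ i ∧ d i * y i ≤ π + ρ i)
    (hsum : ∑ i ∈ Finset.Icc 1 q, y i = 1) :
    fval q cl d π ≤ ∑ i ∈ Finset.Icc 1 q, (cl i * y i + ρ i) :=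
  csInf_le ⟨0, fun v hv => fval_bdd q cl d hcl π v hv⟩ ⟨y, ρ, hfeas, hsum, rfl⟩

lemma le_fval (q : ℕ) (hq : 1 ≤ q) (cl d : ℕ → ℝ)
    (hd : ∀ i ∈ Finset.Icc 1 q, 0 < d i)
    (π : ℝ) (hπ : 0 ≤ π) (lam : ℝ) (μ : ℕ → ℝ)
    (hμ : ∀ i ∈ Finset.Icc 1 q, 0 ≤ μ i ∧ μ i ≤ 1 ∧ lam ≤ cl i + μ i * d i) :
    lam - π * ∑ i ∈ Finset.Icc 1 q, μ i ≤ fval q cl d π := by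
  apply le_csInf (fval_nonempty q hq cl d hd π hπ)
  rintro v ⟨y, ρ, hfeas, hsum, rfl⟩
  have key : ∀ i ∈ Finset.Icc 1 q, lam * y i - π * μ i ≤ cl i * y i + ρ i := by
    intro i hi
    obtain ⟨hy0, hy1, hρ0, hcon⟩ := hfeas i hi
    obtain ⟨hμ0, hμ1, hlam⟩ := hμ i hi
    nlinarith [mul_nonneg (sub_nonneg.2 hlam) hy0, mul_nonneg hμ0 (sub_nonneg.2 hcon),
      mul_nonneg (sub_nonneg.2 hμ1) hρ0]
  calc lam - π * ∑ i ∈ Finset.Icc 1 q, μ i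
      = ∑ i ∈ Finset.Icc 1 q, (lam * y i - π * μ i) := by
        rw [Finset.sum_sub_distrib, ← Finset.mul_sum, ← Finset.mul_sum, hsum, mul_one]
    _ ≤ ∑ i ∈ Finset.Icc 1 q, (cl i * y i + ρ i) := Finset.sum_le_sum key

lemma fval_convex (q : ℕ) (hq : 1 ≤ q) (cl d : ℕ → ℝ)
    (hcl : ∀ i ∈ Finset.Icc 1 q, 0 ≤ cl i) (hd : ∀ i ∈ Finset.Icc 1 q, 0 < d i) :
    ConvexOn ℝ (Set.Ici 0) (fval q cl d) := by
  refine ⟨convex_Ici 0, fun x hx y hy a b ha hb hab => ?_⟩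
  simp only [smul_eq_mul]
  apply le_of_forall_pos_le_add
  intro ε hε
  obtain ⟨vx, ⟨y1, ρ1, hfeas1, hsum1, hvx⟩, hvxlt⟩ :=
    Real.lt_sInf_add_pos (fval_nonempty q hq cl d hd x hx) hε
  obtain ⟨vy, ⟨y2, ρ2, hfeas2, hsum2, hvy⟩, hvylt⟩ :=
    Real.lt_sInf_add_pos (fval_nonempty q hq cl d hd y hy) hε
  have hle : fval q cl d (a * x + b * y) ≤ a * vx + b * vy := by
    have := fval_le q cl d hcl (a * x + b * y)
      (fun i => a * y1 i + b * y2 i) (fun i => a * ρ1 i + b * ρ2 i) ?_ ?_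
    · refine this.trans (le_of_eq ?_)
      subst hvx hvy
      rw [Finset.mul_sum, Finset.mul_sum, ← Finset.sum_add_distrib]
      exact Finset.sum_congr rfl fun i _ => by ring
    · intro i hi
      obtain ⟨h10, h11, h1ρ, h1c⟩ := hfeas1 i hi
      obtain ⟨h20, h21, h2ρ, h2c⟩ := hfeas2 i hi
      refine ⟨by positivity, ?_, by positivity, ?_⟩
      · nlinarith
      · nlinarith [mul_le_mul_of_nonneg_left h1c ha, mul_le_mul_of_nonneg_left h2c hb]
    · rw [Finset.sum_add_distrib, ← Finset.mul_sum, ← Finset.mul_sum, hsum1, hsum2]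
      simpa using hab
  have : a * vx + b * vy ≤ a * fval q cl d x + b * fval q cl d y + ε := by
    have h1 : a * vx ≤ a * (fval q cl d x + ε) :=
      mul_le_mul_of_nonneg_left hvxlt.le ha
    have h2 : b * vy ≤ b * (fval q cl d y + ε) :=
      mul_le_mul_of_nonneg_left hvylt.le hb
    nlinarith
  linarith

lemma fval_piece (q : ℕ) (hq : 1 ≤ q) (cl d : ℕ → ℝ)
    (hcl : ∀ i ∈ Finset.Icc 1 q, 0 ≤ cl i) (hd : ∀ i ∈ Finset.Icc 1 q, 0 < d i)
    (l : ℕ) (hl1 : 1 ≤ l) (hlq : l ≤ q) (π : ℝ) (hπ : 0 ≤ π)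
    (Λ A B : ℝ)
    (hA : A = ∑ i ∈ Finset.Icc 1 l, cl i / d i)
    (hB : B = ∑ i ∈ Finset.Icc 1 l, (d i)⁻¹)
    (hΛlb : ∀ i ∈ Finset.Icc 1 l, cl i ≤ Λ)
    (hΛub : ∀ i ∈ Finset.Icc 1 q, Λ ≤ cl i + d i)
    (hΛgt : ∀ i ∈ Finset.Icc 1 q, l < i → Λ ≤ cl i)
    (hπB : π * B ≤ 1)
    (j : ℕ) (hj : j ∈ Finset.Icc 1 q) (e : ℝ) (he : 0 ≤ e)
    (hje : cl j * (1 - π * B) + e = Λ * (1 - π * B))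
    (hcon : d j * ((if j ≤ l then π / d j else 0) + (1 - π * B)) ≤ π + e)
    (hyj1 : (if j ≤ l then π / d j else 0) + (1 - π * B) ≤ 1) :
    fval q cl d π = π * A + Λ * (1 - π * B) := by
  have hsub : Finset.Icc 1 l ⊆ Finset.Icc 1 q := Finset.Icc_subset_Icc_right hlq
  have hdl : ∀ i ∈ Finset.Icc 1 l, 0 < d i := fun i hi => hd i (hsub hi)
  -- each π/d_i ≤ 1 for i ≤ l
  have hsingle : ∀ i ∈ Finset.Icc 1 l, (d i)⁻¹ ≤ B := by
    intro i hi
    rw [hB]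
    exact Finset.single_le_sum (fun k hk => (inv_nonneg.2 (hdl k hk).le)) hi
  have hπd : ∀ i ∈ Finset.Icc 1 l, π / d i ≤ 1 := by
    intro i hi
    rw [div_eq_mul_inv]
    calc π * (d i)⁻¹ ≤ π * B := mul_le_mul_of_nonneg_left (hsingle i hi) hπ
      _ ≤ 1 := hπB
  set t := 1 - π * B with ht
  have ht0 : 0 ≤ t := by simp [ht]; linarith
  have hbase0 : ∀ i ∈ Finset.Icc 1 l, 0 ≤ π / d i :=
    fun i hi => div_nonneg hπ (hdl i hi).le
  -- upper bound
  have hub : fval q cl d π ≤ π * A + Λ * t := by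
    have := fval_le q cl d hcl π
      (fun i => (if 1 ≤ i ∧ i ≤ l then π / d i else 0) + (if i = j then t else 0))
      (fun i => if i = j then e else 0) ?_ ?_
    · refine this.trans (le_of_eq ?_)
      have hsplit : ∀ i ∈ Finset.Icc 1 q,
          cl i * ((if 1 ≤ i ∧ i ≤ l then π / d i else 0) + (if i = j then t else 0))
            + (if i = j then e else 0)
          = (if 1 ≤ i ∧ i ≤ l then cl i * (π / d i) else 0)
            + ((if i = j then cl j * t else 0) + (if i = j then e else 0)) := by
        intro i hi
        by_cases h2 : i = j
        · subst h2
          by_cases h1 : 1 ≤ i ∧ i ≤ l <;> simp [h1] <;> ring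
        · by_cases h1 : 1 ≤ i ∧ i ≤ l <;> simp [h1, h2]
      rw [Finset.sum_congr rfl hsplit, Finset.sum_add_distrib, Finset.sum_add_distrib,
        Finset.sum_ite_eq' (Finset.Icc 1 q) j (fun _ => cl j * t),
        Finset.sum_ite_eq' (Finset.Icc 1 q) j (fun _ => e), if_pos hj, if_pos hj]
      have h1 : ∑ i ∈ Finset.Icc 1 q, (if 1 ≤ i ∧ i ≤ l then cl i * (π / d i) else 0)
          = π * A := by
        rw [← Finset.sum_subset hsub (fun x hx hx' => by
          rw [if_neg]; intro hc; exact hx' (Finset.mem_Icc.2 hc))]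
        rw [hA, Finset.mul_sum]
        refine Finset.sum_congr rfl fun i hi => ?_
        rw [if_pos (Finset.mem_Icc.1 hi)]; ring
      rw [h1, ← hje]
    · -- feasibility
      intro i hi
      have hd' := hd i hi
      by_cases h2 : i = j
      · subst h2
        have hbeq : (if 1 ≤ i ∧ i ≤ l then π / d i else 0) = (if i ≤ l then π / d i else 0) := by
          have : 1 ≤ i := (Finset.mem_Icc.1 hi).1
          by_cases h : i ≤ l <;> simp [h, this]
        refine ⟨?_, ?_, ?_, ?_⟩
        · apply add_nonneg
          · by_cases h : 1 ≤ i ∧ i ≤ l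
            · rw [if_pos h]; exact hbase0 i (Finset.mem_Icc.2 h)
            · rw [if_neg h]
          · rw [if_pos rfl]; exact ht0
        · rw [if_pos rfl]; rw [hbeq]; exact hyj1
        · rw [if_pos rfl]; exact he
        · rw [if_pos rfl, if_pos rfl, hbeq]; exact hcon
      · refine ⟨?_, ?_, ?_, ?_⟩
        · rw [if_neg h2, add_zero]
          by_cases h : 1 ≤ i ∧ i ≤ l
          · rw [if_pos h]; exact hbase0 i (Finset.mem_Icc.2 h)
          · rw [if_neg h]
        · rw [if_neg h2, add_zero]
          by_cases h : 1 ≤ i ∧ i ≤ l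
          · rw [if_pos h]; exact hπd i (Finset.mem_Icc.2 h)
          · rw [if_neg h]; exact zero_le_one
        · rw [if_neg h2]
        · rw [if_neg h2, if_neg h2, add_zero, add_zero]
          by_cases h : 1 ≤ i ∧ i ≤ l
          · rw [if_pos h, mul_div_cancel₀ _ (ne_of_gt hd')]
          · rw [if_neg h, mul_zero]; linarith
    · -- sum = 1
      rw [Finset.sum_add_distrib, Finset.sum_ite_eq' (Finset.Icc 1 q) j (fun _ => t),
        if_pos hj]
      have h1 : ∑ i ∈ Finset.Icc 1 q, (if 1 ≤ i ∧ i ≤ l then π / d i else 0) = π * B := by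
        rw [← Finset.sum_subset hsub (fun x hx hx' => by
          rw [if_neg]; intro hc; exact hx' (Finset.mem_Icc.2 hc))]
        rw [hB, Finset.mul_sum]
        refine Finset.sum_congr rfl fun i hi => ?_
        rw [if_pos (Finset.mem_Icc.1 hi)]
        rw [div_eq_mul_inv]
      rw [h1]; simp [ht]
  -- lower bound
  have hlb : π * A + Λ * t ≤ fval q cl d π := by
    have := le_fval q hq cl d hd π hπ Λ
      (fun i => if 1 ≤ i ∧ i ≤ l then (Λ - cl i) / d i else 0) ?_
    · refine le_trans (le_of_eq ?_) this
      have h1 : ∑ i ∈ Finset.Icc 1 q, (if 1 ≤ i ∧ i ≤ l then (Λ - cl i) / d i else 0)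
          = Λ * B - A := by
        rw [← Finset.sum_subset hsub (fun x hx hx' => by
          rw [if_neg]; intro hc; exact hx' (Finset.mem_Icc.2 hc))]
        rw [hA, hB, Finset.mul_sum, ← Finset.sum_sub_distrib]
        refine Finset.sum_congr rfl fun i hi => ?_
        rw [if_pos (Finset.mem_Icc.1 hi), sub_div, div_eq_mul_inv]
      rw [h1, ht]; ring
    · intro i hi
      by_cases h : 1 ≤ i ∧ i ≤ l
      · have hil : i ∈ Finset.Icc 1 l := Finset.mem_Icc.2 h
        have hdi := hdl i hil
        rw [if_pos h]
        refine ⟨div_nonneg (by linarith [hΛlb i hil]) hdi.le, ?_, ?_⟩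
        · rw [div_le_one hdi]
          linarith [hΛub i hi]
        · rw [div_mul_cancel₀ _ (ne_of_gt hdi)]
          linarith
      · rw [if_neg h]
        have : l < i := by
          rcases not_and_or.1 h with h' | h'
          · exact absurd (Finset.mem_Icc.1 hi).1 h'
          · omega
        exact ⟨le_refl 0, zero_le_one, by simpa using hΛgt i hi this⟩
  linarith

set_option maxHeartbeats 2000000 in
/-- Structure of the function `f`: it is continuous and convex on `[0, ∞)`, constantly `c̲_1`
for `π ≥ b_1`, affine on each interval `[b_{l+1}, b_l]` for `l ∈ [r]`, with
`f(b_l) = b_l ∑_{l'=1}^l c̲_{l'}/d_{l'}` and `f(0) = c̄_s`. -/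
theorem stmt5 (q : ℕ) (hq : 1 ≤ q) (cl d : ℕ → ℝ)
    (hcl : ∀ i ∈ Finset.Icc 1 q, 0 ≤ cl i) (hd : ∀ i ∈ Finset.Icc 1 q, 0 < d i)
    (hsort : ∀ i j : ℕ, i ∈ Finset.Icc 1 q → j ∈ Finset.Icc 1 q → i ≤ j → cl i ≤ cl j)
    (s r : ℕ) (hs : s ∈ Finset.Icc 1 q) (hr : r ∈ Finset.Icc 1 q) (hsr : s ≤ r)
    (hmins : ∀ i ∈ Finset.Icc 1 q, cl s + d s ≤ cl i + d i)
    (hrs : cl r ≤ cl s + d s)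
    (hrs' : r < q → cl s + d s ≤ cl (r + 1))
    (b : ℕ → ℝ)
    (hb : ∀ l ∈ Finset.Icc 1 r, b l = (∑ l' ∈ Finset.Icc 1 l, (d l')⁻¹)⁻¹)
    (hbr : b (r + 1) = 0) :
    ContinuousOn (fval q cl d) (Set.Ici 0) ∧
    ConvexOn ℝ (Set.Ici 0) (fval q cl d) ∧
    (∀ π : ℝ, b 1 ≤ π → fval q cl d π = cl 1) ∧
    (∀ l ∈ Finset.Icc 1 r, ∃ α β : ℝ,
      ∀ π ∈ Set.Icc (b (l + 1)) (b l), fval q cl d π = α * π + β) ∧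
    (∀ l ∈ Finset.Icc 1 r,
      fval q cl d (b l) = b l * ∑ l' ∈ Finset.Icc 1 l, cl l' / d l') ∧
    fval q cl d 0 = cl s + d s := by
  obtain ⟨hr1, hrq⟩ := Finset.mem_Icc.1 hr
  obtain ⟨hs1, hsq⟩ := Finset.mem_Icc.1 hs
  have hsub : ∀ l : ℕ, l ≤ q → ∀ i ∈ Finset.Icc 1 l, i ∈ Finset.Icc 1 q :=
    fun l hl i hi => Finset.Icc_subset_Icc_right hl hi
  have hBpos : ∀ l : ℕ, 1 ≤ l → l ≤ q → 0 < ∑ i ∈ Finset.Icc 1 l, (d i)⁻¹ := by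
    intro l h1 h2
    apply Finset.sum_pos (fun i hi => inv_pos.2 (hd i (hsub l h2 i hi)))
    exact ⟨1, Finset.mem_Icc.2 ⟨le_refl 1, h1⟩⟩
  have hbpos : ∀ l ∈ Finset.Icc 1 r, 0 < b l := by
    intro l hl
    obtain ⟨h1, h2⟩ := Finset.mem_Icc.1 hl
    rw [hb l hl]
    exact inv_pos.2 (hBpos l h1 (h2.trans hrq))
  -- the key piece formula
  have key : ∀ l ∈ Finset.Icc 1 r, ∀ π : ℝ, b (l + 1) ≤ π → π ≤ b l →
      fval q cl d π = π * (∑ i ∈ Finset.Icc 1 l, cl i / d i) +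
        (if l < r then cl (l + 1) else cl s + d s) *
          (1 - π * ∑ i ∈ Finset.Icc 1 l, (d i)⁻¹) := by
    intro l hl π hπ1 hπ2
    obtain ⟨hl1, hlr⟩ := Finset.mem_Icc.1 hl
    have hlq : l ≤ q := hlr.trans hrq
    have hBl : 0 < ∑ i ∈ Finset.Icc 1 l, (d i)⁻¹ := hBpos l hl1 hlq
    have h0b : 0 ≤ b (l + 1) := by
      by_cases hc : l < r
      · rw [hb (l + 1) (Finset.mem_Icc.2 ⟨by omega, by omega⟩)]
        exact (inv_pos.2 (hBpos (l + 1) (by omega) (by omega))).le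
      · have : l = r := le_antisymm hlr (not_lt.1 hc)
        rw [this, hbr]
    have h0π : 0 ≤ π := h0b.trans hπ1
    have hπB : π * ∑ i ∈ Finset.Icc 1 l, (d i)⁻¹ ≤ 1 := by
      have h := mul_le_mul_of_nonneg_right hπ2 hBl.le
      rwa [hb l hl, inv_mul_cancel₀ (ne_of_gt hBl)] at h
    -- Λ bounds
    have hΛcs : (if l < r then cl (l + 1) else cl s + d s) ≤ cl s + d s := by
      by_cases hc : l < r
      · rw [if_pos hc]
        exact le_trans (hsort (l + 1) r (Finset.mem_Icc.2 ⟨by omega, by omega⟩) hr hc) hrs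
      · rw [if_neg hc]
    have hΛlb : ∀ i ∈ Finset.Icc 1 l, cl i ≤ (if l < r then cl (l + 1) else cl s + d s) := by
      intro i hi
      obtain ⟨hi1, hil⟩ := Finset.mem_Icc.1 hi
      have hiq : i ∈ Finset.Icc 1 q := hsub l hlq i hi
      by_cases hc : l < r
      · rw [if_pos hc]
        exact hsort i (l + 1) hiq (Finset.mem_Icc.2 ⟨by omega, by omega⟩) (by omega)
      · rw [if_neg hc]
        have hlr' : l = r := le_antisymm hlr (not_lt.1 hc)
        exact le_trans (hsort i r hiq hr (by omega)) hrs
    have hΛub : ∀ i ∈ Finset.Icc 1 q, (if l < r then cl (l + 1) else cl s + d s) ≤ cl i + d i :=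
      fun i hi => hΛcs.trans (hmins i hi)
    have hΛgt : ∀ i ∈ Finset.Icc 1 q, l < i →
        (if l < r then cl (l + 1) else cl s + d s) ≤ cl i := by
      intro i hi hli
      obtain ⟨hi1, hiq⟩ := Finset.mem_Icc.1 hi
      by_cases hc : l < r
      · rw [if_pos hc]
        exact hsort (l + 1) i (Finset.mem_Icc.2 ⟨by omega, by omega⟩) hi (by omega)
      · rw [if_neg hc]
        have hlr' : l = r := le_antisymm hlr (not_lt.1 hc)
        have hrq' : r < q := by omega
        exact le_trans (hrs' hrq') (hsort (r + 1) i (Finset.mem_Icc.2 ⟨by omega, by omega⟩)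
          hi (by omega))
    by_cases hc : l < r
    · -- case l < r : overflow at j = l+1, e = 0
      have hj : l + 1 ∈ Finset.Icc 1 q := Finset.mem_Icc.2 ⟨by omega, by omega⟩
      have hdj : 0 < d (l + 1) := hd (l + 1) hj
      have hBsucc : ∑ i ∈ Finset.Icc 1 (l + 1), (d i)⁻¹
          = (∑ i ∈ Finset.Icc 1 l, (d i)⁻¹) + (d (l + 1))⁻¹ :=
        Finset.sum_Icc_succ_top (by omega) _
      have hBsp : 0 < ∑ i ∈ Finset.Icc 1 (l + 1), (d i)⁻¹ := hBpos (l + 1) (by omega) (by omega)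
      have h1πB : 1 ≤ π * ∑ i ∈ Finset.Icc 1 (l + 1), (d i)⁻¹ := by
        have h := mul_le_mul_of_nonneg_right hπ1 hBsp.le
        rwa [hb (l + 1) (Finset.mem_Icc.2 ⟨by omega, by omega⟩),
          inv_mul_cancel₀ (ne_of_gt hBsp)] at h
      apply fval_piece q hq cl d hcl hd l hl1 hlq π h0π _ _ _ rfl rfl hΛlb hΛub hΛgt hπB
        (l + 1) hj 0 (le_refl 0)
      · rw [add_zero, if_pos hc]
      · rw [if_neg (by omega : ¬ l + 1 ≤ l), zero_add, add_zero]
        have h2 : 1 - π * ∑ i ∈ Finset.Icc 1 l, (d i)⁻¹ ≤ π * (d (l + 1))⁻¹ := by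
          rw [hBsucc] at h1πB; nlinarith
        calc d (l + 1) * (1 - π * ∑ i ∈ Finset.Icc 1 l, (d i)⁻¹)
            ≤ d (l + 1) * (π * (d (l + 1))⁻¹) := mul_le_mul_of_nonneg_left h2 hdj.le
          _ = π := by field_simp
      · rw [if_neg (by omega : ¬ l + 1 ≤ l), zero_add]
        nlinarith
    · -- case l = r : overflow at j = s, e = d s * t
      have hlr' : l = r := le_antisymm hlr (not_lt.1 hc)
      subst hlr'
      have hds : 0 < d s := hd s hs
      have ht0 : 0 ≤ 1 - π * ∑ i ∈ Finset.Icc 1 l, (d i)⁻¹ := by linarith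
      have hsl : s ∈ Finset.Icc 1 l := Finset.mem_Icc.2 ⟨hs1, hsr⟩
      have hsd : (d s)⁻¹ ≤ ∑ i ∈ Finset.Icc 1 l, (d i)⁻¹ :=
        Finset.single_le_sum (fun i hi => (inv_pos.2 (hd i (hsub l hlq i hi))).le) hsl
      apply fval_piece q hq cl d hcl hd l hl1 hlq π h0π _ _ _ rfl rfl hΛlb hΛub hΛgt hπB
        s hs (d s * (1 - π * ∑ i ∈ Finset.Icc 1 l, (d i)⁻¹)) (by positivity)
      · rw [if_neg hc]; ring
      · rw [if_pos hsr, mul_add, mul_div_cancel₀ _ (ne_of_gt hds)]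
      · rw [if_pos hsr, div_eq_mul_inv]
        nlinarith [mul_le_mul_of_nonneg_left hsd h0π]
  -- convexity
  have hconv : ConvexOn ℝ (Set.Ici 0) (fval q cl d) := fval_convex q hq cl d hcl hd
  -- affine formula near zero, for continuity at 0
  have hbrmem : r ∈ Finset.Icc 1 r := Finset.mem_Icc.2 ⟨hr1, le_refl r⟩
  have hbrpos : 0 < b r := hbpos r hbrmem
  have heq0 : ∀ z ∈ Set.Icc (0:ℝ) (b r), fval q cl d z =
      z * (∑ i ∈ Finset.Icc 1 r, cl i / d i) +
        (cl s + d s) * (1 - z * ∑ i ∈ Finset.Icc 1 r, (d i)⁻¹) := by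
    intro z hz
    have := key r hbrmem z (by rw [hbr]; exact hz.1) hz.2
    rwa [if_neg (lt_irrefl r)] at this
  refine ⟨?_, hconv, ?_, ?_, ?_, ?_⟩
  · -- continuity
    have hcont' : ContinuousOn (fval q cl d) (Set.Ioi 0) :=
      (hconv.subset Set.Ioi_subset_Ici_self (convex_Ioi 0)).continuousOn isOpen_Ioi
    intro x hx
    rcases eq_or_lt_of_le (Set.mem_Ici.1 hx) with h0 | h0
    · subst h0
      have hg : ContinuousWithinAt (fun z : ℝ => z * (∑ i ∈ Finset.Icc 1 r, cl i / d i) +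
          (cl s + d s) * (1 - z * ∑ i ∈ Finset.Icc 1 r, (d i)⁻¹)) (Set.Ici 0) 0 :=
        (by fun_prop : Continuous fun z : ℝ => z * (∑ i ∈ Finset.Icc 1 r, cl i / d i) +
          (cl s + d s) * (1 - z * ∑ i ∈ Finset.Icc 1 r, (d i)⁻¹)).continuousWithinAt
      refine hg.congr_of_eventuallyEq ?_ (heq0 0 ⟨le_refl 0, hbrpos.le⟩)
      have hmem : Set.Ico (0:ℝ) (b r) ∈ nhdsWithin 0 (Set.Ici 0) :=
        Ico_mem_nhdsGE_of_mem ⟨le_refl 0, hbrpos⟩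
      filter_upwards [hmem] with z hz using heq0 z ⟨hz.1, hz.2.le⟩
    · exact (hcont'.continuousAt (Ioi_mem_nhds h0)).continuousWithinAt
  · -- constant piece
    intro π hπ
    have hd1 : 0 < d 1 := hd 1 (Finset.mem_Icc.2 ⟨le_refl 1, hq⟩)
    have hb1 : b 1 = d 1 := by
      rw [hb 1 (Finset.mem_Icc.2 ⟨le_refl 1, hr1⟩), Finset.Icc_self,
        Finset.sum_singleton, inv_inv]
    have h1q : (1:ℕ) ∈ Finset.Icc 1 q := Finset.mem_Icc.2 ⟨le_refl 1, hq⟩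
    have hπ0 : 0 ≤ π := by rw [hb1] at hπ; linarith
    apply le_antisymm
    · have := fval_le q cl d hcl π (fun i => if i = 1 then 1 else 0) (fun _ => 0) ?_ ?_
      · refine this.trans (le_of_eq ?_)
        have : ∀ i ∈ Finset.Icc 1 q, cl i * (if i = 1 then 1 else 0) + 0
            = (if i = 1 then cl 1 else 0) := by
          intro i hi
          by_cases h : i = 1 <;> simp [h]
        rw [Finset.sum_congr rfl this, Finset.sum_ite_eq' (Finset.Icc 1 q) 1 (fun _ => cl 1),
          if_pos h1q]
      · intro i hi
        by_cases h : i = 1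
        · subst h
          refine ⟨zero_le_one, le_refl 1, le_refl 0, ?_⟩
          rw [if_pos rfl, mul_one, add_zero, ← hb1]
          exact hπ
        · rw [if_neg h]
          exact ⟨le_refl 0, zero_le_one, le_refl 0, by simpa using hπ0⟩
      · rw [Finset.sum_ite_eq' (Finset.Icc 1 q) 1 (fun _ => (1:ℝ)), if_pos h1q]
    · have := le_fval q hq cl d hd π hπ0 (cl 1) (fun _ => 0) ?_
      · simpa using this
      · intro i hi
        refine ⟨le_refl 0, zero_le_one, ?_⟩
        simpa using hsort 1 i h1q hi (Finset.mem_Icc.1 hi).1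
  · -- affine pieces
    intro l hl
    refine ⟨(∑ i ∈ Finset.Icc 1 l, cl i / d i) -
      (if l < r then cl (l + 1) else cl s + d s) * ∑ i ∈ Finset.Icc 1 l, (d i)⁻¹,
      (if l < r then cl (l + 1) else cl s + d s), ?_⟩
    intro π hπ
    rw [key l hl π hπ.1 hπ.2]; ring
  · -- values at breakpoints
    intro l hl
    obtain ⟨hl1, hlr⟩ := Finset.mem_Icc.1 hl
    have hBl : 0 < ∑ i ∈ Finset.Icc 1 l, (d i)⁻¹ := hBpos l hl1 (hlr.trans hrq)
    have hble : b (l + 1) ≤ b l := by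
      by_cases hc : l < r
      · have hBsucc : ∑ i ∈ Finset.Icc 1 (l + 1), (d i)⁻¹
            = (∑ i ∈ Finset.Icc 1 l, (d i)⁻¹) + (d (l + 1))⁻¹ :=
          Finset.sum_Icc_succ_top (by omega) _
        have hdj : 0 < d (l + 1) := hd (l + 1) (Finset.mem_Icc.2 ⟨by omega, by omega⟩)
        rw [hb l hl, hb (l + 1) (Finset.mem_Icc.2 ⟨by omega, by omega⟩), hBsucc]
        apply inv_anti₀ hBl
        simp [(inv_pos.2 hdj).le]
      · have : l = r := le_antisymm hlr (not_lt.1 hc)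
        rw [this, hbr]
        exact (hbpos r hbrmem).le
    rw [key l hl (b l) hble (le_refl _), hb l hl, inv_mul_cancel₀ (ne_of_gt hBl)]
    simp [hb l hl]
  · -- value at 0
    have := key r hbrmem 0 (by rw [hbr]) hbrpos.le
    rw [if_neg (lt_irrefl r)] at this
    rw [this]; ring
end
end

section
/- Let x ∈ {0,1}^n be such that Σ_{i=1}^m a'_i x_i ≤ 1 and x_i = 0 for all i ∈ {m+1,…,n}. Then π = M is the unique minimizer of h_x over R_{≥0}: h_x(M) < h_x(π) for every π ∈ R_{≥0} with π ≠ M. -/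
open Classical
noncomputable section

/-- A knapsack instance `a, v ∈ ℕ^m`, `b ∈ ℕ` with `1 ≤ a_i ≤ b - 1`, `1 ≤ v_i`,
and `b` dividing `∑ a_i` (items indexed by `1, …, m`). -/
structure KnapInstance where
  m : ℕ
  b : ℕ
  a : ℕ → ℕ
  v : ℕ → ℕ
  hm : 1 ≤ m
  ha : ∀ i ∈ Finset.Icc 1 m, 1 ≤ a i ∧ a i ≤ b - 1
  hv : ∀ i ∈ Finset.Icc 1 m, 1 ≤ v i
  hb : b ∣ ∑ i ∈ Finset.Icc 1 m, a i

namespace KnapInstance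

variable (K : KnapInstance)

/-- `A' = (∑ a_i)/b` (an integer). -/
def A' : ℕ := (∑ i ∈ Finset.Icc 1 K.m, K.a i) / K.b

/-- Number of items of the constructed instance: `n = 2m - A' + 3`. -/
def nn : ℕ := 2 * K.m - K.A' + 3

/-- Number of items to select: `p = 2m - 2A' + 3`. -/
def pp : ℕ := 2 * K.m - 2 * K.A' + 3

/-- Uncertainty budget: `Γ = m - A' + 1`. -/
def Gam : ℝ := (K.m : ℝ) - (K.A' : ℝ) + 1

/-- `V = ∑ v_i`. -/
def V : ℕ := ∑ i ∈ Finset.Icc 1 K.m, K.v i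

/-- The large constant `M = 3mbV`. -/
def M : ℝ := 3 * (K.m : ℝ) * (K.b : ℝ) * (K.V : ℝ)

/-- Scaled sizes `a'_i = a_i / b`. -/
def a' (i : ℕ) : ℝ := (K.a i : ℝ) / (K.b : ℝ)

/-- First-stage costs of the constructed instance. -/
def C (i : ℕ) : ℝ := if i ≤ K.m then K.M * K.a' i else ((K.m : ℝ) + 3) * K.M

/-- Lower second-stage costs `c̲` of the constructed instance. -/
def cl (i : ℕ) : ℝ :=
  if i ≤ K.m then (K.v i : ℝ) / (1 - K.a' i) else if i = K.m + 1 then K.M else 0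

/-- Deviations `d` of the constructed instance. -/
def d (i : ℕ) : ℝ := if i ≤ K.m then K.M / (1 - K.a' i) else K.M

/-- `g(x, π)`: the optimal value of
`min ∑_{i∈R_x} c̲_i y_i + ∑_{i∈R_x} ρ_i` s.t. `∑_{i∈R_x} y_i = p_x`,
`π + ρ_i ≥ d_i y_i` for `i ∈ R_x`, `y ∈ [0,1]^{R_x}`, `ρ ≥ 0`, where
`R_x = {i ∈ [n] : x_i = 0}` and `p_x = p - ∑_i x_i`. -/
def g (x : ℕ → ℝ) (π : ℝ) : ℝ :=
  sInf {val | ∃ y ρ : ℕ → ℝ,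
    (∀ i ∈ Finset.Icc 1 K.nn, x i = 0 →
      (0 ≤ y i ∧ y i ≤ 1 ∧ 0 ≤ ρ i ∧ K.d i * y i ≤ π + ρ i)) ∧
    (∑ i ∈ (Finset.Icc 1 K.nn).filter (fun i => x i = 0), y i
      = (K.pp : ℝ) - ∑ i ∈ Finset.Icc 1 K.nn, x i) ∧
    val = ∑ i ∈ (Finset.Icc 1 K.nn).filter (fun i => x i = 0), (K.cl i * y i + ρ i)}

/-- `h_x(π) = ∑ C_i x_i + Γπ + g(x, π)`. -/
def h (x : ℕ → ℝ) (π : ℝ) : ℝ :=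
  (∑ i ∈ Finset.Icc 1 K.nn, K.C i * x i) + K.Gam * π + K.g x π

end KnapInstance

private lemma item_T {M c a π y ρ : ℝ} (hM : 0 < M) (ha0 : 0 ≤ a) (ha1 : 0 < 1 - a)
    (hc0 : 0 ≤ c) (hcM : c ≤ M) (hπ : 0 ≤ π) (hy1 : y ≤ 1) (hρ : 0 ≤ ρ)
    (hd : M / (1 - a) * y ≤ π + ρ) :
    M * y + (c - M) * min 1 (π * (1 - a) / M) ≤ c * y + ρ := by
  rcases le_or_gt y (min 1 (π * (1 - a) / M)) with h | h
  · have h1 : (c - M) * min 1 (π * (1 - a) / M) ≤ (c - M) * y :=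
      mul_le_mul_of_nonpos_left h (by linarith)
    linarith
  · have hq1 : min 1 (π * (1 - a) / M) = π * (1 - a) / M := by
      rcases le_total (π * (1 - a) / M) 1 with h1 | h1
      · exact min_eq_right h1
      · exfalso; rw [min_eq_left h1] at h; linarith
    rw [hq1] at h ⊢
    have hMy : M * y ≤ (π + ρ) * (1 - a) := by
      rw [div_mul_eq_mul_div, div_le_iff₀ ha1] at hd; exact hd
    have hπa : π * (1 - a) = (π * (1 - a) / M) * M := by field_simp
    have h2 : M * y - M * (π * (1 - a) / M) ≤ ρ := by
      nlinarith [mul_nonneg hρ ha0]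
    have h3 : 0 ≤ c * (y - π * (1 - a) / M) := mul_nonneg hc0 (by linarith)
    nlinarith

private lemma item_dummy {M π y ρ : ℝ} (hM : 0 ≤ M) (hy1 : y ≤ 1) (hρ : 0 ≤ ρ)
    (hd : M * y ≤ π + ρ) : M * y - min π M ≤ ρ := by
  rcases le_total π M with h1 | h1
  · rw [min_eq_left h1]; linarith
  · rw [min_eq_right h1]; nlinarith [mul_le_mul_of_nonneg_left hy1 hM]

/-- auxiliary: the Lagrangian penalty function ψ. -/
private def psi (K : KnapInstance) (π : ℝ) (i : ℕ) : ℝ :=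
  if i ≤ K.m then (K.cl i - K.M) * min 1 (π * (1 - K.a' i) / K.M)
  else if i = K.m + 1 then 0 else -(min π K.M)

/-- auxiliary: the explicit feasible second-stage solution. -/
private def yb (K : KnapInstance) (X : ℝ) (i : ℕ) : ℝ :=
  if i ≤ K.m then 1 - K.a' i else if i = K.m + 1 then 1 - X else 1


set_option maxHeartbeats 2000000 in
/-- If `x` encodes a feasible knapsack solution (`∑ a'_i x_i ≤ 1`, `x_i = 0` for `i > m`), then
`π = M` is the unique minimizer of `h_x` over `[0, ∞)`. -/
theorem stmt9 (K : KnapInstance) (x : ℕ → ℝ)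
    (hbin : ∀ i ∈ Finset.Icc 1 K.nn, x i = 0 ∨ x i = 1)
    (hfeas : ∑ i ∈ Finset.Icc 1 K.m, K.a' i * x i ≤ 1)
    (hzero : ∀ i ∈ Finset.Icc (K.m + 1) K.nn, x i = 0) :
    ∀ π : ℝ, 0 ≤ π → π ≠ K.M → K.h x K.M < K.h x π := by
  -- ℕ facts
  have hm1 := K.hm
  have ha1m : 1 ∈ Finset.Icc 1 K.m := Finset.mem_Icc.mpr ⟨le_refl 1, K.hm⟩
  obtain ⟨ha11, ha12⟩ := K.ha 1 ha1m
  have hb2 : 2 ≤ K.b := by omega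
  have hsa_ge : K.m ≤ ∑ i ∈ Finset.Icc 1 K.m, K.a i := by
    calc K.m = ∑ _i ∈ Finset.Icc 1 K.m, 1 := by simp
    _ ≤ _ := Finset.sum_le_sum (fun i hi => (K.ha i hi).1)
  have hsa_le : ∑ i ∈ Finset.Icc 1 K.m, K.a i ≤ K.m * (K.b - 1) := by
    calc ∑ i ∈ Finset.Icc 1 K.m, K.a i ≤ ∑ _i ∈ Finset.Icc 1 K.m, (K.b - 1) :=
      Finset.sum_le_sum (fun i hi => (K.ha i hi).2)
    _ = K.m * (K.b - 1) := by simp [Nat.card_Icc, mul_comm]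
  have hA'b : K.A' * K.b = ∑ i ∈ Finset.Icc 1 K.m, K.a i := Nat.div_mul_cancel K.hb
  have hA'1 : 1 ≤ K.A' := by
    rcases Nat.eq_zero_or_pos K.A' with h | h
    · rw [h, zero_mul] at hA'b; omega
    · exact h
  have hA'm : K.A' < K.m := by
    have h1 : K.A' * K.b < K.m * K.b := by
      rw [hA'b]
      calc ∑ i ∈ Finset.Icc 1 K.m, K.a i ≤ K.m * (K.b - 1) := hsa_le
      _ < K.m * K.b := by
        apply Nat.mul_lt_mul_of_le_of_lt (le_refl K.m) (by omega) (by omega)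
    exact lt_of_mul_lt_mul_right h1 (Nat.zero_le _)
  have hnn_eq : K.nn = 2 * K.m - K.A' + 3 := rfl
  have hpp_eq : K.pp = 2 * K.m - 2 * K.A' + 3 := rfl
  have hmnn : K.m + 2 ≤ K.nn := by omega
  -- real casts
  have hb0r : (0:ℝ) < K.b := by exact_mod_cast (by omega : 0 < K.b)
  have hbne : (K.b:ℝ) ≠ 0 := ne_of_gt hb0r
  have hm1r : (1:ℝ) ≤ K.m := by exact_mod_cast hm1
  have hVm : K.m ≤ K.V := by
    calc K.m = ∑ _i ∈ Finset.Icc 1 K.m, 1 := by simp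
    _ ≤ _ := Finset.sum_le_sum (fun i hi => K.hv i hi)
  have hV1 : (1:ℝ) ≤ K.V := by exact_mod_cast le_trans hm1 hVm
  have hMdef : K.M = 3 * (K.m:ℝ) * K.b * K.V := rfl
  have hM0 : 0 < K.M := by rw [hMdef]; positivity
  have hMne : K.M ≠ 0 := ne_of_gt hM0
  -- cast sums
  have hsum_a_r : (∑ i ∈ Finset.Icc 1 K.m, (K.a i:ℝ)) = (K.A':ℝ) * K.b := by
    rw [← Nat.cast_sum, ← hA'b]; push_cast; ring
  have hsum_a' : (∑ i ∈ Finset.Icc 1 K.m, K.a' i) = (K.A':ℝ) := by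
    unfold KnapInstance.a'
    rw [← Finset.sum_div, hsum_a_r, mul_div_cancel_right₀ _ hbne]
  have hsum_v_r : (∑ i ∈ Finset.Icc 1 K.m, (K.v i:ℝ)) = (K.V:ℝ) := by
    rw [← Nat.cast_sum]; rfl
  have hppr : (K.pp:ℝ) = 2*(K.m:ℝ) - 2*(K.A':ℝ) + 3 := by
    rw [hpp_eq, Nat.cast_add, Nat.cast_sub (by omega : 2*K.A' ≤ 2*K.m)]
    push_cast; ring
  -- per-index facts
  have hax : ∀ i ∈ Finset.Icc 1 K.m, 0 < K.a' i ∧ 1/(K.b:ℝ) ≤ 1 - K.a' i := by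
    intro i hi
    obtain ⟨h1, h2⟩ := K.ha i hi
    constructor
    · exact div_pos (by exact_mod_cast h1) hb0r
    · have h3 : (K.a i:ℝ) + 1 ≤ K.b := by exact_mod_cast (by omega : K.a i + 1 ≤ K.b)
      have h4 : K.a' i + 1/(K.b:ℝ) ≤ 1 := by
        unfold KnapInstance.a'
        rw [← add_div, div_le_one hb0r]; exact h3
      linarith
  have h1a : ∀ i ∈ Finset.Icc 1 K.m, 0 < 1 - K.a' i := by
    intro i hi
    have := (hax i hi).2
    have h0 : (0:ℝ) < 1/(K.b:ℝ) := by positivity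
    linarith
  have hclv : ∀ i ∈ Finset.Icc 1 K.m, K.cl i * (1 - K.a' i) = K.v i := by
    intro i hi
    have him : i ≤ K.m := (Finset.mem_Icc.mp hi).2
    simp only [KnapInstance.cl, if_pos him]
    exact div_mul_cancel₀ _ (ne_of_gt (h1a i hi))
  have hcl0 : ∀ i ∈ Finset.Icc 1 K.m, 0 ≤ K.cl i := by
    intro i hi
    have him : i ≤ K.m := (Finset.mem_Icc.mp hi).2
    simp only [KnapInstance.cl, if_pos him]
    exact div_nonneg (Nat.cast_nonneg _) (le_of_lt (h1a i hi))
  have hvV : ∀ i ∈ Finset.Icc 1 K.m, (K.v i:ℝ) ≤ K.V := by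
    intro i hi
    rw [← hsum_v_r]
    exact Finset.single_le_sum (f := fun j => (K.v j : ℝ)) (fun j _ => Nat.cast_nonneg _) hi
  have hclM : ∀ i ∈ Finset.Icc 1 K.m, K.cl i ≤ K.M := by
    intro i hi
    have him : i ≤ K.m := (Finset.mem_Icc.mp hi).2
    simp only [KnapInstance.cl, if_pos him]
    rw [div_le_iff₀ (h1a i hi)]
    have h2 := (hax i hi).2
    have h3 : K.M * (1/(K.b:ℝ)) ≤ K.M * (1 - K.a' i) :=
      mul_le_mul_of_nonneg_left h2 (le_of_lt hM0)
    have h4 : K.M * (1/(K.b:ℝ)) = 3*(K.m:ℝ)*K.V := by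
      rw [hMdef]; field_simp
    have h5 : (K.v i:ℝ) ≤ K.V := hvV i hi
    nlinarith [mul_nonneg (by linarith : (0:ℝ) ≤ 3*(K.m:ℝ) - 1) (by linarith : (0:ℝ) ≤ (K.V:ℝ))]
  have hd_eq : ∀ i ∈ Finset.Icc 1 K.m, K.d i = K.M/(1 - K.a' i) := by
    intro i hi
    simp only [KnapInstance.d, if_pos (Finset.mem_Icc.mp hi).2]
  have hd0 : ∀ i ∈ Finset.Icc 1 K.nn, 0 ≤ K.d i := by
    intro i hi
    have hi1 : 1 ≤ i := (Finset.mem_Icc.mp hi).1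
    by_cases him : i ≤ K.m
    · rw [hd_eq i (Finset.mem_Icc.mpr ⟨hi1, him⟩)]
      exact div_nonneg (le_of_lt hM0) (le_of_lt (h1a i (Finset.mem_Icc.mpr ⟨hi1, him⟩)))
    · simp only [KnapInstance.d, if_neg him]; exact le_of_lt hM0
  -- binary facts
  have hb01 : ∀ i ∈ Finset.Icc 1 K.m, x i = 0 ∨ x i = 1 := by
    intro i hi
    obtain ⟨h1, h2⟩ := Finset.mem_Icc.mp hi
    exact hbin i (Finset.mem_Icc.mpr ⟨h1, by omega⟩)
  have hx01 : ∀ i ∈ Finset.Icc 1 K.m, 0 ≤ x i ∧ x i ≤ 1 := by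
    intro i hi
    rcases hb01 i hi with h | h <;> rw [h] <;> norm_num
  have ha'le1 : ∀ i ∈ Finset.Icc 1 K.m, K.a' i ≤ 1 := by
    intro i hi
    have h2 := (hax i hi).2
    have h0 : (0:ℝ) < 1/(K.b:ℝ) := by positivity
    linarith
  -- main quantities
  set X := ∑ i ∈ Finset.Icc 1 K.m, K.a' i * x i with hXdef
  set s := ∑ i ∈ Finset.Icc 1 K.m, x i with hsdef
  set T := (Finset.Icc 1 K.m).filter (fun i => x i = 0) with hTdef
  set W := ∑ i ∈ T, (K.v i : ℝ) with hWdef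
  set E := ∑ i ∈ T, (1 - K.a' i) with hEdef
  have hX0 : 0 ≤ X := Finset.sum_nonneg fun i hi =>
    mul_nonneg (le_of_lt (hax i hi).1) (hx01 i hi).1
  have hX1 : X ≤ 1 := hfeas
  have hXs : X ≤ s := Finset.sum_le_sum fun i hi => by
    have h1 := (hx01 i hi).1
    have h2 := ha'le1 i hi
    nlinarith
  have hsum1a : ∑ i ∈ Finset.Icc 1 K.m, (1 - K.a' i) = (K.m:ℝ) - (K.A':ℝ) := by
    rw [Finset.sum_sub_distrib, hsum_a', Finset.sum_const, Nat.card_Icc]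
    simp
  have hsX : s - X ≤ (K.m:ℝ) - (K.A':ℝ) := by
    have h1 : ∀ i ∈ Finset.Icc 1 K.m, x i - K.a' i * x i ≤ 1 - K.a' i := by
      intro i hi
      rcases hb01 i hi with h | h
      · rw [h]; have := ha'le1 i hi; simp; linarith [(hax i hi).1]
      · rw [h]; simp
    have h2 := Finset.sum_le_sum h1
    rw [Finset.sum_sub_distrib, hsum1a] at h2
    exact h2
  -- sum splitting
  have hun : Finset.Icc 1 K.nn = Finset.Icc 1 K.m ∪ Finset.Icc (K.m+1) K.nn := by
    ext j; simp only [Finset.mem_Icc, Finset.mem_union]; omega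
  have hdisj : Disjoint (Finset.Icc 1 K.m) (Finset.Icc (K.m+1) K.nn) := by
    rw [Finset.disjoint_left]
    intro j hj1 hj2
    simp only [Finset.mem_Icc] at hj1 hj2
    omega
  have hins : Finset.Icc (K.m+1) K.nn = insert (K.m+1) (Finset.Icc (K.m+2) K.nn) := by
    ext j; simp only [Finset.mem_Icc, Finset.mem_insert]; omega
  have hsplitR : ∀ f : ℕ → ℝ, ∑ i ∈ (Finset.Icc 1 K.nn).filter (fun i => x i = 0), f i
      = (∑ i ∈ T, f i) + f (K.m+1) + ∑ i ∈ Finset.Icc (K.m+2) K.nn, f i := by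
    intro f
    rw [hun, Finset.filter_union, Finset.sum_union (Finset.disjoint_filter_filter hdisj)]
    have h3 : (Finset.Icc (K.m+1) K.nn).filter (fun i => x i = 0) = Finset.Icc (K.m+1) K.nn :=
      Finset.filter_true_of_mem (fun i hi => hzero i hi)
    rw [h3, hins, Finset.sum_insert (by simp only [Finset.mem_Icc]; omega), hTdef]
    ring
  have hcard : ((Finset.Icc (K.m+2) K.nn).card : ℝ) = (K.m:ℝ) - (K.A':ℝ) + 2 := by
    rw [Nat.card_Icc]
    have h1 : K.nn + 1 - (K.m+2) = K.m - K.A' + 2 := by omega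
    rw [h1, Nat.cast_add, Nat.cast_sub (le_of_lt hA'm)]
    norm_num
  have hTsum : ∀ f : ℕ → ℝ, ∑ i ∈ T, f i = ∑ i ∈ Finset.Icc 1 K.m, f i * (1 - x i) := by
    intro f
    rw [hTdef, Finset.sum_filter]
    apply Finset.sum_congr rfl
    intro i hi
    rcases hb01 i hi with h | h <;> simp [h]
  have hE_eq : E = (K.m:ℝ) - (K.A':ℝ) - s + X := by
    rw [hEdef, hTsum]
    have h1 : ∀ i ∈ Finset.Icc 1 K.m,
        (1 - K.a' i) * (1 - x i) = (1 - K.a' i) - (x i - K.a' i * x i) := by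
      intro i _; ring
    rw [Finset.sum_congr rfl h1, Finset.sum_sub_distrib, hsum1a, Finset.sum_sub_distrib]
    rw [hsdef, hXdef]
    ring
  have hE0 : 0 ≤ E := Finset.sum_nonneg fun i hi => by
    have := h1a i (Finset.mem_of_mem_filter i hi)
    linarith
  have hW0 : 0 ≤ W := Finset.sum_nonneg fun i _ => Nat.cast_nonneg _
  have hWV : W ≤ (K.V:ℝ) := by
    rw [← hsum_v_r]
    exact Finset.sum_le_sum_of_subset_of_nonneg (Finset.filter_subset _ _)
      (fun i _ _ => Nat.cast_nonneg _)
  have hW3 : 3 * W ≤ K.M := by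
    rw [hMdef]
    have hb2r : (2:ℝ) ≤ K.b := by exact_mod_cast hb2
    have hmb : (1:ℝ) ≤ (K.m:ℝ) * K.b := by
      have h1 : (1:ℝ)*2 ≤ (K.m:ℝ)*K.b := mul_le_mul hm1r hb2r (by norm_num) (by linarith)
      linarith
    have h2 : (K.V:ℝ) ≤ (K.m:ℝ)*K.b*(K.V:ℝ) :=
      le_mul_of_one_le_left (by linarith) hmb
    linarith
  have hsx : ∑ i ∈ Finset.Icc 1 K.nn, x i = s := by
    rw [hun, Finset.sum_union hdisj, hsdef]
    have hz : ∑ i ∈ Finset.Icc (K.m+1) K.nn, x i = 0 :=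
      Finset.sum_eq_zero (fun i hi => hzero i hi)
    rw [hz, add_zero]
  have hCx : ∑ i ∈ Finset.Icc 1 K.nn, K.C i * x i = K.M * X := by
    rw [hun, Finset.sum_union hdisj]
    have hz : ∑ i ∈ Finset.Icc (K.m+1) K.nn, K.C i * x i = 0 :=
      Finset.sum_eq_zero (fun i hi => by rw [hzero i hi, mul_zero])
    rw [hz, add_zero, hXdef, Finset.mul_sum]
    apply Finset.sum_congr rfl
    intro i hi
    have him : i ≤ K.m := (Finset.mem_Icc.mp hi).2
    simp only [KnapInstance.C, if_pos him]
    ring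
  -- key per-element lower bound (Lagrangian with multiplier M)
  have hkey : ∀ π : ℝ, 0 ≤ π → ∀ y ρ : ℕ → ℝ,
      (∀ i ∈ Finset.Icc 1 K.nn, x i = 0 →
        (0 ≤ y i ∧ y i ≤ 1 ∧ 0 ≤ ρ i ∧ K.d i * y i ≤ π + ρ i)) →
      (∑ i ∈ (Finset.Icc 1 K.nn).filter (fun i => x i = 0), y i
        = (K.pp : ℝ) - ∑ i ∈ Finset.Icc 1 K.nn, x i) →
      K.M * ((K.pp:ℝ) - s) - ((K.m:ℝ) - (K.A':ℝ) + 2) * min π K.M + π * (W/K.M - E)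
        ≤ ∑ i ∈ (Finset.Icc 1 K.nn).filter (fun i => x i = 0), (K.cl i * y i + ρ i) := by
    intro π hπ y ρ hcond hsum
    have hstep1 : ∀ i ∈ (Finset.Icc 1 K.nn).filter (fun i => x i = 0),
        K.M * y i + psi K π i ≤ K.cl i * y i + ρ i := by
      intro i hiR
      obtain ⟨hiF, hix⟩ := Finset.mem_filter.mp hiR
      obtain ⟨hy0, hy1, hρ0, hdy⟩ := hcond i hiF hix
      by_cases him : i ≤ K.m
      · have hi1 : 1 ≤ i := (Finset.mem_Icc.mp hiF).1
        have hiIm : i ∈ Finset.Icc 1 K.m := Finset.mem_Icc.mpr ⟨hi1, him⟩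
        have hd' : K.M / (1 - K.a' i) * y i ≤ π + ρ i := by
          rw [← hd_eq i hiIm]; exact hdy
        have := item_T hM0 (le_of_lt (hax i hiIm).1) (h1a i hiIm) (hcl0 i hiIm)
          (hclM i hiIm) hπ hy1 hρ0 hd'
        simpa only [psi, if_pos him] using this
      · by_cases him1 : i = K.m + 1
        · have hcli : K.cl i = K.M := by simp only [KnapInstance.cl, if_neg him, if_pos him1]
          simp only [psi, if_neg him, if_pos him1, hcli, add_zero]
          linarith
        · have hcli : K.cl i = 0 := by simp only [KnapInstance.cl, if_neg him, if_neg him1]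
          have hdi : K.d i = K.M := by simp only [KnapInstance.d, if_neg him]
          have hdy' : K.M * y i ≤ π + ρ i := by rw [← hdi]; exact hdy
          have := item_dummy (le_of_lt hM0) hy1 hρ0 hdy'
          simp only [psi, if_neg him, if_neg him1, hcli]
          linarith
    have hsum1 := Finset.sum_le_sum hstep1
    rw [Finset.sum_add_distrib, ← Finset.mul_sum, hsum, hsx] at hsum1
    -- compute the psi sum
    have hψ : ∑ i ∈ (Finset.Icc 1 K.nn).filter (fun i => x i = 0), psi K π i
        = (∑ i ∈ T, (K.cl i - K.M) * min 1 (π * (1 - K.a' i) / K.M))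
          + ((Finset.Icc (K.m+2) K.nn).card : ℝ) * (-(min π K.M)) := by
      rw [hsplitR]
      have h1 : ∑ i ∈ T, psi K π i
          = ∑ i ∈ T, (K.cl i - K.M) * min 1 (π * (1 - K.a' i) / K.M) := by
        apply Finset.sum_congr rfl
        intro i hi
        have him : i ≤ K.m := (Finset.mem_Icc.mp (Finset.mem_of_mem_filter i hi)).2
        simp only [psi, if_pos him]
      have h2 : psi K π (K.m+1) = 0 := by
        simp [psi, show ¬ K.m + 1 ≤ K.m by omega]
      have h3 : ∑ i ∈ Finset.Icc (K.m+2) K.nn, psi K π i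
          = ((Finset.Icc (K.m+2) K.nn).card : ℝ) * (-(min π K.M)) := by
        rw [Finset.sum_congr rfl (fun i hi => ?_), Finset.sum_const, nsmul_eq_mul]
        have hmem := Finset.mem_Icc.mp hi
        simp only [psi, if_neg (by omega : ¬ i ≤ K.m), if_neg (by omega : ¬ i = K.m + 1)]
      rw [h1, h2, h3]
      ring
    -- lower bound for the T part
    have hT : π * (W/K.M - E) ≤ ∑ i ∈ T, (K.cl i - K.M) * min 1 (π * (1 - K.a' i) / K.M) := by
      have hterm : ∀ i ∈ T, (π/K.M) * ((K.v i:ℝ) - K.M*(1 - K.a' i))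
          ≤ (K.cl i - K.M) * min 1 (π * (1 - K.a' i) / K.M) := by
        intro i hiT
        have hiIm : i ∈ Finset.Icc 1 K.m := Finset.mem_of_mem_filter i hiT
        have h1 : (K.cl i - K.M) * (π * (1 - K.a' i) / K.M)
            ≤ (K.cl i - K.M) * min 1 (π * (1 - K.a' i) / K.M) :=
          mul_le_mul_of_nonpos_left (min_le_right _ _) (by linarith [hclM i hiIm])
        have h2 : (K.cl i - K.M) * (π * (1 - K.a' i) / K.M)
            = (π/K.M) * ((K.v i:ℝ) - K.M*(1 - K.a' i)) := by
          rw [← hclv i hiIm]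
          field_simp
        linarith
      have hsum2 : ∑ i ∈ T, ((K.v i:ℝ) - K.M*(1 - K.a' i)) = W - K.M*E := by
        rw [Finset.sum_sub_distrib, ← Finset.mul_sum, hWdef, hEdef]
      have hsum3 : ∑ i ∈ T, (π/K.M) * ((K.v i:ℝ) - K.M*(1 - K.a' i)) = (π/K.M) * (W - K.M*E) := by
        rw [← Finset.mul_sum, hsum2]
      have h4 : (π/K.M) * (W - K.M*E) = π * (W/K.M - E) := by
        field_simp
      calc π * (W/K.M - E) = ∑ i ∈ T, (π/K.M) * ((K.v i:ℝ) - K.M*(1 - K.a' i)) := by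
            rw [hsum3, h4]
        _ ≤ _ := Finset.sum_le_sum hterm
    rw [hψ] at hsum1
    rw [hcard] at hsum1
    linarith
  -- explicit feasible point
  have hyb_mem : ∀ i ∈ Finset.Icc 1 K.nn, 0 ≤ yb K X i ∧ yb K X i ≤ 1 ∧
      K.d i * yb K X i ≤ K.M := by
    intro i hi
    have hi1 : 1 ≤ i := (Finset.mem_Icc.mp hi).1
    by_cases him : i ≤ K.m
    · have hiIm : i ∈ Finset.Icc 1 K.m := Finset.mem_Icc.mpr ⟨hi1, him⟩
      have h1 := h1a i hiIm
      have h2 := (hax i hiIm).1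
      refine ⟨?_, ?_, ?_⟩
      · simp only [yb, if_pos him]; linarith
      · simp only [yb, if_pos him]; linarith
      · simp only [yb, if_pos him]
        rw [hd_eq i hiIm, div_mul_cancel₀ _ (ne_of_gt h1)]
    · by_cases him1 : i = K.m + 1
      · refine ⟨?_, ?_, ?_⟩ <;> simp only [yb, if_neg him, if_pos him1, KnapInstance.d]
        · linarith
        · linarith
        · nlinarith
      · refine ⟨?_, ?_, ?_⟩ <;> simp only [yb, if_neg him, if_neg him1, KnapInstance.d]
        · norm_num
        · norm_num
        · simp
  have hyb_sum : ∑ i ∈ (Finset.Icc 1 K.nn).filter (fun i => x i = 0), yb K X i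
      = (K.pp : ℝ) - ∑ i ∈ Finset.Icc 1 K.nn, x i := by
    rw [hsx, hsplitR]
    have h1 : ∑ i ∈ T, yb K X i = E := by
      rw [hEdef]
      apply Finset.sum_congr rfl
      intro i hi
      have him : i ≤ K.m := (Finset.mem_Icc.mp (Finset.mem_of_mem_filter i hi)).2
      simp only [yb, if_pos him]
    have h2 : yb K X (K.m+1) = 1 - X := by
      simp [yb, show ¬ K.m + 1 ≤ K.m by omega]
    have h3 : ∑ i ∈ Finset.Icc (K.m+2) K.nn, yb K X i
        = ((Finset.Icc (K.m+2) K.nn).card : ℝ) := by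
      rw [Finset.sum_congr rfl (fun i hi => ?_), Finset.sum_const, nsmul_eq_mul, mul_one]
      have hmem := Finset.mem_Icc.mp hi
      simp only [yb, if_neg (by omega : ¬ i ≤ K.m), if_neg (by omega : ¬ i = K.m + 1)]
    rw [h1, h2, h3, hcard, hE_eq, hppr]
    ring
  -- lower bound on g
  have hglow : ∀ π : ℝ, 0 ≤ π →
      K.M * ((K.pp:ℝ) - s) - ((K.m:ℝ) - (K.A':ℝ) + 2) * min π K.M + π * (W/K.M - E)
        ≤ K.g x π := by
    intro π hπ
    apply le_csInf
    · refine ⟨_, yb K X, fun i => K.d i * yb K X i, ?_, hyb_sum, rfl⟩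
      intro i hi hxi
      obtain ⟨h1, h2, h3⟩ := hyb_mem i hi
      exact ⟨h1, h2, mul_nonneg (hd0 i hi) h1,
        by show K.d i * yb K X i ≤ π + K.d i * yb K X i; linarith⟩
    · rintro val ⟨y, ρ, hc, hs', rfl⟩
      exact hkey π hπ y ρ hc hs'
  -- upper bound on g at M
  have hup : K.g x K.M ≤ W + K.M * (1 - X) := by
    apply csInf_le
    · refine ⟨K.M * ((K.pp:ℝ) - s) - ((K.m:ℝ) - (K.A':ℝ) + 2) * min K.M K.M
        + K.M * (W/K.M - E), ?_⟩
      rintro val ⟨y, ρ, hc, hs', rfl⟩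
      exact hkey K.M (le_of_lt hM0) y ρ hc hs'
    · refine ⟨yb K X, fun _ => 0, ?_, hyb_sum, ?_⟩
      · intro i hi hxi
        obtain ⟨h1, h2, h3⟩ := hyb_mem i hi
        exact ⟨h1, h2, le_refl 0, by show K.d i * yb K X i ≤ K.M + 0; linarith⟩
      · rw [hsplitR]
        have h1 : ∑ i ∈ T, (K.cl i * yb K X i + 0) = W := by
          rw [hWdef]
          apply Finset.sum_congr rfl
          intro i hi
          have hiIm : i ∈ Finset.Icc 1 K.m := Finset.mem_of_mem_filter i hi
          have him : i ≤ K.m := (Finset.mem_Icc.mp hiIm).2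
          simp only [yb, if_pos him, add_zero]
          exact hclv i hiIm
        have h2 : K.cl (K.m+1) * yb K X (K.m+1) + 0 = K.M * (1 - X) := by
          have hcli : K.cl (K.m+1) = K.M := by
            simp [KnapInstance.cl, show ¬ K.m + 1 ≤ K.m by omega]
          have hybi : yb K X (K.m+1) = 1 - X := by
            simp [yb, show ¬ K.m + 1 ≤ K.m by omega]
          rw [hcli, hybi, add_zero]
        have h3 : ∑ i ∈ Finset.Icc (K.m+2) K.nn, (K.cl i * yb K X i + 0) = 0 := by
          apply Finset.sum_eq_zero
          intro i hi
          have hmem := Finset.mem_Icc.mp hi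
          have hcli : K.cl i = 0 := by
            simp [KnapInstance.cl, show ¬ i ≤ K.m by omega, show ¬ i = K.m + 1 by omega]
          rw [hcli, zero_mul, add_zero]
        rw [h1, h2, h3, add_zero]
  -- final arithmetic
  intro π hπ hπM
  have hhM : K.h x K.M ≤ K.M * X + K.Gam * K.M + (W + K.M * (1 - X)) := by
    simp only [KnapInstance.h]
    rw [hCx]
    linarith
  have hhπ : K.M * X + K.Gam * π +
      (K.M * ((K.pp:ℝ) - s) - ((K.m:ℝ) - (K.A':ℝ) + 2) * min π K.M + π * (W/K.M - E))
      ≤ K.h x π := by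
    simp only [KnapInstance.h]
    rw [hCx]
    linarith [hglow π hπ]
  have hGam_eq : K.Gam = (K.m:ℝ) - (K.A':ℝ) + 1 := rfl
  have hW2' : 0 ≤ W / K.M := div_nonneg hW0 (le_of_lt hM0)
  have hW23 : 3 * (W / K.M) ≤ 1 := by
    rw [show 3 * (W / K.M) = (3*W) / K.M by ring]
    exact (div_le_one hM0).mpr hW3
  have hWW2 : W = (W / K.M) * K.M := by field_simp
  rcases lt_or_gt_of_ne hπM with hlt | hgt
  · -- π < M
    have hmin : min π K.M = π := min_eq_left (le_of_lt hlt)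
    rw [hmin] at hhπ
    have hfac : (0:ℝ) < 1 + ((K.m:ℝ) - (K.A':ℝ) - s + X) - W / K.M := by
      rw [← hE_eq]; linarith
    have hprod := mul_pos (show (0:ℝ) < K.M - π by linarith) hfac
    have hfin : K.M * X + K.Gam * K.M + (W + K.M * (1 - X))
        < K.M * X + K.Gam * π +
          (K.M * ((K.pp:ℝ) - s) - ((K.m:ℝ) - (K.A':ℝ) + 2) * π + π * (W/K.M - E)) := by
      rw [hGam_eq, hppr, hE_eq]
      nlinarith [hprod, hWW2]
    linarith
  · -- π > M
    have hmin : min π K.M = K.M := min_eq_right (le_of_lt hgt)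
    rw [hmin] at hhπ
    have hfac : (0:ℝ) < 1 + s - X + W / K.M := by linarith
    have hprod := mul_pos (show (0:ℝ) < π - K.M by linarith) hfac
    have hfin : K.M * X + K.Gam * K.M + (W + K.M * (1 - X))
        < K.M * X + K.Gam * π +
          (K.M * ((K.pp:ℝ) - s) - ((K.m:ℝ) - (K.A':ℝ) + 2) * K.M + π * (W/K.M - E)) := by
      rw [hGam_eq, hppr, hE_eq]
      nlinarith [hprod, hWW2]
    linarith

end
end
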